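/- arXiv:2408.05385 — 11 statements merged into one kernel-verified Lean document; each statement's English description precedes it below -/
import Mathlib

section
/- Let n and d be positive integers, and let w : Fin n → Fin n → ℕ be a nonnegative-integer matrix (encoding the edge multiplicities of a bipartite multigraph on n + n nodes) such that every row sum equals d and every column sum equals d, i.e., for every a, ∑_b w a b = d, and for every b, ∑_a w a b = d. Then there exists a bijection σ : Fin n ≃ Fin n such that w a (σ a) > 0 for every a (i.e., every d-regular bipartite multigraph, possibly with parallel edges, has a perfect matching). -/
/-- Hall's matching theorem for regular bipartite multigraphs: every `d`-regular
bipartite multigraph on `n + n` nodes, encoded by its multiplicity matrix `w`,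
has a perfect matching. -/
theorem regular_bipartite_multigraph_perfect_matching
    (n d : ℕ) (hn : 0 < n) (hd : 0 < d)
    (w : Fin n → Fin n → ℕ)
    (hrow : ∀ a, ∑ b, w a b = d)
    (hcol : ∀ b, ∑ a, w a b = d) :
    ∃ σ : Fin n ≃ Fin n, ∀ a, 0 < w a (σ a) := by
  classical
  set t : Fin n → Finset (Fin n) := fun a => Finset.univ.filter (fun b => 0 < w a b) with ht
  have hall : ∀ s : Finset (Fin n), s.card ≤ (s.biUnion t).card := by
    intro s
    have key : d * s.card ≤ d * (s.biUnion t).card := by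
      calc d * s.card = ∑ a ∈ s, ∑ b, w a b := by
            simp [hrow, mul_comm]
        _ = ∑ a ∈ s, ∑ b ∈ s.biUnion t, w a b := by
            refine Finset.sum_congr rfl fun a ha => ?_
            refine (Finset.sum_subset (Finset.subset_univ _) ?_).symm
            intro b _ hb
            by_contra h
            exact hb (Finset.mem_biUnion.mpr ⟨a, ha, by simp [ht, Nat.pos_of_ne_zero h]⟩)
        _ = ∑ b ∈ s.biUnion t, ∑ a ∈ s, w a b := Finset.sum_comm
        _ ≤ ∑ b ∈ s.biUnion t, ∑ a, w a b := by
            refine Finset.sum_le_sum fun b _ => ?_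
            exact Finset.sum_le_sum_of_subset (Finset.subset_univ _)
        _ = d * (s.biUnion t).card := by simp [hcol, mul_comm]
    exact Nat.le_of_mul_le_mul_left key hd
  obtain ⟨f, hfinj, hf⟩ := (Finset.all_card_le_biUnion_card_iff_exists_injective t).mp hall
  have hbij := Finite.injective_iff_bijective.mp hfinj
  refine ⟨Equiv.ofBijective f hbij, fun a => ?_⟩
  have := hf a
  simp only [ht, Finset.mem_filter] at this
  exact this.2
end

section
/- Let n and d be positive integers, and let w : Fin n → Fin n → ℕ be a matrix such that for every a, ∑_b w a b = d, and for every b, ∑_a w a b = d. Then w decomposes into d perfect matchings: there exist bijections σ_1, …, σ_d : Fin n ≃ Fin n such that for all a, b, w a b equals the number of indices i ∈ {1, …, d} with σ_i a = b. -/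
open Finset

private lemma aux_decomp (n : ℕ) :
    ∀ d (w : Fin n → Fin n → ℕ),
      (∀ a, ∑ b, w a b = d) → (∀ b, ∑ a, w a b = d) →
      ∃ σ : Fin d → (Fin n ≃ Fin n),
        ∀ a b, w a b = (Finset.univ.filter (fun i : Fin d => σ i a = b)).card := by
  intro d
  induction d with
  | zero =>
    intro w hrow _
    refine ⟨fun i => i.elim0, fun a b => ?_⟩
    have h0 : w a b = 0 := by
      have := hrow a
      have hle : w a b ≤ ∑ b, w a b := Finset.single_le_sum (fun _ _ => Nat.zero_le _) (mem_univ b)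
      omega
    simp [h0]
  | succ d ih =>
    intro w hrow hcol
    -- Hall's condition for the relation `w a b > 0`
    set t : Fin n → Finset (Fin n) := fun a => univ.filter (fun b => 0 < w a b) with ht
    have hall : ∀ s : Finset (Fin n), s.card ≤ (s.biUnion t).card := by
      intro s
      have key : (d + 1) * s.card ≤ (d + 1) * (s.biUnion t).card := by
        calc (d + 1) * s.card = ∑ a ∈ s, ∑ b, w a b := by
              simp [hrow, mul_comm]
          _ = ∑ a ∈ s, ∑ b ∈ s.biUnion t, w a b := by
              refine Finset.sum_congr rfl fun a ha => ?_
              refine (Finset.sum_subset (subset_univ _) ?_).symm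
              intro b _ hb
              by_contra hw
              exact hb (Finset.mem_biUnion.2 ⟨a, ha, by simp [ht, Nat.pos_of_ne_zero hw]⟩)
          _ = ∑ b ∈ s.biUnion t, ∑ a ∈ s, w a b := Finset.sum_comm
          _ ≤ ∑ b ∈ s.biUnion t, ∑ a, w a b := by
              refine Finset.sum_le_sum fun b _ => ?_
              exact Finset.sum_le_sum_of_subset (subset_univ s)
          _ = (d + 1) * (s.biUnion t).card := by simp [hcol, mul_comm]
      exact Nat.le_of_mul_le_mul_left key (Nat.succ_pos d)
    obtain ⟨f, hfinj, hf⟩ := (Finset.all_card_le_biUnion_card_iff_exists_injective t).1 hall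
    have hfpos : ∀ a, 0 < w a (f a) := by
      intro a
      have := hf a
      simpa [ht] using this
    have hfbij : Function.Bijective f := (Finite.injective_iff_bijective).1 hfinj
    let e : Fin n ≃ Fin n := Equiv.ofBijective f hfbij
    set w' : Fin n → Fin n → ℕ := fun a b => w a b - if f a = b then 1 else 0 with hw'
    have hle : ∀ a b, (if f a = b then 1 else 0) ≤ w a b := by
      intro a b
      split
      · next h => exact h ▸ hfpos a
      · exact Nat.zero_le _
    have hrow' : ∀ a, ∑ b, w' a b = d := by
      intro a
      have : ∑ b, w' a b = (∑ b, w a b) - ∑ b, (if f a = b then 1 else 0) := by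
        simp only [hw']
        exact Finset.sum_tsub_distrib Finset.univ (fun b _ => hle a b)
      rw [this, hrow a]
      simp
    have hcol' : ∀ b, ∑ a, w' a b = d := by
      intro b
      have : ∑ a, w' a b = (∑ a, w a b) - ∑ a, (if f a = b then 1 else 0) := by
        simp only [hw']
        exact Finset.sum_tsub_distrib Finset.univ (fun a _ => hle a b)
      rw [this, hcol b]
      obtain ⟨a0, ha0⟩ := hfbij.2 b
      have heq : ∑ a, (if f a = b then 1 else 0) = 1 := by
        have : ∀ a : Fin n, (if f a = b then 1 else 0) = (if a = a0 then 1 else 0) := by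
          intro a
          have : f a = b ↔ a = a0 := by
            constructor
            · intro h; exact hfinj (h.trans ha0.symm)
            · rintro rfl; exact ha0
          simp [this]
        rw [Finset.sum_congr rfl fun a _ => this a]
        simp
      rw [heq]
      omega
    obtain ⟨σ', hσ'⟩ := ih w' hrow' hcol'
    refine ⟨Fin.cons e σ', fun a b => ?_⟩
    have hcount : (univ.filter (fun i : Fin (d+1) => (Fin.cons e σ' : Fin (d+1) → _) i a = b)).card
        = (if e a = b then 1 else 0)
          + (univ.filter (fun i : Fin d => σ' i a = b)).card := by
      rw [Finset.card_filter, Fin.sum_univ_succ, Finset.card_filter]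
      simp
    rw [hcount, ← hσ']
    have heq : e a = f a := rfl
    rw [heq]
    have := hle a b
    simp only [hw']
    omega

/-- Every `d`-regular bipartite multigraph on `n + n` nodes, encoded by its
multiplicity matrix `w`, decomposes into `d` perfect matchings: there are
bijections `σ 1, …, σ d` such that `w a b` counts the indices `i` with
`σ i a = b`. -/
theorem regular_bipartite_multigraph_matching_decomposition
    (n d : ℕ) (hn : 0 < n) (hd : 0 < d)
    (w : Fin n → Fin n → ℕ)
    (hrow : ∀ a, ∑ b, w a b = d)
    (hcol : ∀ b, ∑ a, w a b = d) :
    ∃ σ : Fin d → (Fin n ≃ Fin n),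
      ∀ a b, w a b = (Finset.univ.filter (fun i : Fin d => σ i a = b)).card := by
  exact aux_decomp n d w hrow hcol
end

section
/- (Colored Grid Rearrangement Theorem.) Let m1 ≥ m2 ≥ 1 and let χ : Fin m1 × Fin m2 → Fin m1 be a coloring of the cells of an m1 × m2 table in which every color t ∈ Fin m1 is used exactly m2 times. Then there exist a row shuffle permutation ρ and a column shuffle permutation γ of Fin m1 × Fin m2 such that for every cell p, ((γ ∘ ρ) p).1 = χ p; that is, after first shuffling every row and then shuffling every column (m1 + m2 shuffles in total), the item originally in cell p ends in row χ p, so row i contains exactly the items of color i. -/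
/-- A permutation of the cells of an `m1 × m2` table that permutes items only
within each row (the simultaneous effect of `m1` parallel row shuffles). -/
def IsRowShuffle {m1 m2 : ℕ} (ρ : Equiv.Perm (Fin m1 × Fin m2)) : Prop :=
  ∀ p, (ρ p).1 = p.1

/-- A permutation of the cells of an `m1 × m2` table that permutes items only
within each column (the simultaneous effect of `m2` parallel column shuffles). -/
def IsColShuffle {m1 m2 : ℕ} (γ : Equiv.Perm (Fin m1 × Fin m2)) : Prop :=
  ∀ p, (γ p).2 = p.2

/-!
Read the table as a bipartite multigraph between rows and colors, each cell being an edge from its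
row to its color. Every vertex has degree `m2`, so by Hall's theorem the graph has a perfect
matching, and removing it leaves an `(m2 - 1)`-regular graph: by induction the cells split into
`m2` perfect matchings, numbered by `Fin m2`. The row shuffle moves each cell to the column given
by its matching, where the cells are one per row and one per color; the column shuffle then moves
each of them to the row of its color.
-/

open Finset

section Matchings

variable {X R C : Type*} [DecidableEq R] [DecidableEq C]

theorem card_filter_mem_eq_card_mul {s : Finset X} {f : X → R} {n : ℕ}
    (hf : ∀ b, #{x ∈ s | f x = b} = n) (S : Finset R) :
    #{x ∈ s | f x ∈ S} = #S * n := by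
  rw [card_eq_sum_card_fiberwise (s := {x ∈ s | f x ∈ S}) (f := f) (t := S)
    fun x hx => (mem_filter.1 hx).2]
  calc _ = ∑ b ∈ S, n := sum_congr rfl fun b hb => by
          rw [← hf b]; congr 1; ext x; simp only [mem_filter]; grind
    _ = #S * n := by rw [sum_const, smul_eq_mul]

theorem card_filter_sdiff_of_subset [DecidableEq X] {s M : Finset X} (hM : M ⊆ s)
    (f : X → R) (b : R) :
    #{x ∈ s \ M | f x = b} = #{x ∈ s | f x = b} - #{x ∈ M | f x = b} := by
  rw [← card_sdiff_of_subset (filter_subset_filter _ hM)]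
  congr 1
  ext x
  simp only [mem_filter, mem_sdiff]
  tauto

theorem card_filter_image_eq_one {ι : Type*} [Fintype ι] [DecidableEq X] {a : ι → X}
    {f : X → R} (hf : (f ∘ a).Bijective) (b : R) :
    #{x ∈ univ.image a | f x = b} = 1 := by
  obtain ⟨i, rfl⟩ := hf.2 b
  refine card_eq_one.2 ⟨a i, ?_⟩
  ext x
  simp only [mem_filter, mem_image, mem_univ, true_and, mem_singleton]
  constructor
  · rintro ⟨⟨j, rfl⟩, hj⟩
    rw [hf.1 hj]
  · rintro rfl
    exact ⟨⟨i, rfl⟩, rfl⟩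

theorem injOn_ite_mem_of_card_filter_eq_one [DecidableEq X] {s M : Finset X} {f : X → R}
    {g : X → ℕ} {n : ℕ} (hM : ∀ b, #{x ∈ M | f x = b} = 1) (hg : ∀ x ∈ s \ M, g x < n)
    (hinj : Set.InjOn (fun x => (f x, g x)) ↑(s \ M)) :
    Set.InjOn (fun x => (f x, if x ∈ M then n else g x)) ↑s := by
  intro x hx y hy hxy
  simp only [Prod.mk.injEq] at hxy
  obtain ⟨hf, hxy⟩ := hxy
  have hx' : x ∉ M → x ∈ s \ M := fun h => mem_sdiff.2 ⟨hx, h⟩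
  have hy' : y ∉ M → y ∈ s \ M := fun h => mem_sdiff.2 ⟨hy, h⟩
  by_cases hxM : x ∈ M <;> by_cases hyM : y ∈ M <;> simp only [hxM, hyM, if_true, if_false] at hxy
  · exact card_le_one.1 (hM (f x)).le x (by simp [hxM]) y (by simp [hyM, hf])
  · exact absurd (hg y (hy' hyM)) (by omega)
  · exact absurd (hg x (hx' hxM)) (by omega)
  · exact hinj (hx' hxM) (hy' hyM) (Prod.ext hf hxy)

variable [Fintype R] [Fintype C]

theorem card_eq_card_of_card_fiber_eq {s : Finset X} {r : X → R} {χ : X → C} {n : ℕ}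
    (hn : 0 < n) (hr : ∀ i, #{x ∈ s | r x = i} = n) (hχ : ∀ t, #{x ∈ s | χ x = t} = n) :
    Fintype.card R = Fintype.card C := by
  have hR := card_filter_mem_eq_card_mul hr univ
  have hC := card_filter_mem_eq_card_mul hχ univ
  simp only [mem_univ, filter_true, card_univ] at hR hC
  exact Nat.eq_of_mul_eq_mul_right hn (hR.symm.trans hC)

/-- Hall's condition for rows versus the colors occurring in them holds because the `#S * n` cells
in the rows of `S` all have colors occurring in `S`, and each color has only `n` cells. -/
theorem exists_perfect_matching_of_card_fiber_eq [DecidableEq X] {s : Finset X} {r : X → R}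
    {χ : X → C} {n : ℕ} (hn : 0 < n) (hr : ∀ i, #{x ∈ s | r x = i} = n)
    (hχ : ∀ t, #{x ∈ s | χ x = t} = n) :
    ∃ M ⊆ s, (∀ i, #{x ∈ M | r x = i} = 1) ∧ ∀ t, #{x ∈ M | χ x = t} = 1 := by
  set colors : R → Finset C := fun i => {x ∈ s | r x = i}.image χ
  have hall (S : Finset R) : #S ≤ #(S.biUnion colors) := by
    have hsub : {x ∈ s | r x ∈ S} ⊆ {x ∈ s | χ x ∈ S.biUnion colors} := by
      intro x hx
      simp only [mem_filter, mem_biUnion, mem_image, colors] at hx ⊢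
      exact ⟨hx.1, r x, hx.2, x, ⟨hx.1, rfl⟩, rfl⟩
    have := card_le_card hsub
    rw [card_filter_mem_eq_card_mul hr, card_filter_mem_eq_card_mul hχ] at this
    exact Nat.le_of_mul_le_mul_right this hn
  obtain ⟨f, hf_inj, hf_mem⟩ := (all_card_le_biUnion_card_iff_exists_injective colors).1 hall
  have hf_bij : f.Bijective := (Fintype.bijective_iff_injective_and_card f).2
    ⟨hf_inj, card_eq_card_of_card_fiber_eq hn hr hχ⟩
  choose a ha using fun i => mem_image.1 (hf_mem i)
  simp only [mem_filter] at ha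
  have hra : r ∘ a = id := funext fun i => (ha i).1.2
  have hχa : χ ∘ a = f := funext fun i => (ha i).2
  exact ⟨univ.image a, image_subset_iff.2 fun i _ => (ha i).1.1,
    card_filter_image_eq_one (hra ▸ Function.bijective_id),
    card_filter_image_eq_one (hχa ▸ hf_bij)⟩

/-- König's edge colouring theorem for regular bipartite multigraphs, with rows and colors as the
two sides and the cells of `s` as edges: peel off perfect matchings one at a time. -/
theorem exists_edge_coloring_of_card_fiber_eq [DecidableEq X] (n : ℕ) {s : Finset X}
    {r : X → R} {χ : X → C} (hr : ∀ i, #{x ∈ s | r x = i} = n)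
    (hχ : ∀ t, #{x ∈ s | χ x = t} = n) :
    ∃ g : X → ℕ, (∀ x ∈ s, g x < n) ∧ Set.InjOn (fun x => (r x, g x)) s ∧
      Set.InjOn (fun x => (χ x, g x)) s := by
  induction n generalizing s with
  | zero =>
    have hs : s = ∅ := eq_empty_of_forall_notMem fun x hx =>
      notMem_empty x ((card_eq_zero.1 (hr (r x))).subset (mem_filter.2 ⟨hx, rfl⟩))
    subst hs
    simp
  | succ n ih =>
    obtain ⟨M, hMs, hMr, hMχ⟩ := exists_perfect_matching_of_card_fiber_eq n.succ_pos hr hχ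
    obtain ⟨g, hg, hgr, hgχ⟩ := ih (s := s \ M)
      (fun i => by rw [card_filter_sdiff_of_subset hMs, hr, hMr]; rfl)
      (fun t => by rw [card_filter_sdiff_of_subset hMs, hχ, hMχ]; rfl)
    refine ⟨fun x => if x ∈ M then n else g x, fun x hx => ?_,
      injOn_ite_mem_of_card_filter_eq_one hMr hg hgr,
      injOn_ite_mem_of_card_filter_eq_one hMχ hg hgχ⟩
    dsimp only
    split_ifs with hxM
    · exact n.lt_succ_self
    · exact (hg x (mem_sdiff.2 ⟨hx, hxM⟩)).trans n.lt_succ_self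

end Matchings

/-- `ρ` sends cell `p` to column `g p` of its row; `γ` then sends it to row `χ p` of that column. -/
theorem exists_row_col_shuffle_of_injective {m1 m2 : ℕ} (χ : Fin m1 × Fin m2 → Fin m1)
    (g : Fin m1 × Fin m2 → Fin m2) (hr : (fun p => (p.1, g p)).Injective)
    (hχ : (fun p => (χ p, g p)).Injective) :
    ∃ ρ γ : Equiv.Perm (Fin m1 × Fin m2),
      IsRowShuffle ρ ∧ IsColShuffle γ ∧ ∀ p, (γ (ρ p)).1 = χ p := by
  set ρ := Equiv.ofBijective _ (Finite.injective_iff_bijective.1 hr)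
  set σ := Equiv.ofBijective _ (Finite.injective_iff_bijective.1 hχ)
  exact ⟨ρ, ρ.symm.trans σ, fun p => rfl,
    fun q => show (ρ (ρ.symm q)).2 = q.2 from congrArg Prod.snd (ρ.apply_symm_apply q),
    fun p => congrArg (fun q => (σ q).1) (ρ.symm_apply_apply p)⟩

theorem card_filter_fst_eq (m1 m2 : ℕ) (i : Fin m1) :
    #{p : Fin m1 × Fin m2 | p.1 = i} = m2 := by
  have : ({p : Fin m1 × Fin m2 | p.1 = i} : Finset _) = {i} ×ˢ univ := by
    ext; simp only [mem_filter, mem_univ, true_and, mem_product, mem_singleton, and_true]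
  rw [this, card_product, card_singleton, card_univ, Fintype.card_fin, one_mul]

theorem colored_grid_rearrangement_general
    (m1 m2 : ℕ)
    (χ : Fin m1 × Fin m2 → Fin m1)
    (hχ : ∀ t : Fin m1, (Finset.univ.filter (fun p => χ p = t)).card = m2) :
    ∃ ρ γ : Equiv.Perm (Fin m1 × Fin m2),
      IsRowShuffle ρ ∧ IsColShuffle γ ∧ ∀ p, (γ (ρ p)).1 = χ p := by
  obtain ⟨g, hg_lt, hg_row, hg_color⟩ :=
    exists_edge_coloring_of_card_fiber_eq m2 (card_filter_fst_eq m1 m2) hχ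
  rw [coe_univ, Set.injOn_univ] at hg_row hg_color
  exact exists_row_col_shuffle_of_injective χ (fun p => ⟨g p, hg_lt p (mem_univ p)⟩)
    (fun p q h => hg_row (by simpa [Fin.ext_iff] using h))
    (fun p q h => hg_color (by simpa [Fin.ext_iff] using h))

/-- Colored Grid Rearrangement Theorem: if every color `t : Fin m1` is used
exactly `m2` times, then after one round of row shuffles followed by one round
of column shuffles (`m1 + m2` shuffles), every item lands in the row given by
its color. -/
theorem colored_grid_rearrangement
    (m1 m2 : ℕ) (h21 : m2 ≤ m1) (h2 : 1 ≤ m2)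
    (χ : Fin m1 × Fin m2 → Fin m1)
    (hχ : ∀ t : Fin m1, (Finset.univ.filter (fun p => χ p = t)).card = m2) :
    ∃ ρ γ : Equiv.Perm (Fin m1 × Fin m2),
      IsRowShuffle ρ ∧ IsColShuffle γ ∧ ∀ p, (γ (ρ p)).1 = χ p :=
  colored_grid_rearrangement_general m1 m2 χ hχ
end

section
/- (Labeled Grid Rearrangement Theorem.) Let m1 ≥ m2 ≥ 1. Every permutation σ of Fin m1 × Fin m2 can be written as σ = ρ2 ∘ γ ∘ ρ1, where ρ1 and ρ2 are row shuffle permutations and γ is a column shuffle permutation; that is, the labeled Grid Rearrangement problem on an m1 × m2 table is solved by m1 row shuffles, followed by m2 column shuffles, followed by another m1 row shuffles (2·m1 + m2 shuffles in total). -/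
/-- Core combinatorial lemma (Birkhoff-style decomposition via Hall). -/
lemma grid_coloring {m1 m2 : ℕ} (t : Fin m1 × Fin m2 → Fin m1) :
    ∀ (k : ℕ) (S : Fin m1 → Finset (Fin m1 × Fin m2)),
    (∀ i p, p ∈ S i → p.1 = i) →
    (∀ i, (S i).card = k) →
    (∀ j : Fin m1, ((Finset.univ.biUnion S).filter (fun p => t p = j)).card = k) →
    ∃ c : Fin m1 × Fin m2 → ℕ,
      (∀ p, p ∈ S p.1 → c p < k) ∧
      (∀ p q, p ∈ S p.1 → q ∈ S q.1 → p.1 = q.1 → c p = c q → p = q) ∧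
      (∀ p q, p ∈ S p.1 → q ∈ S q.1 → c p = c q → t p = t q → p = q) := by
  intro k
  induction k with
  | zero =>
    intro S hS1 hS2 _
    refine ⟨fun _ => 0, ?_, ?_, ?_⟩ <;> intro p <;>
      simp_all [Finset.card_eq_zero, Finset.eq_empty_iff_forall_notMem]
  | succ k ih =>
    intro S hS1 hS2 hS3
    classical
    -- disjointness of the S i
    have hdisj : ∀ i i' : Fin m1, i ≠ i' → Disjoint (S i) (S i') := by
      intro i i' hne
      refine Finset.disjoint_left.mpr fun p hp hp' => hne ?_
      rw [← hS1 i p hp, ← hS1 i' p hp']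
    -- Hall condition
    have hall : ∀ s : Finset (Fin m1),
        s.card ≤ (s.biUnion (fun i => (S i).image t)).card := by
      intro s
      set J := s.biUnion (fun i => (S i).image t) with hJ
      have h1 : (s.biUnion S).card = s.card * (k + 1) := by
        rw [Finset.card_biUnion (fun i _ i' _ h => hdisj i i' h)]
        simp [hS2, Finset.sum_const, mul_comm]
      have hsub : s.biUnion S ⊆ J.biUnion
          (fun j => (Finset.univ.biUnion S).filter (fun p => t p = j)) := by
        intro p hp
        obtain ⟨i, hi, hpi⟩ := Finset.mem_biUnion.mp hp
        refine Finset.mem_biUnion.mpr ⟨t p, ?_, ?_⟩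
        · exact Finset.mem_biUnion.mpr ⟨i, hi, Finset.mem_image_of_mem t hpi⟩
        · exact Finset.mem_filter.mpr ⟨Finset.mem_biUnion.mpr ⟨i, Finset.mem_univ i, hpi⟩, rfl⟩
      have h2 : (s.biUnion S).card ≤ J.card * (k + 1) := by
        calc (s.biUnion S).card ≤ (J.biUnion
            (fun j => (Finset.univ.biUnion S).filter (fun p => t p = j))).card :=
              Finset.card_le_card hsub
          _ ≤ ∑ j ∈ J, ((Finset.univ.biUnion S).filter (fun p => t p = j)).card :=
              Finset.card_biUnion_le
          _ = J.card * (k + 1) := by simp [hS3, Finset.sum_const, mul_comm]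
      have := h1 ▸ h2
      exact Nat.le_of_mul_le_mul_right this (Nat.succ_pos k)
    obtain ⟨f, hfinj, hf⟩ :=
      (Finset.all_card_le_biUnion_card_iff_exists_injective
        (fun i => (S i).image t)).mp hall
    -- choose representatives
    have hrep : ∀ i, ∃ p, p ∈ S i ∧ t p = f i := by
      intro i
      simpa using Finset.mem_image.mp (hf i)
    choose g hg1 hg2 using hrep
    have hfbij : Function.Bijective f := Finite.injective_iff_bijective.mp hfinj
    -- remaining cells
    set S' : Fin m1 → Finset (Fin m1 × Fin m2) := fun i => (S i).erase (g i) with hS'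
    have hS'1 : ∀ i p, p ∈ S' i → p.1 = i := fun i p hp =>
      hS1 i p (Finset.mem_of_mem_erase hp)
    have hS'2 : ∀ i, (S' i).card = k := by
      intro i
      simp only [hS', Finset.card_erase_of_mem (hg1 i), hS2]
      omega
    -- key: p ∈ S p.1 and p ≠ g p.1 → p ∈ S' p.1, and members of biUnion
    have hmem : ∀ p : Fin m1 × Fin m2, p ∈ Finset.univ.biUnion S ↔ p ∈ S p.1 := by
      intro p
      constructor
      · intro hp
        obtain ⟨i, _, hpi⟩ := Finset.mem_biUnion.mp hp
        rw [hS1 i p hpi]; exact hpi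
      · intro hp
        exact Finset.mem_biUnion.mpr ⟨p.1, Finset.mem_univ _, hp⟩
    have hmem' : ∀ p : Fin m1 × Fin m2, p ∈ Finset.univ.biUnion S' ↔ p ∈ S' p.1 := by
      intro p
      constructor
      · intro hp
        obtain ⟨i, _, hpi⟩ := Finset.mem_biUnion.mp hp
        rw [hS'1 i p hpi]; exact hpi
      · intro hp
        exact Finset.mem_biUnion.mpr ⟨p.1, Finset.mem_univ _, hp⟩
    have hS'3 : ∀ j : Fin m1,
        ((Finset.univ.biUnion S').filter (fun p => t p = j)).card = k := by
      intro j
      obtain ⟨i, hij⟩ := hfbij.surjective j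
      have heq : (Finset.univ.biUnion S').filter (fun p => t p = j)
          = ((Finset.univ.biUnion S).filter (fun p => t p = j)).erase (g i) := by
        ext p
        simp only [Finset.mem_filter, Finset.mem_erase, hmem, hmem']
        constructor
        · rintro ⟨hp, htp⟩
          have hpS : p ∈ S p.1 := Finset.mem_of_mem_erase hp
          refine ⟨?_, hpS, htp⟩
          intro hpg
          have h1 : p.1 = i := by rw [hpg, hS1 i (g i) (hg1 i)]
          exact (Finset.ne_of_mem_erase hp) (by rw [h1]; exact hpg)
        · rintro ⟨hpg, hpS, htp⟩
          refine ⟨Finset.mem_erase.mpr ⟨?_, hpS⟩, htp⟩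
          intro hpg'
          -- p = g p.1, so t p = f p.1 = j = f i, so p.1 = i, so p = g i
          apply hpg
          have h1 : f p.1 = j := by rw [← hg2 p.1, ← hpg', htp]
          have : p.1 = i := hfinj (by rw [h1, hij])
          rw [hpg', this]
      have hgmem : g i ∈ (Finset.univ.biUnion S).filter (fun p => t p = j) := by
        refine Finset.mem_filter.mpr ⟨?_, ?_⟩
        · exact (hmem (g i)).mpr (by rw [hS1 i (g i) (hg1 i)]; exact hg1 i)
        · rw [hg2 i, hij]
      rw [heq, Finset.card_erase_of_mem hgmem, hS3]
      omega
    obtain ⟨c', hc'1, hc'2, hc'3⟩ := ih S' hS'1 hS'2 hS'3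
    refine ⟨fun p => if p = g p.1 then k else c' p, ?_, ?_, ?_⟩
    · intro p hp
      by_cases h : p = g p.1
      · have : (if p = g p.1 then k else c' p) = k := if_pos h
        simpa [this] using Nat.lt_succ_self k
      · have : p ∈ S' p.1 := Finset.mem_erase.mpr ⟨h, hp⟩
        have h' : (if p = g p.1 then k else c' p) = c' p := if_neg h
        simpa [h'] using Nat.lt_succ_of_lt (hc'1 p this)
    · intro p q hp hq h1 h2
      have h2 : (if p = g p.1 then k else c' p) = (if q = g q.1 then k else c' q) := h2
      by_cases hpg : p = g p.1 <;> by_cases hqg : q = g q.1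
      · rw [hpg, hqg, h1]
      · exfalso
        rw [if_pos hpg, if_neg hqg] at h2
        exact absurd h2.symm (Nat.ne_of_lt (hc'1 q (Finset.mem_erase.mpr ⟨hqg, hq⟩)))
      · exfalso
        rw [if_neg hpg, if_pos hqg] at h2
        exact absurd h2 (Nat.ne_of_lt (hc'1 p (Finset.mem_erase.mpr ⟨hpg, hp⟩)))
      · rw [if_neg hpg, if_neg hqg] at h2
        exact hc'2 p q (Finset.mem_erase.mpr ⟨hpg, hp⟩)
          (Finset.mem_erase.mpr ⟨hqg, hq⟩) h1 h2
    · intro p q hp hq h1 h2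
      have h1 : (if p = g p.1 then k else c' p) = (if q = g q.1 then k else c' q) := h1
      by_cases hpg : p = g p.1 <;> by_cases hqg : q = g q.1
      · have : f p.1 = f q.1 := by
          rw [← hg2 p.1, ← hg2 q.1, ← hpg, ← hqg, h2]
        have h3 : p.1 = q.1 := hfinj this
        rw [hpg, hqg, h3]
      · exfalso
        rw [if_pos hpg, if_neg hqg] at h1
        exact absurd h1.symm (Nat.ne_of_lt (hc'1 q (Finset.mem_erase.mpr ⟨hqg, hq⟩)))
      · exfalso
        rw [if_neg hpg, if_pos hqg] at h1
        exact absurd h1 (Nat.ne_of_lt (hc'1 p (Finset.mem_erase.mpr ⟨hpg, hp⟩)))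
      · rw [if_neg hpg, if_neg hqg] at h1
        exact hc'3 p q (Finset.mem_erase.mpr ⟨hpg, hp⟩)
          (Finset.mem_erase.mpr ⟨hqg, hq⟩) h1 h2


theorem labeled_grid_rearrangement'
    (m1 m2 : ℕ)
    (σ : Equiv.Perm (Fin m1 × Fin m2)) :
    ∃ ρ1 ρ2 γ : Equiv.Perm (Fin m1 × Fin m2),
      (∀ p, (ρ1 p).1 = p.1) ∧ (∀ p, (ρ2 p).1 = p.1) ∧ (∀ p, (γ p).2 = p.2) ∧
      ∀ p, σ p = ρ2 (γ (ρ1 p)) := by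
  classical
  set t : Fin m1 × Fin m2 → Fin m1 := fun p => (σ p).1 with ht
  set S : Fin m1 → Finset (Fin m1 × Fin m2) :=
    fun i => Finset.univ.filter (fun p => p.1 = i) with hSdef
  have hrowcard : ∀ i : Fin m1,
      (Finset.univ.filter (fun p : Fin m1 × Fin m2 => p.1 = i)).card = m2 := by
    intro i
    have : Finset.univ.filter (fun p : Fin m1 × Fin m2 => p.1 = i)
        = {i} ×ˢ Finset.univ := by
      ext p
      simp only [Finset.mem_filter, Finset.mem_univ, true_and, Finset.mem_product,
        Finset.mem_singleton, and_true]
    rw [this, Finset.card_product]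
    simp
  have hS1 : ∀ i p, p ∈ S i → p.1 = i := by
    intro i p hp
    exact (Finset.mem_filter.mp hp).2
  have hS2 : ∀ i, (S i).card = m2 := hrowcard
  have hbu : Finset.univ.biUnion S = Finset.univ := by
    apply Finset.eq_univ_of_forall
    intro p
    exact Finset.mem_biUnion.mpr ⟨p.1, Finset.mem_univ _,
      Finset.mem_filter.mpr ⟨Finset.mem_univ _, rfl⟩⟩
  have hS3 : ∀ j : Fin m1,
      ((Finset.univ.biUnion S).filter (fun p => t p = j)).card = m2 := by
    intro j
    rw [hbu]
    have : Finset.univ.filter (fun p => t p = j)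
        = (Finset.univ.filter (fun p : Fin m1 × Fin m2 => p.1 = j)).image σ.symm := by
      ext p
      simp only [Finset.mem_filter, Finset.mem_univ, true_and, Finset.mem_image, ht]
      constructor
      · intro h
        exact ⟨σ p, h, by simp⟩
      · rintro ⟨q, hq, rfl⟩
        simpa using hq
    rw [this, Finset.card_image_of_injective _ σ.symm.injective, hrowcard]
  obtain ⟨c, hc1, hc2, hc3⟩ := grid_coloring t m2 S hS1 hS2 hS3
  have hmemS : ∀ p : Fin m1 × Fin m2, p ∈ S p.1 :=
    fun p => Finset.mem_filter.mpr ⟨Finset.mem_univ _, rfl⟩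
  set chat : Fin m1 × Fin m2 → Fin m2 := fun p => ⟨c p, hc1 p (hmemS p)⟩ with hchat
  have hchatinj_row : ∀ p q, p.1 = q.1 → chat p = chat q → p = q := by
    intro p q h1 h2
    exact hc2 p q (hmemS p) (hmemS q) h1 (congrArg Fin.val h2)
  -- ρ1
  have hρ1inj : Function.Injective (fun p : Fin m1 × Fin m2 => (p.1, chat p)) := by
    intro p q h
    have h' : (p.1, chat p) = (q.1, chat q) := h
    obtain ⟨h1, h2⟩ := Prod.mk.injEq _ _ _ _ ▸ h'
    exact hchatinj_row p q h1 h2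
  set ρ1 : Equiv.Perm (Fin m1 × Fin m2) :=
    Equiv.ofBijective _ (Finite.injective_iff_bijective.mp hρ1inj) with hρ1
  have hρ1app : ∀ p, ρ1 p = (p.1, chat p) := fun p => rfl
  -- γ
  have hγinj : Function.Injective
      (fun q : Fin m1 × Fin m2 => ((σ (ρ1.symm q)).1, q.2)) := by
    intro q q' h
    have h' : ((σ (ρ1.symm q)).1, q.2) = ((σ (ρ1.symm q')).1, q'.2) := h
    obtain ⟨h1, h2⟩ := Prod.mk.injEq _ _ _ _ ▸ h'
    set p := ρ1.symm q
    set p' := ρ1.symm q'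
    have hq : ρ1 p = q := ρ1.apply_symm_apply q
    have hq' : ρ1 p' = q' := ρ1.apply_symm_apply q'
    have hcp : chat p = q.2 := by rw [← hq, hρ1app]
    have hcp' : chat p' = q'.2 := by rw [← hq', hρ1app]
    have : p = p' := hc3 p p' (hmemS p) (hmemS p')
      (by rw [hchat] at hcp hcp'; exact congrArg Fin.val (hcp.trans (h2 ▸ hcp'.symm)))
      h1
    rw [← hq, ← hq', this]
  set γ : Equiv.Perm (Fin m1 × Fin m2) :=
    Equiv.ofBijective _ (Finite.injective_iff_bijective.mp hγinj) with hγ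
  have hγapp : ∀ q, γ q = ((σ (ρ1.symm q)).1, q.2) := fun q => rfl
  -- ρ2
  set ρ2 : Equiv.Perm (Fin m1 × Fin m2) := γ.symm.trans (ρ1.symm.trans σ) with hρ2
  refine ⟨ρ1, ρ2, γ, fun p => rfl, ?_, fun q => rfl, ?_⟩
  · intro q
    have hkey : ∀ q, ρ2 q = σ (ρ1.symm (γ.symm q)) := fun q => rfl
    rw [hkey]
    have : γ (γ.symm q) = q := γ.apply_symm_apply q
    conv_rhs => rw [← this]
    rw [hγapp (γ.symm q)]
  · intro p
    have : γ (ρ1 p) = ((σ p).1, chat p) := by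
      rw [hγapp, ρ1.symm_apply_apply, hρ1app]
    rw [this]
    show σ p = σ (ρ1.symm (γ.symm ((σ p).1, chat p)))
    have hγp : γ (ρ1 p) = ((σ p).1, chat p) := by
      rw [hγapp, ρ1.symm_apply_apply, hρ1app]
    rw [← hγp, γ.symm_apply_apply, ρ1.symm_apply_apply]


/-- Labeled Grid Rearrangement Theorem: every permutation of the cells of an
`m1 × m2` table factors as row shuffles, then column shuffles, then row
shuffles (`2 m1 + m2` shuffles in total). -/
theorem labeled_grid_rearrangement
    (m1 m2 : ℕ) (h21 : m2 ≤ m1) (h2 : 1 ≤ m2)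
    (σ : Equiv.Perm (Fin m1 × Fin m2)) :
    ∃ ρ1 ρ2 γ : Equiv.Perm (Fin m1 × Fin m2),
      IsRowShuffle ρ1 ∧ IsRowShuffle ρ2 ∧ IsColShuffle γ ∧
      ∀ p, σ p = ρ2 (γ (ρ1 p)) := by
  obtain ⟨ρ1, ρ2, γ, a1, a2, a3, a4⟩ := labeled_grid_rearrangement' m1 m2 σ
  exact ⟨ρ1, ρ2, γ, a1, a2, a3, a4⟩
end

section
/- Let m1 ≥ m2 ≥ 1. Every permutation σ of Fin m1 × Fin m2 can be written as σ = γ2 ∘ ρ ∘ γ1, where γ1 and γ2 are column shuffle permutations and ρ is a row shuffle permutation; that is, the labeled Grid Rearrangement problem on an m1 × m2 table can also be solved by m2 column shuffles, followed by m1 row shuffles, followed by another m2 column shuffles. -/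
/-!
Join the column `p.2` of each cell `p` to the column `(σ p).2` of its image. This bipartite
multigraph on the columns is `m1`-regular, so by Hall's theorem it splits into `m1` perfect
matchings; let `c p` be the index of the matching containing the edge of `p`. Then `σ` is
realized by moving `p` to row `c p` within its column, along that row to column `(σ p).2`, and
finally within that column to `σ p`.
-/

open Finset Function

def IsFiberRegular {α β : Type*} [DecidableEq β] (s : α → β) (E : Finset α) (k : ℕ) : Prop :=
  ∀ b, #{e ∈ E | s e = b} = k

section FiberRegular

variable {α β : Type*} {s t : α → β} {E M : Finset α} {k : ℕ}

lemma injOn_extend_coloring [DecidableEq α] {c : α → ℕ} (hM : Set.InjOn s M)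
    (hc : ∀ e ∈ E \ M, c e < k) (hcs : Set.InjOn (fun e => (c e, s e)) ↑(E \ M)) :
    Set.InjOn (fun e => (if e ∈ M then k else c e, s e)) E := by
  intro x hx y hy hxy
  simp only [Prod.mk.injEq] at hxy
  obtain ⟨hcxy, hsxy⟩ := hxy
  have hx' := fun h : x ∉ M => hc x (mem_sdiff.mpr ⟨hx, h⟩)
  have hy' := fun h : y ∉ M => hc y (mem_sdiff.mpr ⟨hy, h⟩)
  by_cases hxM : x ∈ M <;> by_cases hyM : y ∈ M <;> simp only [hxM, hyM, if_true, if_false] at hcxy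
  · exact hM hxM hyM hsxy
  · exact absurd hcxy (hy' hyM).ne'
  · exact absurd hcxy (hx' hxM).ne
  · exact hcs (by simp [hx, hxM]) (by simp [hy, hyM]) (Prod.ext hcxy hsxy)

variable [DecidableEq β]

lemma IsFiberRegular.card_filter_mem (hs : IsFiberRegular s E k) (S : Finset β) :
    #{e ∈ E | s e ∈ S} = k * #S := by
  rw [← sum_card_fiberwise_eq_card_filter]
  simp [hs _, mul_comm]

lemma IsFiberRegular.injOn (hs : IsFiberRegular s M 1) : Set.InjOn s M := by
  intro x hx y hy hxy
  exact card_le_one.mp (hs (s x)).le x (by simpa using hx) y (by simpa [hxy] using hy)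

lemma IsFiberRegular.sdiff [DecidableEq α] (hE : IsFiberRegular s E (k + 1))
    (hM : IsFiberRegular s M 1) (hME : M ⊆ E) : IsFiberRegular s (E \ M) k := by
  intro b
  have hfilter : {e ∈ E \ M | s e = b} = {e ∈ E | s e = b} \ {e ∈ M | s e = b} := by
    ext e; constructor <;> simp +contextual
  rw [hfilter, card_sdiff_of_subset (filter_subset_filter _ hME), hE b, hM b, Nat.add_sub_cancel]

lemma isFiberRegular_image_one [Fintype β] [DecidableEq α] {f : β → α} (hf : Injective f)
    {g : β → β} (hg : Bijective g) (hsf : ∀ b, s (f b) = g b) :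
    IsFiberRegular s (univ.image f) 1 := by
  intro b
  obtain ⟨b', rfl⟩ := hg.2 b
  rw [filter_image, card_image_of_injective _ hf, card_eq_one]
  exact ⟨b', by ext x; simp [hsf, hg.1.eq_iff]⟩

lemma IsFiberRegular.exists_perfect_matching [Fintype β] [DecidableEq α]
    (hs : IsFiberRegular s E (k + 1)) (ht : IsFiberRegular t E (k + 1)) :
    ∃ M ⊆ E, IsFiberRegular s M 1 ∧ IsFiberRegular t M 1 := by
  let T : β → Finset β := fun b => {e ∈ E | s e = b}.image t
  have hall : ∀ S : Finset β, #S ≤ #(S.biUnion T) := by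
    intro S
    have hsub : {e ∈ E | s e ∈ S} ⊆ {e ∈ E | t e ∈ S.biUnion T} := by
      intro e he
      simp only [mem_filter, mem_biUnion, T, mem_image] at he ⊢
      exact ⟨he.1, s e, he.2, e, ⟨he.1, rfl⟩, rfl⟩
    have := card_le_card hsub
    rw [hs.card_filter_mem, ht.card_filter_mem] at this
    exact Nat.le_of_mul_le_mul_left this k.succ_pos
  obtain ⟨g, hg, hgT⟩ := (all_card_le_biUnion_card_iff_exists_injective T).mp hall
  have hedge : ∀ b, ∃ e ∈ E, s e = b ∧ t e = g b := by
    intro b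
    obtain ⟨e, he, hte⟩ := mem_image.mp (hgT b)
    obtain ⟨heE, hse⟩ := mem_filter.mp he
    exact ⟨e, heE, hse, hte⟩
  choose f hfE hfs hft using hedge
  have hf : Injective f := LeftInverse.injective (g := s) hfs
  refine ⟨univ.image f, ?_, isFiberRegular_image_one hf bijective_id hfs,
    isFiberRegular_image_one hf (Finite.injective_iff_bijective.mp hg) hft⟩
  simpa [image_subset_iff] using hfE

-- The colours are natural numbers because for `k = 0` there may be no map `α → Fin 0`.
theorem IsFiberRegular.exists_coloring [Fintype β] [DecidableEq α] :
    ∀ {k : ℕ} {E : Finset α}, IsFiberRegular s E k → IsFiberRegular t E k →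
      ∃ c : α → ℕ, (∀ e ∈ E, c e < k) ∧
        Set.InjOn (fun e => (c e, s e)) E ∧ Set.InjOn (fun e => (c e, t e)) E
  | 0, E, hs, _ => by
    have hE : E = ∅ := by
      refine eq_empty_of_forall_notMem fun e he => ?_
      have hfiber : 0 < #{x ∈ E | s x = s e} := card_pos.mpr ⟨e, mem_filter.mpr ⟨he, rfl⟩⟩
      exact hfiber.ne' (hs (s e))
    subst hE
    exact ⟨fun _ => 0, by simp, by simp, by simp⟩
  | k + 1, E, hs, ht => by
    obtain ⟨M, hME, hsM, htM⟩ := hs.exists_perfect_matching ht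
    obtain ⟨c, hck, hcs, hct⟩ := (hs.sdiff hsM hME).exists_coloring (ht.sdiff htM hME)
    refine ⟨fun e => if e ∈ M then k else c e, ?_, ?_, ?_⟩
    · intro e he
      dsimp only
      split_ifs with heM
      · exact k.lt_succ_self
      · exact (hck e (mem_sdiff.mpr ⟨he, heM⟩)).trans k.lt_succ_self
    · exact injOn_extend_coloring hsM.injOn hck hcs
    · exact injOn_extend_coloring htM.injOn hck hct

end FiberRegular

lemma isFiberRegular_snd (α β : Type*) [Fintype α] [Fintype β] [DecidableEq β] :
    IsFiberRegular (Prod.snd : α × β → β) univ (Fintype.card α) := by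
  intro b
  rw [show ({p | p.2 = b} : Finset (α × β)) = univ ×ˢ {b} by ext ⟨a, b'⟩; simp [eq_comm]]
  simp

lemma IsFiberRegular.comp_perm {α β : Type*} [Fintype α] [DecidableEq β] {s : α → β} {k : ℕ}
    (hs : IsFiberRegular s univ k) (σ : Equiv.Perm α) : IsFiberRegular (s ∘ σ) univ k := by
  intro b
  rw [← hs b]
  exact card_bijective σ σ.bijective (by simp)

lemma Equiv.Perm.apply_mul_inv_apply_of_forall_eq {X Y : Type*} {e₁ e₂ : Equiv.Perm X}
    {π : X → Y} (h : ∀ x, π (e₁ x) = π (e₂ x)) (x : X) : π ((e₁ * e₂⁻¹) x) = π x := by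
  simpa using h (e₂⁻¹ x)

theorem labeled_grid_rearrangement_col_row_col_general
    (m1 m2 : ℕ) (σ : Equiv.Perm (Fin m1 × Fin m2)) :
    ∃ γ1 γ2 ρ : Equiv.Perm (Fin m1 × Fin m2),
      IsColShuffle γ1 ∧ IsColShuffle γ2 ∧ IsRowShuffle ρ ∧
      ∀ p, σ p = γ2 (ρ (γ1 p)) := by
  classical
  have hsnd := isFiberRegular_snd (Fin m1) (Fin m2)
  rw [Fintype.card_fin] at hsnd
  obtain ⟨c, hc, hcs, hct⟩ := hsnd.exists_coloring (hsnd.comp_perm σ)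
  let row (p : Fin m1 × Fin m2) : Fin m1 := ⟨c p, hc p (mem_univ p)⟩
  have bij {f : Fin m1 × Fin m2 → Fin m2}
      (hf : Set.InjOn (fun p => (c p, f p)) ↑(univ : Finset (Fin m1 × Fin m2))) :
      Bijective fun p => (row p, f p) := by
    refine Finite.injective_iff_bijective.mp fun p q hpq => hf (by simp) (by simp) ?_
    simp only [Prod.mk.injEq, Fin.ext_iff, row] at hpq ⊢
    exact hpq
  let γ1 := Equiv.ofBijective _ (bij hcs)
  let δ := Equiv.ofBijective _ (bij hct)
  refine ⟨γ1, σ * δ⁻¹, δ * γ1⁻¹, fun _ => rfl, ?_, ?_, fun p => by simp⟩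
  · exact Equiv.Perm.apply_mul_inv_apply_of_forall_eq (π := Prod.snd) fun _ => rfl
  · exact Equiv.Perm.apply_mul_inv_apply_of_forall_eq (π := Prod.fst) fun _ => rfl

/-- Labeled Grid Rearrangement, alternative factorization: every permutation of
the cells of an `m1 × m2` table factors as column shuffles, then row shuffles,
then column shuffles (`m1 + 2 m2` shuffles in total). -/
theorem labeled_grid_rearrangement_col_row_col
    (m1 m2 : ℕ) (h21 : m2 ≤ m1) (h2 : 1 ≤ m2)
    (σ : Equiv.Perm (Fin m1 × Fin m2)) :
    ∃ γ1 γ2 ρ : Equiv.Perm (Fin m1 × Fin m2),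
      IsColShuffle γ1 ∧ IsColShuffle γ2 ∧ IsRowShuffle ρ ∧
      ∀ p, σ p = γ2 (ρ (γ1 p)) :=
  labeled_grid_rearrangement_col_row_col_general m1 m2 σ
end

section
/- (Fast Line Shuffle.) Let m ≥ 2 and consider the 3×m grid graph (3 rows, m columns) with m agents, where agent j starts at vertex (0, j) on the top row for each j ∈ Fin m (all other vertices are unoccupied). For every permutation σ of Fin m, there exists a feasible path set taking agent j from (0, j) to goal (0, σ j) with makespan at most 7·m. -/
/-- Two vertices of the `m1 × m2` grid graph are adjacent iff their Manhattan
distance equals `1`. -/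
def GridAdj {m1 m2 : ℕ} (u v : Fin m1 × Fin m2) : Prop :=
  (((u.1 : ℕ) : ℤ) - ((v.1 : ℕ) : ℤ)).natAbs + (((u.2 : ℕ) : ℤ) - ((v.2 : ℕ) : ℤ)).natAbs = 1

/-- A feasible path set for the MAPF instance `(s, g)` on the `m1 × m2` grid:
each agent's path starts at its start vertex, moves along grid edges or waits,
eventually stays at its goal, and no two agents ever collide on a vertex or
swap along an edge. -/
def FeasiblePathSet {m1 m2 n : ℕ} (s g : Fin n → Fin m1 × Fin m2)
    (P : Fin n → ℕ → Fin m1 × Fin m2) : Prop :=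
  (∀ i, P i 0 = s i) ∧
  (∀ i, ∀ t : ℕ, 0 < t → (P i t = P i (t - 1) ∨ GridAdj (P i (t - 1)) (P i t))) ∧
  (∀ i, ∃ T, ∀ t ≥ T, P i t = g i) ∧
  (∀ t, ∀ i j, i ≠ j → P i t ≠ P j t) ∧
  (∀ t, ∀ i j, i ≠ j → ¬(P i t = P j (t + 1) ∧ P j t = P i (t + 1)))

/-- The makespan of the path set `P` is at most `K`. -/
def MakespanLE {m1 m2 n : ℕ} (g : Fin n → Fin m1 × Fin m2)
    (P : Fin n → ℕ → Fin m1 × Fin m2) (K : ℕ) : Prop :=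
  ∀ i, ∀ t, K ≤ t → P i t = g i


namespace FLShuffle

/-- Row of the agent starting at column `a` with goal column `b` at time `t`. -/
def rf (m a b t : ℕ) : ℕ :=
  if b = a then 0
  else if a < b then
    if t = 0 then 0
    else if t ≤ (m + 1 - a) + (b - a) then 1
    else 0
  else
    if t = 0 then 0
    else if t = 1 then 1
    else if t ≤ 2 * m + 2 + 2 * a - b then 2
    else if t = 2 * m + 3 + 2 * a - b then 1
    else 0

/-- Column of the agent starting at column `a` with goal column `b` at time `t`. -/
def cf (m a b t : ℕ) : ℕ :=
  if b = a then a
  else if a < b then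
    if t = 0 then a
    else if t ≤ (m + 1 - a) + (b - a) then a + (t - (m + 1 - a))
    else b
  else
    if t = 0 then a
    else if t = 1 then a
    else if t ≤ 2 * m + 2 + 2 * a - b then a - (t - (2 * m + 2 + a))
    else if t = 2 * m + 3 + 2 * a - b then b
    else b

lemma rf_lt (m a b t : ℕ) : rf m a b t < 3 := by
  unfold rf; split_ifs <;> omega

lemma cf_lt (m a b t : ℕ) (ha : a < m) (hb : b < m) : cf m a b t < m := by
  unfold cf; split_ifs <;> omega

lemma rf_zero (m a b : ℕ) : rf m a b 0 = 0 := by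
  unfold rf; split_ifs <;> omega

lemma cf_zero (m a b : ℕ) : cf m a b 0 = a := by
  unfold cf; split_ifs <;> omega

lemma rc_final (m a b t : ℕ) (hm : 2 ≤ m) (ha : a < m) (hb : b < m) (ht : 7 * m ≤ t) :
    rf m a b t = 0 ∧ cf m a b t = b := by
  unfold rf cf
  split_ifs <;> (try simp only [false_and, true_and, and_false, and_true, not_false_eq_true]) <;>
    first | trivial | omega

set_option maxHeartbeats 1000000 in
lemma rc_disj (m t ai bi aj bj : ℕ) (hai : ai < m) (hbi : bi < m) (haj : aj < m)
    (hbj : bj < m) (ha : ai ≠ aj) (hb : bi ≠ bj) :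
    ¬(rf m ai bi t = rf m aj bj t ∧ cf m ai bi t = cf m aj bj t) := by
  unfold rf cf
  split_ifs <;> (try simp only [false_and, true_and, and_false, and_true, not_false_eq_true]) <;>
    first | trivial | omega

set_option maxHeartbeats 1000000 in
lemma moveclass (m a b t : ℕ) (ha : a < m) (hb : b < m) :
    (rf m a b (t+1) = rf m a b t ∧ cf m a b (t+1) = cf m a b t) ∨
    (rf m a b (t+1) = rf m a b t + 1 ∧ cf m a b (t+1) = cf m a b t ∧ t + 1 ≤ 2) ∨
    (rf m a b t = rf m a b (t+1) + 1 ∧ cf m a b (t+1) = cf m a b t ∧ 5 ≤ t + 1) ∨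
    (rf m a b t = 1 ∧ rf m a b (t+1) = 1 ∧ cf m a b (t+1) = cf m a b t + 1) ∨
    (rf m a b t = 2 ∧ rf m a b (t+1) = 2 ∧ cf m a b (t+1) + 1 = cf m a b t) := by
  unfold rf cf
  split_ifs <;> (try simp only [false_and, true_and, and_false, and_true, not_false_eq_true]) <;>
    first | trivial | omega

def pp (m : ℕ) (σ : Equiv.Perm (Fin m)) (j : Fin m) (t : ℕ) : Fin 3 × Fin m :=
  (⟨rf m j (σ j) t, rf_lt m j (σ j) t⟩,
   ⟨cf m j (σ j) t, cf_lt m j (σ j) t j.isLt (σ j).isLt⟩)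

end FLShuffle

/-- Fast Line Shuffle: on a `3 × m` grid, `m` agents starting on the top row,
one per column, can be arbitrarily reordered along the top row within `7 m`
steps. -/
theorem fast_line_shuffle
    (m : ℕ) (hm : 2 ≤ m) (σ : Equiv.Perm (Fin m)) :
    ∃ P : Fin m → ℕ → Fin 3 × Fin m,
      FeasiblePathSet (fun j => ((0 : Fin 3), j)) (fun j => ((0 : Fin 3), σ j)) P ∧
      MakespanLE (fun j => ((0 : Fin 3), σ j)) P (7 * m) := by
  have goal_eq : ∀ (j : Fin m) (t : ℕ), 7 * m ≤ t →
      FLShuffle.pp m σ j t = ((0 : Fin 3), σ j) := by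
    intro j t ht
    have h := FLShuffle.rc_final m (j : ℕ) ((σ j : ℕ)) t hm j.isLt (σ j).isLt ht
    simp only [FLShuffle.pp, Prod.ext_iff, Fin.ext_iff]
    exact ⟨h.1, h.2⟩
  refine ⟨FLShuffle.pp m σ, ⟨?_, ?_, ?_, ?_, ?_⟩, ?_⟩
  · intro j
    simp only [FLShuffle.pp, Prod.ext_iff, Fin.ext_iff]
    exact ⟨FLShuffle.rf_zero m j (σ j), FLShuffle.cf_zero m j (σ j)⟩
  · intro i t ht
    obtain ⟨k, rfl⟩ : ∃ k, t = k + 1 := ⟨t - 1, by omega⟩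
    have H := FLShuffle.moveclass m (i : ℕ) ((σ i : ℕ)) k i.isLt (σ i).isLt
    simp only [Nat.add_sub_cancel]
    rcases H with h | h
    · exact Or.inl (Prod.ext_iff.mpr ⟨Fin.ext h.1, Fin.ext h.2⟩)
    · right
      simp only [GridAdj, FLShuffle.pp]
      omega
  · intro i
    exact ⟨7 * m, fun t ht => goal_eq i t ht⟩
  · intro t i j hij h
    have ha : (i : ℕ) ≠ (j : ℕ) := fun h' => hij (Fin.ext h')
    have hb : ((σ i : ℕ)) ≠ ((σ j : ℕ)) := fun h' => hij (σ.injective (Fin.ext h'))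
    refine FLShuffle.rc_disj m t i (σ i) j (σ j) i.isLt (σ i).isLt j.isLt (σ j).isLt ha hb ?_
    simpa only [FLShuffle.pp, Prod.ext_iff, Fin.ext_iff] using h
  · rintro t i j hij ⟨h1, h2⟩
    have ha : (i : ℕ) ≠ (j : ℕ) := fun h' => hij (Fin.ext h')
    have hb : ((σ i : ℕ)) ≠ ((σ j : ℕ)) := fun h' => hij (σ.injective (Fin.ext h'))
    simp only [FLShuffle.pp, Prod.ext_iff, Fin.ext_iff] at h1 h2
    have Hi := FLShuffle.moveclass m (i : ℕ) ((σ i : ℕ)) t i.isLt (σ i).isLt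
    have Hj := FLShuffle.moveclass m (j : ℕ) ((σ j : ℕ)) t j.isLt (σ j).isLt
    have D := FLShuffle.rc_disj m t i (σ i) j (σ j) i.isLt (σ i).isLt j.isLt (σ j).isLt ha hb
    omega
  · intro i t ht
    exact goal_eq i t ht
end

section
/- (Properties of Linear Merge.) Let m ≥ 2 and consider the 2×m grid graph (2 rows, m columns) with m agents, where agent j starts at vertex (0, j) on the first row for each j ∈ Fin m (the second row is unoccupied). For every permutation σ of Fin m, there exists a feasible path set taking agent j from (0, j) to goal (0, σ j) with makespan at most m + 2·(⌈log₂ m⌉ + 1). -/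
def natAdj (p q : ℕ × ℕ) : Prop :=
  (p.1 - q.1) + (q.1 - p.1) + ((p.2 - q.2) + (q.2 - p.2)) = 1

def Dm : ℕ → ℕ
  | 0 => 0
  | 1 => 0
  | n+2 => (n+3)/2 + 1 + Dm ((n+3)/2)
  termination_by w => w
  decreasing_by omega

theorem Dm_eq {w : ℕ} (hw : 2 ≤ w) : Dm w = (w+1)/2 + 1 + Dm ((w+1)/2) := by
  obtain ⟨n, rfl⟩ : ∃ n, w = n+2 := ⟨w-2, by omega⟩
  show Dm (n+2) = _
  rw [Dm]

theorem Dm_mono : ∀ y x, x ≤ y → Dm x ≤ Dm y := by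
  intro y
  induction y using Nat.strong_induction_on with
  | _ y IH =>
    intro x hxy
    by_cases hx : x ≤ 1
    · interval_cases x <;> simp [Dm]
    · have hy : 2 ≤ y := by omega
      rw [Dm_eq (by omega), Dm_eq hy]
      have h1 : (x+1)/2 ≤ (y+1)/2 := by omega
      have h2 : Dm ((x+1)/2) ≤ Dm ((y+1)/2) := IH ((y+1)/2) (by omega) _ h1
      omega

theorem Dm_bound : ∀ w, 1 ≤ w → Dm w + 1 ≤ w + 2 * Nat.clog 2 w := by
  intro w
  induction w using Nat.strong_induction_on with
  | _ w IH =>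
    intro hw
    by_cases hw2 : w ≤ 1
    · interval_cases w
      simp [Dm]
    · have hw2' : 2 ≤ w := by omega
      have hclog : Nat.clog 2 w = Nat.clog 2 ((w+1)/2) + 1 := by
        have := Nat.clog_of_two_le (b := 2) (n := w) (by norm_num) hw2'
        simpa using this
      have ha1 : 1 ≤ (w+1)/2 := by omega
      have IH' := IH ((w+1)/2) (by omega) ha1
      rw [Dm_eq hw2', hclog]
      omega

theorem card_lt_fin (w x : ℕ) (hx : x ≤ w) :
    (Finset.univ.filter fun k : Fin w => (k:ℕ) < x).card = x := by
  have : (Finset.univ.filter fun k : Fin w => (k:ℕ) < x)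
      = (Finset.univ : Finset (Fin x)).map (Fin.castLEEmb hx) := by
    ext k
    simp only [Finset.mem_filter, Finset.mem_univ, true_and, Finset.mem_map]
    constructor
    · intro hk; exact ⟨⟨k, hk⟩, by simp [Fin.castLEEmb, Fin.ext_iff]⟩
    · rintro ⟨k', rfl⟩
      simpa [Fin.castLEEmb] using k'.2
  rw [this, Finset.card_map, Finset.card_univ, Fintype.card_fin]

theorem card_perm_lt (w x : ℕ) (hx : x ≤ w) (e : Equiv.Perm (Fin w)) :
    (Finset.univ.filter fun j => ((e j : ℕ) < x)).card = x := by
  have step : (Finset.univ.filter fun j => ((e j : ℕ) < x)).card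
      = (Finset.univ.filter fun k : Fin w => (k:ℕ) < x).card := by
    apply Finset.card_bij (fun j _ => e j)
    · intro j hj; simp only [Finset.mem_filter, Finset.mem_univ, true_and] at hj ⊢; exact hj
    · intro j1 _ j2 _ h; exact e.injective h
    · intro k hk
      simp only [Finset.mem_filter, Finset.mem_univ, true_and] at hk ⊢
      exact ⟨e.symm k, by simpa using hk, by simp⟩
  rw [step, card_lt_fin w x hx]

theorem card_lt_of_ssub {α : Type*} [DecidableEq α] {s t : Finset α} (hsub : s ⊆ t)
    (x : α) (hxt : x ∈ t) (hxs : x ∉ s) : s.card < t.card :=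
  Finset.card_lt_card ((Finset.ssubset_iff_of_subset hsub).2 ⟨x, hxt, hxs⟩)

theorem step_helper (p q : ℕ × ℕ)
    (h : (p.1 - q.1) + (q.1 - p.1) + ((p.2 - q.2) + (q.2 - p.2)) ≤ 1) :
    q = p ∨ natAdj p q := by
  rcases eq_or_ne q p with he | he
  · left; exact he
  · right
    have hne : ¬(q.1 = p.1 ∧ q.2 = p.2) := fun hc => he (Prod.ext hc.1 hc.2)
    unfold natAdj
    omega

theorem key : ∀ w : ℕ, 1 ≤ w → ∀ (o : ℕ) (π τ : Equiv.Perm (Fin w)) (r : Fin w → ℕ),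
    (∀ j, r j ≤ 1) →
    ∃ (C : ℕ → Fin w → ℕ × ℕ) (re : Fin w → ℕ),
      (∀ j, C 0 j = ((r j : ℕ), o + (π j : ℕ))) ∧
      (∀ j, re j ≤ 1) ∧
      (∀ j t, Dm w ≤ t → C t j = (re j, o + (τ j : ℕ))) ∧
      (∀ t j, C (t+1) j = C t j ∨ natAdj (C t j) (C (t+1) j)) ∧
      (∀ t, Function.Injective (C t)) ∧
      (∀ t i j, i ≠ j → ¬(C t i = C (t+1) j ∧ C t j = C (t+1) i)) ∧
      (∀ t j, (C t j).1 ≤ 1 ∧ o ≤ (C t j).2 ∧ (C t j).2 < o + w) := by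
  intro w
  induction w using Nat.strong_induction_on with
  | _ w IH =>
  intro hw o π τ r hr
  by_cases hw2 : w < 2
  · -- base case w = 1
    obtain rfl : w = 1 := by omega
    have hπτ : ∀ j : Fin 1, π j = τ j := fun j => Subsingleton.elim _ _
    refine ⟨fun _ j => ((r j : ℕ), o + (π j : ℕ)), r, fun j => rfl, hr, ?_, ?_, ?_, ?_, ?_⟩
    · intro j t _
      show ((r j : ℕ), o + (π j : ℕ)) = _
      rw [hπτ j]
    · intro t j; left; rfl
    · intro t i j _; exact Subsingleton.elim i j
    · intro t i j hij; exact absurd (Subsingleton.elim i j) hij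
    · intro t j
      show (r j : ℕ) ≤ 1 ∧ o ≤ o + (π j : ℕ) ∧ o + (π j : ℕ) < o + 1
      have := (π j).2
      exact ⟨hr j, by omega, by omega⟩
  · push_neg at hw2
    classical
    set a := (w+1)/2 with ha_def
    have ha1 : 1 ≤ a := by omega
    have haw : a < w := by omega
    set b := w - a with hb_def
    have hb1 : 1 ≤ b := by omega
    have hba : b ≤ a := by omega
    have hab : a + b = w := by omega
    -- ranks
    let lrank : Fin w → ℕ := fun j =>
      ((Finset.univ.filter fun i => (π i : ℕ) < (π j : ℕ)).filter fun i => (τ i : ℕ) < a).card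
    let rrank : Fin w → ℕ := fun j =>
      ((Finset.univ.filter fun i => (π i : ℕ) < (π j : ℕ)).filter fun i => ¬(τ i : ℕ) < a).card
    have hsum : ∀ j, lrank j + rrank j = (π j : ℕ) := by
      intro j
      have h1 := Finset.card_filter_add_card_filter_not
        (s := Finset.univ.filter fun i : Fin w => (π i : ℕ) < (π j : ℕ))
        (p := fun i => (τ i : ℕ) < a)
      have h2 : (Finset.univ.filter fun i : Fin w => (π i : ℕ) < (π j : ℕ)).card = (π j : ℕ) :=
        card_perm_lt w (π j) (le_of_lt (π j).2) π
      simp only [lrank, rrank]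
      rw [h2] at h1
      exact h1
    have cardL : (Finset.univ.filter fun i : Fin w => (τ i : ℕ) < a).card = a :=
      card_perm_lt w a (le_of_lt haw) τ
    have cardR : (Finset.univ.filter fun i : Fin w => ¬(τ i : ℕ) < a).card = b := by
      have h1 := Finset.card_filter_add_card_filter_not
        (s := (Finset.univ : Finset (Fin w))) (p := fun i : Fin w => (τ i : ℕ) < a)
      rw [cardL, Finset.card_univ, Fintype.card_fin] at h1
      omega
    have lrank_le : ∀ j, lrank j ≤ a := by
      intro j
      have hsub : ((Finset.univ.filter fun i => (π i : ℕ) < (π j : ℕ)).filter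
          fun i => (τ i : ℕ) < a) ⊆ Finset.univ.filter fun i : Fin w => (τ i : ℕ) < a := by
        intro x hx
        simp only [Finset.mem_filter, Finset.mem_univ, true_and] at hx ⊢
        exact hx.2
      calc lrank j ≤ _ := Finset.card_le_card hsub
        _ = a := cardL
    have rrank_le : ∀ j, rrank j ≤ b := by
      intro j
      have hsub : ((Finset.univ.filter fun i => (π i : ℕ) < (π j : ℕ)).filter
          fun i => ¬(τ i : ℕ) < a) ⊆ Finset.univ.filter fun i : Fin w => ¬(τ i : ℕ) < a := by
        intro x hx
        simp only [Finset.mem_filter, Finset.mem_univ, true_and] at hx ⊢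
        exact hx.2
      calc rrank j ≤ _ := Finset.card_le_card hsub
        _ = b := cardR
    have lrank_lt : ∀ j, (τ j : ℕ) < a → lrank j < a := by
      intro j hj
      rw [← cardL]
      apply card_lt_of_ssub ?_ j ?_ ?_
      · intro x hx
        simp only [Finset.mem_filter, Finset.mem_univ, true_and] at hx ⊢
        exact hx.2
      · simp only [Finset.mem_filter, Finset.mem_univ, true_and]; exact hj
      · simp only [Finset.mem_filter, Finset.mem_univ, true_and, not_and, lt_self_iff_false,
          false_and, not_false_eq_true]
    have rrank_lt : ∀ j, ¬(τ j : ℕ) < a → rrank j < b := by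
      intro j hj
      rw [← cardR]
      apply card_lt_of_ssub ?_ j ?_ ?_
      · intro x hx
        simp only [Finset.mem_filter, Finset.mem_univ, true_and] at hx ⊢
        exact hx.2
      · simp only [Finset.mem_filter, Finset.mem_univ, true_and]; exact hj
      · simp only [Finset.mem_filter, Finset.mem_univ, true_and, lt_self_iff_false,
          false_and, not_false_eq_true]
    have πval_inj : ∀ i j : Fin w, (π i : ℕ) = (π j : ℕ) → i = j := by
      intro i j h
      exact π.injective (Fin.val_injective h)
    have lrank_mono : ∀ i j, (τ i : ℕ) < a → (τ j : ℕ) < a → (π i : ℕ) < (π j : ℕ) →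
        lrank i < lrank j := by
      intro i j hi hj hij
      apply card_lt_of_ssub ?_ i ?_ ?_
      · intro x hx
        simp only [Finset.mem_filter, Finset.mem_univ, true_and] at hx ⊢
        exact ⟨hx.1.trans hij, hx.2⟩
      · simp only [Finset.mem_filter, Finset.mem_univ, true_and]; exact ⟨hij, hi⟩
      · simp only [Finset.mem_filter, Finset.mem_univ, true_and, not_and, lt_self_iff_false,
          false_and, not_false_eq_true]
    have rrank_mono : ∀ i j, ¬(τ i : ℕ) < a → ¬(τ j : ℕ) < a → (π i : ℕ) < (π j : ℕ) →
        rrank i < rrank j := by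
      intro i j hi hj hij
      apply card_lt_of_ssub ?_ i ?_ ?_
      · intro x hx
        simp only [Finset.mem_filter, Finset.mem_univ, true_and] at hx ⊢
        exact ⟨hx.1.trans hij, hx.2⟩
      · simp only [Finset.mem_filter, Finset.mem_univ, true_and]; exact ⟨hij, hi⟩
      · simp only [Finset.mem_filter, Finset.mem_univ, true_and, lt_self_iff_false,
          false_and, not_false_eq_true]
    have lrank_inj : ∀ i j, (τ i : ℕ) < a → (τ j : ℕ) < a → lrank i = lrank j → i = j := by
      intro i j hi hj h
      rcases lt_trichotomy (π i : ℕ) (π j : ℕ) with hc | hc | hc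
      · exact absurd h (Nat.ne_of_lt (lrank_mono i j hi hj hc))
      · exact πval_inj i j hc
      · exact absurd h.symm (Nat.ne_of_lt (lrank_mono j i hj hi hc))
    have rrank_inj : ∀ i j, ¬(τ i : ℕ) < a → ¬(τ j : ℕ) < a → rrank i = rrank j → i = j := by
      intro i j hi hj h
      rcases lt_trichotomy (π i : ℕ) (π j : ℕ) with hc | hc | hc
      · exact absurd h (Nat.ne_of_lt (rrank_mono i j hi hj hc))
      · exact πval_inj i j hc
      · exact absurd h.symm (Nat.ne_of_lt (rrank_mono j i hj hi hc))
    -- subtype equivalences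
    have cardA : Fintype.card {j : Fin w // (τ j : ℕ) < a} = a := by
      rw [Fintype.card_subtype]; exact cardL
    have cardB : Fintype.card {j : Fin w // ¬(τ j : ℕ) < a} = b := by
      rw [Fintype.card_subtype]; exact cardR
    let nA : {j : Fin w // (τ j : ℕ) < a} ≃ Fin a := Fintype.equivFinOfCardEq cardA
    let nB : {j : Fin w // ¬(τ j : ℕ) < a} ≃ Fin b := Fintype.equivFinOfCardEq cardB
    let πA : Fin a → Fin a := fun k => ⟨lrank (nA.symm k).1, lrank_lt _ (nA.symm k).2⟩
    have πA_inj : Function.Injective πA := by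
      intro k1 k2 h
      have h' : lrank (nA.symm k1).1 = lrank (nA.symm k2).1 := congrArg Fin.val h
      have h'' := lrank_inj _ _ (nA.symm k1).2 (nA.symm k2).2 h'
      exact nA.symm.injective (Subtype.ext h'')
    let πAe : Equiv.Perm (Fin a) := Equiv.ofBijective πA (Finite.injective_iff_bijective.mp πA_inj)
    let τA : Fin a → Fin a := fun k => ⟨(τ (nA.symm k).1 : ℕ), (nA.symm k).2⟩
    have τA_inj : Function.Injective τA := by
      intro k1 k2 h
      have h' := congrArg (fun x : Fin a => (x : ℕ)) h
      simp only [τA] at h'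
      have h'' := τ.injective (Fin.val_injective h')
      exact nA.symm.injective (Subtype.ext h'')
    let τAe : Equiv.Perm (Fin a) := Equiv.ofBijective τA (Finite.injective_iff_bijective.mp τA_inj)
    let πB : Fin b → Fin b := fun k => ⟨rrank (nB.symm k).1, rrank_lt _ (nB.symm k).2⟩
    have πB_inj : Function.Injective πB := by
      intro k1 k2 h
      have h' : rrank (nB.symm k1).1 = rrank (nB.symm k2).1 := congrArg Fin.val h
      have h'' := rrank_inj _ _ (nB.symm k1).2 (nB.symm k2).2 h'
      exact nB.symm.injective (Subtype.ext h'')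
    let πBe : Equiv.Perm (Fin b) := Equiv.ofBijective πB (Finite.injective_iff_bijective.mp πB_inj)
    have hτB_lt : ∀ j : Fin w, ¬(τ j : ℕ) < a → (τ j : ℕ) - a < b := by
      intro j hj
      have := (τ j).2
      omega
    let τB : Fin b → Fin b := fun k => ⟨(τ (nB.symm k).1 : ℕ) - a, hτB_lt _ (nB.symm k).2⟩
    have τB_inj : Function.Injective τB := by
      intro k1 k2 h
      have h' := congrArg (fun x : Fin b => (x : ℕ)) h
      simp only [τB] at h'
      have e1 := (nB.symm k1).2
      have e2 := (nB.symm k2).2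
      have h'' : (τ (nB.symm k1).1 : ℕ) = (τ (nB.symm k2).1 : ℕ) := by omega
      exact nB.symm.injective (Subtype.ext (τ.injective (Fin.val_injective h'')))
    let τBe : Equiv.Perm (Fin b) := Equiv.ofBijective τB (Finite.injective_iff_bijective.mp τB_inj)
    -- recursive schedules
    obtain ⟨CA, reA, hA0, hAre, hAfin, hAstep, hAinj, hAswap, hAbnd⟩ :=
      IH a haw ha1 o πAe τAe (fun _ => 0) (fun _ => Nat.zero_le 1)
    obtain ⟨CB, reB, hB0, hBre, hBfin, hBstep, hBinj, hBswap, hBbnd⟩ :=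
      IH b (lt_of_le_of_lt hba haw) hb1 (o + a) πBe τBe (fun _ => 1) (fun _ => le_refl 1)
    have hA0' : ∀ (j : Fin w) (h : (τ j : ℕ) < a), CA 0 (nA ⟨j, h⟩) = (0, o + lrank j) := by
      intro j h
      rw [hA0]
      have hv : (πAe (nA ⟨j, h⟩) : ℕ) = lrank j := by
        show (πA (nA ⟨j, h⟩) : ℕ) = lrank j
        simp only [πA, Equiv.symm_apply_apply]
      rw [hv]
    have hB0' : ∀ (j : Fin w) (h : ¬(τ j : ℕ) < a),
        CB 0 (nB ⟨j, h⟩) = (1, o + (a + rrank j)) := by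
      intro j h
      rw [hB0]
      have hv : (πBe (nB ⟨j, h⟩) : ℕ) = rrank j := by
        show (πB (nB ⟨j, h⟩) : ℕ) = rrank j
        simp only [πB, Equiv.symm_apply_apply]
      rw [hv]
      have : o + a + rrank j = o + (a + rrank j) := by omega
      rw [this]
    have hAτ : ∀ (j : Fin w) (h : (τ j : ℕ) < a), (τAe (nA ⟨j, h⟩) : ℕ) = (τ j : ℕ) := by
      intro j h
      show (τA (nA ⟨j, h⟩) : ℕ) = (τ j : ℕ)
      simp only [τA, Equiv.symm_apply_apply]
    have hBτ : ∀ (j : Fin w) (h : ¬(τ j : ℕ) < a), (τBe (nB ⟨j, h⟩) : ℕ) = (τ j : ℕ) - a := by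
      intro j h
      show (τB (nB ⟨j, h⟩) : ℕ) = (τ j : ℕ) - a
      simp only [τB, Equiv.symm_apply_apply]
    -- phase columns
    let colL : Fin w → ℕ → ℕ := fun j s => max (lrank j) ((π j : ℕ) - s)
    let colR : Fin w → ℕ → ℕ := fun j s => min (a + rrank j) ((π j : ℕ) + s)
    -- the combined schedule
    let C : ℕ → Fin w → ℕ × ℕ := fun t j =>
      if t = 0 then ((r j : ℕ), o + (π j : ℕ))
      else if t ≤ a then
        (if (τ j : ℕ) < a then (0, o + colL j (t - 1)) else (1, o + colR j (t - 1)))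
      else
        (if h : (τ j : ℕ) < a then CA (t - (a + 1)) (nA ⟨j, h⟩)
         else CB (t - (a + 1)) (nB ⟨j, h⟩))
    have hC0 : ∀ j, C 0 j = ((r j : ℕ), o + (π j : ℕ)) := fun j => rfl
    have hCsub : ∀ t, a + 1 ≤ t → ∀ j, C t j =
        (if h : (τ j : ℕ) < a then CA (t - (a + 1)) (nA ⟨j, h⟩)
         else CB (t - (a + 1)) (nB ⟨j, h⟩)) := by
      intro t ht j
      simp only [C]
      rw [if_neg (by omega), if_neg (by omega)]
    have hCphase : ∀ s, s ≤ a → ∀ j, C (s + 1) j =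
        (if (τ j : ℕ) < a then (0, o + colL j s) else (1, o + colR j s)) := by
      intro s hs j
      by_cases hsa : s + 1 ≤ a
      · simp only [C]
        rw [if_neg (by omega), if_pos hsa, Nat.add_sub_cancel]
      · have hs' : s = a := by omega
        subst hs'
        rw [hCsub (a + 1) (le_refl _) j, Nat.sub_self]
        by_cases h : (τ j : ℕ) < a
        · rw [dif_pos h, if_pos h, hA0' j h]
          have hc : colL j a = lrank j := by
            have h1 := hsum j
            have h2 := rrank_le j
            simp only [colL]
            omega
          rw [hc]
        · rw [dif_neg h, if_neg h, hB0' j h]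
          have hc : colR j a = a + rrank j := by
            have h1 := hsum j
            simp only [colR]
            omega
          rw [hc]
    have hAB_ne : ∀ t1 t2 (i j : Fin w) (hi : (τ i : ℕ) < a) (hj : ¬(τ j : ℕ) < a),
        CA t1 (nA ⟨i, hi⟩) ≠ CB t2 (nB ⟨j, hj⟩) := by
      intro t1 t2 i j hi hj hc
      have h1 := (hAbnd t1 (nA ⟨i, hi⟩)).2.2
      have h2 := (hBbnd t2 (nB ⟨j, hj⟩)).2.1
      rw [hc] at h1
      omega
    let re : Fin w → ℕ := fun j =>
      if h : (τ j : ℕ) < a then reA (nA ⟨j, h⟩) else reB (nB ⟨j, h⟩)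
    have hDw : Dm w = a + 1 + Dm a := by rw [Dm_eq hw2, ← ha_def]
    have hfinal : ∀ (j : Fin w) (t : ℕ), Dm w ≤ t → C t j = (re j, o + (τ j : ℕ)) := by
      intro j t ht
      rw [hCsub t (by omega) j]
      simp only [re]
      by_cases h : (τ j : ℕ) < a
      · rw [dif_pos h, dif_pos h, hAfin (nA ⟨j, h⟩) (t - (a + 1)) (by omega), hAτ j h]
      · rw [dif_neg h, dif_neg h, hBfin (nB ⟨j, h⟩) (t - (a + 1))
          (by have := Dm_mono a b hba; omega), hBτ j h]
        have hv : o + a + ((τ j : ℕ) - a) = o + (τ j : ℕ) := by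
          have := (τ j).2; omega
        rw [hv]
    have hstep : ∀ t j, C (t + 1) j = C t j ∨ natAdj (C t j) (C (t + 1) j) := by
      intro t j
      rcases Nat.lt_or_ge t (a + 1) with ht | ht
      · rcases Nat.eq_zero_or_pos t with rfl | htpos
        · rw [hC0 j, hCphase 0 (by omega) j]
          have hl0 : colL j 0 = (π j : ℕ) := by
            have h1 := hsum j; simp only [colL]; omega
          have hr0 : colR j 0 = (π j : ℕ) := by
            have h1 := hsum j; have h2 := lrank_le j; simp only [colR]; omega
          have hrj := hr j
          by_cases h : (τ j : ℕ) < a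
          · rw [if_pos h, hl0]
            apply step_helper
            dsimp only
            omega
          · rw [if_neg h, hr0]
            apply step_helper
            dsimp only
            omega
        · obtain ⟨s, rfl⟩ : ∃ s, t = s + 1 := ⟨t - 1, by omega⟩
          rw [hCphase s (by omega) j, hCphase (s + 1) (by omega) j]
          by_cases h : (τ j : ℕ) < a
          · rw [if_pos h, if_pos h]
            apply step_helper
            dsimp only
            simp only [colL]
            omega
          · rw [if_neg h, if_neg h]
            apply step_helper
            dsimp only
            simp only [colR]
            omega
      · rw [hCsub t (by omega) j, hCsub (t + 1) (by omega) j]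
        have harith : t + 1 - (a + 1) = (t - (a + 1)) + 1 := by omega
        rw [harith]
        by_cases h : (τ j : ℕ) < a
        · rw [dif_pos h, dif_pos h]; exact hAstep _ _
        · rw [dif_neg h, dif_neg h]; exact hBstep _ _
    have hinj : ∀ t, Function.Injective (C t) := by
      intro t i j hc
      rcases Nat.lt_or_ge t (a + 1) with ht | ht
      · rcases Nat.eq_zero_or_pos t with rfl | htpos
        · rw [hC0 i, hC0 j] at hc
          have e1 := congrArg Prod.snd hc
          dsimp only at e1
          exact πval_inj i j (by omega)
        · obtain ⟨s, rfl⟩ : ∃ s, t = s + 1 := ⟨t - 1, by omega⟩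
          rw [hCphase s (by omega) i, hCphase s (by omega) j] at hc
          by_cases hi : (τ i : ℕ) < a <;> by_cases hj : (τ j : ℕ) < a
          · rw [if_pos hi, if_pos hj] at hc
            have e1 := congrArg Prod.snd hc
            dsimp only at e1
            rcases lt_trichotomy (π i : ℕ) (π j : ℕ) with hcc | hcc | hcc
            · have m1 := lrank_mono i j hi hj hcc
              simp only [colL] at e1
              exact absurd e1 (by omega)
            · exact πval_inj i j hcc
            · have m1 := lrank_mono j i hj hi hcc
              simp only [colL] at e1
              exact absurd e1 (by omega)
          · rw [if_pos hi, if_neg hj] at hc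
            have e1 := congrArg Prod.fst hc
            dsimp only at e1
            exact absurd e1 (by omega)
          · rw [if_neg hi, if_pos hj] at hc
            have e1 := congrArg Prod.fst hc
            dsimp only at e1
            exact absurd e1 (by omega)
          · rw [if_neg hi, if_neg hj] at hc
            have e1 := congrArg Prod.snd hc
            dsimp only at e1
            rcases lt_trichotomy (π i : ℕ) (π j : ℕ) with hcc | hcc | hcc
            · have m1 := rrank_mono i j hi hj hcc
              simp only [colR] at e1
              exact absurd e1 (by omega)
            · exact πval_inj i j hcc
            · have m1 := rrank_mono j i hj hi hcc
              simp only [colR] at e1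
              exact absurd e1 (by omega)
      · rw [hCsub t ht i, hCsub t ht j] at hc
        by_cases hi : (τ i : ℕ) < a <;> by_cases hj : (τ j : ℕ) < a
        · rw [dif_pos hi, dif_pos hj] at hc
          have := nA.injective (hAinj (t - (a + 1)) hc)
          exact congrArg Subtype.val this
        · rw [dif_pos hi, dif_neg hj] at hc
          exact absurd hc (hAB_ne _ _ i j hi hj)
        · rw [dif_neg hi, dif_pos hj] at hc
          exact absurd hc.symm (hAB_ne _ _ j i hj hi)
        · rw [dif_neg hi, dif_neg hj] at hc
          have := nB.injective (hBinj (t - (a + 1)) hc)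
          exact congrArg Subtype.val this
    have hswap : ∀ t (i j : Fin w), i ≠ j → ¬(C t i = C (t + 1) j ∧ C t j = C (t + 1) i) := by
      rintro t i j hij ⟨h1, h2⟩
      rcases Nat.lt_or_ge t (a + 1) with ht | ht
      · rcases Nat.eq_zero_or_pos t with rfl | htpos
        · rw [hC0 i, hCphase 0 (by omega) j] at h1
          have hsj := hsum j
          have hlj := lrank_le j
          by_cases hj : (τ j : ℕ) < a
          · rw [if_pos hj] at h1
            have e1 := congrArg Prod.snd h1
            dsimp only at e1
            simp only [colL] at e1
            exact hij (πval_inj i j (by omega))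
          · rw [if_neg hj] at h1
            have e1 := congrArg Prod.snd h1
            dsimp only at e1
            simp only [colR] at e1
            exact hij (πval_inj i j (by omega))
        · obtain ⟨s, rfl⟩ : ∃ s, t = s + 1 := ⟨t - 1, by omega⟩
          rw [hCphase s (by omega) i, hCphase (s + 1) (by omega) j] at h1
          rw [hCphase s (by omega) j, hCphase (s + 1) (by omega) i] at h2
          by_cases hi : (τ i : ℕ) < a <;> by_cases hj : (τ j : ℕ) < a
          · rw [if_pos hi, if_pos hj] at h1 h2
            have e1 := congrArg Prod.snd h1
            have e2 := congrArg Prod.snd h2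
            dsimp only at e1 e2
            rcases lt_trichotomy (π i : ℕ) (π j : ℕ) with hcc | hcc | hcc
            · have m1 := lrank_mono i j hi hj hcc
              simp only [colL] at e1 e2
              omega
            · exact hij (πval_inj i j hcc)
            · have m1 := lrank_mono j i hj hi hcc
              simp only [colL] at e1 e2
              omega
          · rw [if_pos hi, if_neg hj] at h1
            have e1 := congrArg Prod.fst h1
            dsimp only at e1
            omega
          · rw [if_neg hi, if_pos hj] at h1
            have e1 := congrArg Prod.fst h1
            dsimp only at e1
            omega
          · rw [if_neg hi, if_neg hj] at h1 h2
            have e1 := congrArg Prod.snd h1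
            have e2 := congrArg Prod.snd h2
            dsimp only at e1 e2
            rcases lt_trichotomy (π i : ℕ) (π j : ℕ) with hcc | hcc | hcc
            · have m1 := rrank_mono i j hi hj hcc
              simp only [colR] at e1 e2
              omega
            · exact hij (πval_inj i j hcc)
            · have m1 := rrank_mono j i hj hi hcc
              simp only [colR] at e1 e2
              omega
      · have harith : t + 1 - (a + 1) = (t - (a + 1)) + 1 := by omega
        rw [hCsub t ht i, hCsub (t + 1) (by omega) j, harith] at h1
        rw [hCsub t ht j, hCsub (t + 1) (by omega) i, harith] at h2
        by_cases hi : (τ i : ℕ) < a <;> by_cases hj : (τ j : ℕ) < a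
        · rw [dif_pos hi, dif_pos hj] at h1 h2
          refine hAswap (t - (a + 1)) (nA ⟨i, hi⟩) (nA ⟨j, hj⟩) ?_ ⟨h1, h2⟩
          intro he
          exact hij (congrArg Subtype.val (nA.injective he))
        · rw [dif_pos hi, dif_neg hj] at h1
          exact hAB_ne _ _ i j hi hj h1
        · rw [dif_neg hi, dif_pos hj] at h2
          exact hAB_ne _ _ j i hj hi h2
        · rw [dif_neg hi, dif_neg hj] at h1 h2
          refine hBswap (t - (a + 1)) (nB ⟨i, hi⟩) (nB ⟨j, hj⟩) ?_ ⟨h1, h2⟩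
          intro he
          exact hij (congrArg Subtype.val (nB.injective he))
    have hbnd : ∀ t j, (C t j).1 ≤ 1 ∧ o ≤ (C t j).2 ∧ (C t j).2 < o + w := by
      intro t j
      rcases Nat.lt_or_ge t (a + 1) with ht | ht
      · rcases Nat.eq_zero_or_pos t with rfl | htpos
        · rw [hC0 j]
          have := (π j).2
          have := hr j
          refine ⟨?_, ?_, ?_⟩ <;> dsimp only <;> omega
        · obtain ⟨s, rfl⟩ : ∃ s, t = s + 1 := ⟨t - 1, by omega⟩
          rw [hCphase s (by omega) j]
          have hsj := hsum j
          have := (π j).2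
          by_cases h : (τ j : ℕ) < a
          · rw [if_pos h]
            refine ⟨?_, ?_, ?_⟩ <;> dsimp only <;> (try simp only [colL]) <;> omega
          · rw [if_neg h]
            have := rrank_lt j h
            refine ⟨?_, ?_, ?_⟩ <;> dsimp only <;> (try simp only [colR]) <;> omega
      · rw [hCsub t ht j]
        by_cases h : (τ j : ℕ) < a
        · rw [dif_pos h]
          obtain ⟨b1, b2, b3⟩ := hAbnd (t - (a + 1)) (nA ⟨j, h⟩)
          exact ⟨b1, b2, by omega⟩
        · rw [dif_neg h]
          obtain ⟨b1, b2, b3⟩ := hBbnd (t - (a + 1)) (nB ⟨j, h⟩)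
          exact ⟨b1, by omega, by omega⟩
    refine ⟨C, re, hC0, ?_, hfinal, hstep, hinj, hswap, hbnd⟩
    intro j
    simp only [re]
    by_cases h : (τ j : ℕ) < a
    · rw [dif_pos h]; exact hAre _
    · rw [dif_neg h]; exact hBre _

theorem fin_step {m : ℕ} (u v : Fin 2 × Fin m)
    (h : ((u.1 : ℕ) - (v.1 : ℕ)) + ((v.1 : ℕ) - (u.1 : ℕ)) +
      (((u.2 : ℕ) - (v.2 : ℕ)) + ((v.2 : ℕ) - (u.2 : ℕ))) ≤ 1) :
    u = v ∨ GridAdj v u := by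
  rcases eq_or_ne u v with he | hne
  · left; exact he
  · right
    have hc : ¬((u.1 : ℕ) = (v.1 : ℕ) ∧ (u.2 : ℕ) = (v.2 : ℕ)) := by
      intro hc
      exact hne (Prod.ext (Fin.val_injective hc.1) (Fin.val_injective hc.2))
    unfold GridAdj
    omega

/-- Properties of Linear Merge: on a `2 × m` grid, `m` agents starting on the
first row, one per column, can be arbitrarily reordered along the first row
within `m + 2 (⌈log₂ m⌉ + 1)` steps. -/
theorem linear_merge_shuffle
    (m : ℕ) (hm : 2 ≤ m) (σ : Equiv.Perm (Fin m)) :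
    ∃ P : Fin m → ℕ → Fin 2 × Fin m,
      FeasiblePathSet (fun j => ((0 : Fin 2), j)) (fun j => ((0 : Fin 2), σ j)) P ∧
      MakespanLE (fun j => ((0 : Fin 2), σ j)) P (m + 2 * (Nat.clog 2 m + 1)) := by
  obtain ⟨C, re, hC0, hre, hfin, hstep, hinj, hswap, hbnd⟩ :=
    key m (by omega) 0 (Equiv.refl (Fin m)) σ (fun _ => 0) (fun _ => Nat.zero_le 1)
  have hrow : ∀ t j, (C t j).1 < 2 := fun t j => by have := (hbnd t j).1; omega
  have hcol : ∀ t j, (C t j).2 < m := fun t j => by have := (hbnd t j).2.2; omega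
  have hfin' : ∀ (j : Fin m) (t : ℕ), Dm m ≤ t → C t j = (re j, (σ j : ℕ)) := by
    intro j t ht
    have := hfin j t ht
    simpa using this
  set D := Dm m with hD
  refine ⟨fun j t => if h : t ≤ D then
      ((⟨(C t j).1, hrow t j⟩ : Fin 2), (⟨(C t j).2, hcol t j⟩ : Fin m))
    else ((0 : Fin 2), σ j), ⟨?_, ?_, ?_, ?_, ?_⟩, ?_⟩
  · -- start
    intro j
    dsimp only
    rw [dif_pos (Nat.zero_le D)]
    have h0 : C 0 j = ((0 : ℕ), (j : ℕ)) := by simpa using hC0 j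
    refine Prod.ext (Fin.val_injective ?_) (Fin.val_injective ?_)
    · show (C 0 j).1 = 0
      rw [h0]
    · show (C 0 j).2 = (j : ℕ)
      rw [h0]
  · -- moves
    intro i t ht
    obtain ⟨t', rfl⟩ : ∃ t'', t = t'' + 1 := ⟨t - 1, by omega⟩
    have harith : t' + 1 - 1 = t' := by omega
    rw [harith]
    dsimp only
    rcases Nat.lt_or_ge t' D with hlt | hge
    · rw [dif_pos (by omega : t' + 1 ≤ D), dif_pos (by omega : t' ≤ D)]
      apply fin_step
      dsimp only
      rcases hstep t' i with he | ha
      · have e1 := congrArg Prod.fst he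
        have e2 := congrArg Prod.snd he
        omega
      · unfold natAdj at ha
        omega
    · rcases Nat.eq_or_lt_of_le hge with heq | hgt
      · -- t' = D : the final pop-up step
        rw [dif_neg (by omega : ¬ t' + 1 ≤ D), dif_pos (by omega : t' ≤ D)]
        apply fin_step
        dsimp only
        have hfe := hfin' i t' (by omega)
        have e1 := congrArg Prod.fst hfe
        have e2 := congrArg Prod.snd hfe
        dsimp only at e1 e2
        have := hre i
        omega
      · rw [dif_neg (by omega : ¬ t' + 1 ≤ D), dif_neg (by omega : ¬ t' ≤ D)]
        left; rfl
  · -- reach goal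
    intro i
    refine ⟨D + 1, fun t ht => ?_⟩
    dsimp only
    rw [dif_neg (by omega : ¬ t ≤ D)]
  · -- no vertex collision
    intro t i j hij hc
    dsimp only at hc
    rcases Nat.lt_or_ge D t with hgt | hle
    · rw [dif_neg (by omega : ¬ t ≤ D), dif_neg (by omega : ¬ t ≤ D)] at hc
      have := congrArg Prod.snd hc
      dsimp only at this
      exact hij (σ.injective this)
    · rw [dif_pos hle, dif_pos hle] at hc
      have e1 := congrArg (fun p : Fin 2 × Fin m => (p.1 : ℕ)) hc
      have e2 := congrArg (fun p : Fin 2 × Fin m => (p.2 : ℕ)) hc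
      dsimp only at e1 e2
      exact hij (hinj t (Prod.ext e1 e2))
  · -- no swap
    intro t i j hij hc
    obtain ⟨h1, h2⟩ := hc
    dsimp only at h1 h2
    rcases Nat.lt_or_ge t D with hlt | hge
    · rw [dif_pos (by omega : t ≤ D), dif_pos (by omega : t + 1 ≤ D)] at h1 h2
      have e11 := congrArg (fun p : Fin 2 × Fin m => (p.1 : ℕ)) h1
      have e12 := congrArg (fun p : Fin 2 × Fin m => (p.2 : ℕ)) h1
      have e21 := congrArg (fun p : Fin 2 × Fin m => (p.1 : ℕ)) h2
      have e22 := congrArg (fun p : Fin 2 × Fin m => (p.2 : ℕ)) h2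
      dsimp only at e11 e12 e21 e22
      exact hswap t i j hij ⟨Prod.ext e11 e12, Prod.ext e21 e22⟩
    · rcases Nat.eq_or_lt_of_le hge with heq | hgt
      · rw [dif_pos (by omega : t ≤ D), dif_neg (by omega : ¬ t + 1 ≤ D)] at h1
        have e12 := congrArg (fun p : Fin 2 × Fin m => (p.2 : ℕ)) h1
        dsimp only at e12
        have hfe := hfin' i t (by omega)
        have e2 := congrArg Prod.snd hfe
        dsimp only at e2
        have : (σ i : ℕ) = (σ j : ℕ) := by omega
        exact hij (σ.injective (Fin.val_injective this))
      · rw [dif_neg (by omega : ¬ t ≤ D), dif_neg (by omega : ¬ t + 1 ≤ D)] at h1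
        have e12 := congrArg Prod.snd h1
        dsimp only at e12
        exact hij (σ.injective e12)
  · -- makespan
    intro i t ht
    have hK : D + 1 ≤ m + 2 * (Nat.clog 2 m + 1) := by
      have := Dm_bound m (by omega)
      omega
    dsimp only
    rw [dif_neg (by omega : ¬ t ≤ D)]
end

section
/- (Precise Makespan Lower Bound for random MAPF on 2D grids.) Let m1 ≥ m2 ≥ 1, let α ∈ (0, 1/2), set a1 = ⌊α·m1⌋ and a2 = ⌊α·m2⌋, and let n ≥ 1. Let s_1, g_1, …, s_n, g_n be 2n mutually independent random vertices, each uniformly distributed on V = Fin m1 × Fin m2. Then with probability at least 1 − (1 − (a1·a2/(m1·m2))²)^n, there is an agent i whose start s_i lies in the top-left a1×a2 subgrid (rows 0,…,a1−1 and columns 0,…,a2−1) and whose goal g_i lies in the bottom-right a1×a2 subgrid (rows m1−a1,…,m1−1 and columns m2−a2,…,m2−1); for such an agent the Manhattan distance from s_i to g_i is at least m1 + m2 − 2·a1 − 2·a2. Consequently, with probability at least 1 − (1 − (a1·a2/(m1·m2))²)^n, the maximum over agents of the Manhattan distance from start to goal is at least m1 + m2 − 2·a1 − 2·a2. -/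
/-!
A start in the top-left `a1 × a2` corner and a goal in the bottom-right one are at Manhattan
distance at least `m1 + m2 - 2 a1 - 2 a2`. An agent lands in this configuration with probability
`p² = (a1 a2 / (m1 m2))²`, independently of the others, so some agent does with probability
`1 - (1 - p²)ⁿ` exactly; the makespan bound holds on this event.
-/

/-- The Manhattan distance between two vertices of the `m1 × m2` grid. -/
def MDist {m1 m2 : ℕ} (u v : Fin m1 × Fin m2) : ℕ :=
  (((u.1 : ℕ) : ℤ) - ((v.1 : ℕ) : ℤ)).natAbs + (((u.2 : ℕ) : ℤ) - ((v.2 : ℕ) : ℤ)).natAbs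

open Finset

section UniformTuples
variable {X : Type*} [Fintype X] (P : X → Prop) [DecidablePred P]

theorem card_filter_forall_apply (n : ℕ) :
    #{ω : Fin n → X | ∀ i, P (ω i)} = #{x | P x} ^ n := by
  rw [← Fintype.card_piFinset_const]
  congr 1
  ext ω
  simp

theorem card_filter_exists_apply_add (n : ℕ) :
    #{ω : Fin n → X | ∃ i, P (ω i)} + #{x | ¬P x} ^ n = Fintype.card X ^ n := by
  rw [← card_filter_forall_apply, ← Fintype.card_pi_const, ← card_univ]
  convert card_filter_add_card_filter_not (s := univ) (fun ω : Fin n → X => ∃ i, P (ω i))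
    using 3
  simp

theorem card_filter_exists_apply_div_card (n : ℕ) :
    (#{ω : Fin n → X | ∃ i, P (ω i)} : ℝ) / Fintype.card (Fin n → X)
      = 1 - (1 - (#{x | P x} : ℝ) / Fintype.card X) ^ n := by
  have hsplit : (Fintype.card X : ℝ) = #{x | P x} + #{x | ¬P x} := by
    exact_mod_cast (card_filter_add_card_filter_not (s := univ) P).symm
  have hcount : (#{ω : Fin n → X | ∃ i, P (ω i)} : ℝ)
      = (Fintype.card X : ℝ) ^ n - (#{x | ¬P x} : ℝ) ^ n := by
    rw [eq_sub_iff_add_eq]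
    exact_mod_cast card_filter_exists_apply_add P n
  rw [Fintype.card_pi_const, Nat.cast_pow, hcount, hsplit]
  rcases eq_or_ne ((#{x | P x} : ℝ) + #{x | ¬P x}) 0 with hX | hX
  · have hP : (#{x | P x} : ℝ) = 0 := by linarith [(#{x | ¬P x}).cast_nonneg (α := ℝ)]
    simp [hP]
  · have hcompl : 1 - (#{x | P x} : ℝ) / (#{x | P x} + #{x | ¬P x})
        = #{x | ¬P x} / (#{x | P x} + #{x | ¬P x}) := by
      field_simp
      ring
    rw [hcompl, div_pow, sub_div, div_self (pow_ne_zero n hX)]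

end UniformTuples

theorem Fin.card_filter_val_lt_of_le {m a : ℕ} (h : a ≤ m) : #{i : Fin m | i < a} = a := by
  rw [Fin.card_filter_val_lt, min_eq_right h]

theorem Fin.card_filter_sub_le_val {m a : ℕ} (h : a ≤ m) : #{i : Fin m | m - a ≤ i} = a := by
  have hcompl : univ.filter (fun i : Fin m => m - a ≤ i) =
      (univ.filter fun i : Fin m => i < m - a)ᶜ := by
    ext i
    simp
  rw [hcompl, card_compl, Fintype.card_fin, Fin.card_filter_val_lt_of_le (Nat.sub_le m a)]
  omega

theorem card_filter_corner_pairs {m1 m2 a1 a2 : ℕ} (ha1 : a1 ≤ m1) (ha2 : a2 ≤ m2) :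
    #{x : (Fin m1 × Fin m2) × (Fin m1 × Fin m2) | (x.1.1 : ℕ) < a1 ∧ (x.1.2 : ℕ) < a2 ∧
      m1 - a1 ≤ (x.2.1 : ℕ) ∧ m2 - a2 ≤ (x.2.2 : ℕ)} = (a1 * a2) ^ 2 := by
  have hprod : univ.filter (fun x : (Fin m1 × Fin m2) × (Fin m1 × Fin m2) => (x.1.1 : ℕ) < a1 ∧
      (x.1.2 : ℕ) < a2 ∧ m1 - a1 ≤ (x.2.1 : ℕ) ∧ m2 - a2 ≤ (x.2.2 : ℕ)) =
      (univ.filter (fun i : Fin m1 => i < a1) ×ˢ univ.filter (fun j : Fin m2 => j < a2)) ×ˢ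
        (univ.filter (fun i : Fin m1 => m1 - a1 ≤ i) ×ˢ
          univ.filter (fun j : Fin m2 => m2 - a2 ≤ j)) := by
    ext
    simp [and_assoc]
  rw [hprod, card_product, card_product, card_product, Fin.card_filter_val_lt_of_le ha1,
    Fin.card_filter_val_lt_of_le ha2, Fin.card_filter_sub_le_val ha1,
    Fin.card_filter_sub_le_val ha2, sq]

theorem le_MDist_of_corners {m1 m2 a1 a2 : ℕ} {u v : Fin m1 × Fin m2}
    (hu1 : (u.1 : ℕ) < a1) (hu2 : (u.2 : ℕ) < a2)
    (hv1 : m1 - a1 ≤ (v.1 : ℕ)) (hv2 : m2 - a2 ≤ (v.2 : ℕ)) :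
    m1 + m2 - 2 * a1 - 2 * a2 ≤ MDist u v := by
  unfold MDist
  omega

theorem Nat.floor_mul_le_self {α : ℝ} (hα : α ≤ 1) (m : ℕ) : ⌊α * m⌋₊ ≤ m :=
  Nat.floor_le_of_le (mul_le_of_le_one_left m.cast_nonneg hα)

open Classical in
theorem random_mapf_makespan_lower_bound_2d_general
    (m1 m2 n : ℕ)
    (α : ℝ) (hα1 : α < 1 / 2)
    (a1 a2 : ℕ) (ha1 : a1 = ⌊α * m1⌋₊) (ha2 : a2 = ⌊α * m2⌋₊) :
    (∀ u v : Fin m1 × Fin m2,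
        (u.1 : ℕ) < a1 → (u.2 : ℕ) < a2 →
        m1 - a1 ≤ (v.1 : ℕ) → m2 - a2 ≤ (v.2 : ℕ) →
        m1 + m2 - 2 * a1 - 2 * a2 ≤ MDist u v) ∧
    1 - (1 - ((a1 : ℝ) * (a2 : ℝ) / ((m1 : ℝ) * (m2 : ℝ))) ^ 2) ^ n ≤
      ((Finset.univ.filter
          (fun ω : Fin n → (Fin m1 × Fin m2) × (Fin m1 × Fin m2) =>
            ∃ i, ((ω i).1.1 : ℕ) < a1 ∧ ((ω i).1.2 : ℕ) < a2 ∧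
              m1 - a1 ≤ ((ω i).2.1 : ℕ) ∧ m2 - a2 ≤ ((ω i).2.2 : ℕ))).card : ℝ) /
        (Fintype.card (Fin n → (Fin m1 × Fin m2) × (Fin m1 × Fin m2)) : ℝ) ∧
    1 - (1 - ((a1 : ℝ) * (a2 : ℝ) / ((m1 : ℝ) * (m2 : ℝ))) ^ 2) ^ n ≤
      ((Finset.univ.filter
          (fun ω : Fin n → (Fin m1 × Fin m2) × (Fin m1 × Fin m2) =>
            ∃ i, m1 + m2 - 2 * a1 - 2 * a2 ≤ MDist (ω i).1 (ω i).2)).card : ℝ) /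
        (Fintype.card (Fin n → (Fin m1 × Fin m2) × (Fin m1 × Fin m2)) : ℝ) := by
  have hα : α ≤ 1 := by linarith
  have ha1m : a1 ≤ m1 := ha1 ▸ Nat.floor_mul_le_self hα m1
  have ha2m : a2 ≤ m2 := ha2 ▸ Nat.floor_mul_le_self hα m2
  have hprob : (#{ω : Fin n → (Fin m1 × Fin m2) × (Fin m1 × Fin m2) | ∃ i,
      ((ω i).1.1 : ℕ) < a1 ∧ ((ω i).1.2 : ℕ) < a2 ∧
        m1 - a1 ≤ ((ω i).2.1 : ℕ) ∧ m2 - a2 ≤ ((ω i).2.2 : ℕ)} : ℝ) /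
      Fintype.card (Fin n → (Fin m1 × Fin m2) × (Fin m1 × Fin m2))
      = 1 - (1 - ((a1 : ℝ) * a2 / (m1 * m2)) ^ 2) ^ n := by
    rw [card_filter_exists_apply_div_card (fun x : (Fin m1 × Fin m2) × (Fin m1 × Fin m2) =>
      (x.1.1 : ℕ) < a1 ∧ (x.1.2 : ℕ) < a2 ∧ m1 - a1 ≤ (x.2.1 : ℕ) ∧ m2 - a2 ≤ (x.2.2 : ℕ)) n,
      card_filter_corner_pairs ha1m ha2m]
    simp only [Nat.cast_pow, Nat.cast_mul, Fintype.card_prod, Fintype.card_fin]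
    ring
  refine ⟨fun u v => le_MDist_of_corners, hprob.ge, hprob.ge.trans ?_⟩
  gcongr
  exact fun ⟨hu1, hu2, hv1, hv2⟩ => le_MDist_of_corners hu1 hu2 hv1 hv2

open Classical in
/-- Precise makespan lower bound for random MAPF on 2D grids: any start in the
top-left `a1 × a2` subgrid and goal in the bottom-right `a1 × a2` subgrid are
at Manhattan distance at least `m1 + m2 - 2 a1 - 2 a2`; with probability at
least `1 - (1 - (a1 a2 / (m1 m2))²)^n` (uniform measure on `(V × V)^n`), some
agent has its start in the top-left subgrid and its goal in the bottom-right
subgrid, and hence with at least that probability the maximum start-goal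
Manhattan distance over agents is at least `m1 + m2 - 2 a1 - 2 a2`. -/
theorem random_mapf_makespan_lower_bound_2d
    (m1 m2 n : ℕ) (h21 : m2 ≤ m1) (h2 : 1 ≤ m2) (hn : 1 ≤ n)
    (α : ℝ) (hα0 : 0 < α) (hα1 : α < 1 / 2)
    (a1 a2 : ℕ) (ha1 : a1 = ⌊α * m1⌋₊) (ha2 : a2 = ⌊α * m2⌋₊) :
    (∀ u v : Fin m1 × Fin m2,
        (u.1 : ℕ) < a1 → (u.2 : ℕ) < a2 →
        m1 - a1 ≤ (v.1 : ℕ) → m2 - a2 ≤ (v.2 : ℕ) →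
        m1 + m2 - 2 * a1 - 2 * a2 ≤ MDist u v) ∧
    1 - (1 - ((a1 : ℝ) * (a2 : ℝ) / ((m1 : ℝ) * (m2 : ℝ))) ^ 2) ^ n ≤
      ((Finset.univ.filter
          (fun ω : Fin n → (Fin m1 × Fin m2) × (Fin m1 × Fin m2) =>
            ∃ i, ((ω i).1.1 : ℕ) < a1 ∧ ((ω i).1.2 : ℕ) < a2 ∧
              m1 - a1 ≤ ((ω i).2.1 : ℕ) ∧ m2 - a2 ≤ ((ω i).2.2 : ℕ))).card : ℝ) /
        (Fintype.card (Fin n → (Fin m1 × Fin m2) × (Fin m1 × Fin m2)) : ℝ) ∧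
    1 - (1 - ((a1 : ℝ) * (a2 : ℝ) / ((m1 : ℝ) * (m2 : ℝ))) ^ 2) ^ n ≤
      ((Finset.univ.filter
          (fun ω : Fin n → (Fin m1 × Fin m2) × (Fin m1 × Fin m2) =>
            ∃ i, m1 + m2 - 2 * a1 - 2 * a2 ≤ MDist (ω i).1 (ω i).2)).card : ℝ) /
        (Fintype.card (Fin n → (Fin m1 × Fin m2) × (Fin m1 × Fin m2)) : ℝ) :=
  random_mapf_makespan_lower_bound_2d_general m1 m2 n α hα1 a1 a2 ha1 ha2
end

section
/- (Deterministic core of GRH: centered instances are solvable with makespan m1 + 2·m2 + O(1).) There exists a universal constant C such that the following holds. Let m1 ≥ m2 be positive multiples of 3 and consider the m1×m2 grid graph. Let n ≥ 1 and let s, g : Fin n → V be injective start and goal maps such that every start vertex s i and every goal vertex g i has column coordinate congruent to 1 modulo 3 (i.e., all agents start and end on the middle columns of the 3×3 cells, so each 3×3 cell contains at most 3 agents and n ≤ m1·m2/3). Then there exists a feasible path set with makespan at most m1 + 2·m2 + C. -/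
/-!
Cut the grid into bands of three rows and into bands of three columns. A band is a road with
three lanes: agents with distinct start slots and distinct destinations travel along it within
its length plus three steps, forward movers in one outer lane, backward movers in the other, the
middle lane being entered only at the destination. Every agent makes three such trips: along its
start row-band to a column `c`, along the column-band of `c` into its goal row-band, and along the
goal row-band next to its goal, which it then enters in three steps. The trips are conflict-free
as soon as `c` differs for agents sharing a start row-band and for agents sharing a goal row-band.
A row-band holds at most `m2` start (or goal) vertices on middle columns, so such columns exist by
König's edge-colouring theorem for the bipartite multigraph joining start row-bands to goal
row-bands. The makespan is `(m2 + 3) + (m1 + 3) + (m2 + 3) + 3`.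
-/

namespace GridRouting

open Finset Function

section Trajectory

variable {V W : Type*}

def splice (p q : ℕ → V) (T t : ℕ) : V := if t ≤ T then p t else q (t - T)

def IsLazyWalk (adj : V → V → Prop) (p : ℕ → V) : Prop :=
  ∀ t, p (t + 1) = p t ∨ adj (p t) (p (t + 1))

def Avoids (p q : ℕ → V) : Prop :=
  ∀ t, p t ≠ q t ∧ ¬(p t = q (t + 1) ∧ q t = p (t + 1))

variable {adj : V → V → Prop} {p q p' q' : ℕ → V} {T t : ℕ}

theorem splice_of_le (ht : t ≤ T) : splice p q T t = p t := if_pos ht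

theorem splice_of_lt (ht : T < t) : splice p q T t = q (t - T) := if_neg ht.not_ge

theorem splice_zero : splice p q T 0 = p 0 := splice_of_le T.zero_le

theorem splice_of_ge (h : p T = q 0) (ht : T ≤ t) : splice p q T t = q (t - T) := by
  rcases ht.eq_or_lt with rfl | ht
  · rw [splice_of_le le_rfl, Nat.sub_self, h]
  · exact splice_of_lt ht

theorem splice_mem {S : Set V} (hp : ∀ t, p t ∈ S) (hq : ∀ t, q t ∈ S) (t : ℕ) :
    splice p q T t ∈ S := by
  unfold splice
  split_ifs
  exacts [hp t, hq _]

theorem IsLazyWalk.splice (hp : IsLazyWalk adj p) (hq : IsLazyWalk adj q) (h : p T = q 0) :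
    IsLazyWalk adj (splice p q T) := by
  intro t
  rcases lt_or_ge t T with ht | ht
  · rw [splice_of_le ht.le, splice_of_le ht]
    exact hp t
  · rw [splice_of_ge h ht, splice_of_ge h (by omega), Nat.sub_add_comm ht]
    exact hq _

theorem Avoids.splice (hpq : Avoids p q) (hpq' : Avoids p' q') (hp : p T = p' 0)
    (hq : q T = q' 0) : Avoids (splice p p' T) (splice q q' T) := by
  intro t
  rcases lt_or_ge t T with ht | ht
  · simp only [splice_of_le ht.le, splice_of_le (Nat.succ_le_of_lt ht)]
    exact hpq t
  · rw [splice_of_ge hp ht, splice_of_ge hq ht, splice_of_ge hp (by omega),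
      splice_of_ge hq (by omega), Nat.sub_add_comm ht]
    exact hpq' _

theorem IsLazyWalk.comp {adj' : W → W → Prop} {f : V → W}
    (hf : ∀ u v, adj u v → adj' (f u) (f v)) (hp : IsLazyWalk adj p) :
    IsLazyWalk adj' (f ∘ p) := fun t =>
  (hp t).imp (congrArg f) (hf _ _)

theorem Avoids.comp {f : V → W} (hf : Injective f) (h : Avoids p q) : Avoids (f ∘ p) (f ∘ q) :=
  fun t => ⟨hf.ne (h t).1, fun ⟨h₁, h₂⟩ => (h t).2 ⟨hf h₁, hf h₂⟩⟩

theorem avoids_of_disjoint (h : ∀ t t', p t ≠ q t') : Avoids p q :=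
  fun t => ⟨h t t, fun ⟨h₁, _⟩ => h t (t + 1) h₁⟩

theorem IsLazyWalk.reverse (hadj : ∀ u v, adj u v → adj v u) (hp : IsLazyWalk adj p) (T : ℕ) :
    IsLazyWalk adj fun t => p (T - t) := by
  intro t
  rcases lt_or_ge t T with ht | ht
  · have hk : T - t = T - (t + 1) + 1 := by omega
    simp only [hk]
    exact (hp _).imp Eq.symm (hadj _ _)
  · simp [Nat.sub_eq_zero_of_le ht, Nat.sub_eq_zero_of_le (Nat.le_succ_of_le ht)]

theorem Avoids.reverse (h : Avoids p q) (T : ℕ) :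
    Avoids (fun t => p (T - t)) (fun t => q (T - t)) := by
  intro t
  refine ⟨(h _).1, ?_⟩
  rcases lt_or_ge t T with ht | ht
  · have hk : T - t = T - (t + 1) + 1 := by omega
    simp only [hk]
    exact fun ⟨h₁, h₂⟩ => (h _).2 ⟨h₂.symm, h₁.symm⟩
  · simp only [Nat.sub_eq_zero_of_le ht, Nat.sub_eq_zero_of_le (Nat.le_succ_of_le ht)]
    exact fun ⟨h₁, _⟩ => (h 0).1 h₁

end Trajectory

section Lattice

/-- The formula of `GridAdj`, so that `GridAdj u v` is `LatticeAdj (toLattice u) (toLattice v)`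
by definition. -/
def LatticeAdj (u v : ℕ × ℕ) : Prop :=
  ((u.1 : ℤ) - (v.1 : ℤ)).natAbs + ((u.2 : ℤ) - (v.2 : ℤ)).natAbs = 1

def toLattice {m1 m2 : ℕ} (v : Fin m1 × Fin m2) : ℕ × ℕ := (v.1, v.2)

theorem toLattice_injective {m1 m2 : ℕ} : Injective (toLattice : Fin m1 × Fin m2 → ℕ × ℕ) :=
  fun _ _ h => Prod.ext (Fin.ext (congrArg Prod.fst h)) (Fin.ext (congrArg Prod.snd h))

theorem LatticeAdj.symm {u v : ℕ × ℕ} (h : LatticeAdj u v) : LatticeAdj v u := by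
  unfold LatticeAdj at *
  omega

theorem LatticeAdj.swap {u v : ℕ × ℕ} (h : LatticeAdj u v) : LatticeAdj u.swap v.swap := by
  unfold LatticeAdj at *
  simp only [Prod.fst_swap, Prod.snd_swap]
  omega

/-- Coordinates (lane, position) on the band of rows `3b, 3b + 1, 3b + 2`; composing with
`Prod.swap` gives the band of columns `3b, 3b + 1, 3b + 2`. -/
def band (b : ℕ) (u : ℕ × ℕ) : ℕ × ℕ := (3 * b + u.1, u.2)

theorem LatticeAdj.band (b : ℕ) {u v : ℕ × ℕ} (h : LatticeAdj u v) :
    LatticeAdj (band b u) (band b v) := by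
  unfold LatticeAdj GridRouting.band at *
  dsimp only
  omega

theorem band_injective (b : ℕ) : Injective (band b) := fun u v h => by
  simp only [band, Prod.mk.injEq, Nat.add_left_cancel_iff] at h
  exact Prod.ext h.1 h.2

theorem avoids_band {p q : ℕ → ℕ × ℕ} (hp : ∀ t, (p t).1 < 3) (hq : ∀ t, (q t).1 < 3)
    {b b' : ℕ} (h : b = b' → Avoids p q) : Avoids (band b ∘ p) (band b' ∘ q) := by
  rcases eq_or_ne b b' with rfl | hb
  · exact (h rfl).comp (band_injective b)
  · refine avoids_of_disjoint fun t t' he => hb ?_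
    have := hp t
    have := hq t'
    simp only [comp_apply, band, Prod.mk.injEq] at he
    omega

end Lattice

section LaneRoute

def stepToward (w r : ℕ) : ℕ := if w < r then w + 1 else if r < w then w - 1 else w

def laneOf (x D : ℕ) : ℕ := if x < D then 0 else if D < x then 2 else 1

/-- From the middle lane of cell `a` (position `3a + 1`) to the middle lane at position `D`. The
agent first spreads to position `3a + w`, so that the agents of one cell get distinct positions,
then travels in lane `0` (upwards) or lane `2` (downwards) and turns into lane `1` at `D`. All
agents of an outer lane move the same way at unit speed and lane `1` is entered only at the
destination, so distinct destinations keep the routes apart. -/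
def laneRoute (a w D : ℕ) : ℕ → ℕ × ℕ
  | 0 => (w, 3 * a + 1)
  | 1 => (w, 3 * a + w)
  | 2 => (stepToward w (laneOf (3 * a + w) D), 3 * a + w)
  | 3 => (laneOf (3 * a + w) D, 3 * a + w)
  | k + 4 =>
    if 3 * a + w < D then
      if 3 * a + w + (k + 1) ≤ D then (0, 3 * a + w + (k + 1)) else (1, D)
    else if D < 3 * a + w then
      if D + (k + 1) ≤ 3 * a + w then (2, 3 * a + w - (k + 1)) else (1, D)
    else (1, D)

variable {a w D a' w' D' M : ℕ}

theorem laneRoute_zero : laneRoute a w D 0 = (w, 3 * a + 1) := rfl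

theorem laneRoute_three_self : laneRoute a w (3 * a + w) 3 = (1, 3 * a + w) := by
  simp [laneRoute, laneOf]

theorem laneRoute_of_le (ha : 3 * a + 2 < M) (hw : w < 3) (hD : D < M) {k : ℕ}
    (hk : M + 3 ≤ k) : laneRoute a w D k = (1, D) := by
  obtain ⟨k, rfl⟩ : ∃ j, k = j + 4 := ⟨k - 4, by omega⟩
  simp only [laneRoute]
  split_ifs <;> first | rfl | omega

theorem laneRoute_fst_lt (hw : w < 3) (k : ℕ) : (laneRoute a w D k).1 < 3 := by
  rcases k with _ | _ | _ | _ | k <;> simp only [laneRoute, stepToward, laneOf] <;>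
    (try split_ifs) <;> (try simp only) <;> omega

theorem laneRoute_snd_lt (ha : 3 * a + 2 < M) (hw : w < 3) (hD : D < M) (k : ℕ) :
    (laneRoute a w D k).2 < M := by
  rcases k with _ | _ | _ | _ | k <;> simp only [laneRoute] <;> (try split_ifs) <;>
    (try simp only) <;> omega

theorem isLazyWalk_laneRoute (hw : w < 3) : IsLazyWalk LatticeAdj (laneRoute a w D) := by
  intro k
  rcases k with _ | _ | _ | _ | k <;>
    simp only [laneRoute, stepToward, laneOf, LatticeAdj] <;> (try split_ifs) <;>
    (try simp only [Prod.mk.injEq, true_and, and_true, true_or]) <;> omega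

theorem avoids_laneRoute (hw : w < 3) (hw' : w' < 3) (h : (a, w) ≠ (a', w')) (hD : D ≠ D') :
    Avoids (laneRoute a w D) (laneRoute a' w' D') := by
  simp only [ne_eq, Prod.mk.injEq] at h
  intro k
  rcases k with _ | _ | _ | _ | k <;>
    simp only [laneRoute, stepToward, laneOf] <;> (try split_ifs) <;>
    (try simp only [ne_eq, Prod.mk.injEq]) <;> omega

theorem band_laneRoute_lt {b k m : ℕ} (hb : 3 * b + 2 < m) (ha : 3 * a + 2 < M) (hw : w < 3)
    (hD : D < M) : (band b (laneRoute a w D k)).1 < m ∧ (band b (laneRoute a w D k)).2 < M := by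
  have := laneRoute_fst_lt (a := a) (D := D) hw k
  exact ⟨by simp only [band]; omega, laneRoute_snd_lt ha hw hD k⟩

end LaneRoute

section EdgeColoring

variable {α : Type*} [Fintype α] [DecidableEq α]

theorem exists_perm_forall_pos (M : α → α → ℕ) {D : ℕ} (hrow : ∀ r, ∑ a, M r a = D + 1)
    (hcol : ∀ a, ∑ r, M r a = D + 1) : ∃ σ : Equiv.Perm α, ∀ r, 0 < M r (σ r) := by
  let supp : α → Finset α := fun r => {a | 0 < M r a}
  have hall : ∀ S : Finset α, #S ≤ #(S.biUnion supp) := by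
    intro S
    have hS : ∀ r ∈ S, ∑ a ∈ S.biUnion supp, M r a = D + 1 := by
      intro r hr
      rw [← hrow r]
      refine sum_subset (subset_univ _) fun a _ ha => Nat.eq_zero_of_not_pos fun hpos => ha ?_
      exact mem_biUnion.mpr ⟨r, hr, by simpa [supp] using hpos⟩
    have : (D + 1) * #S ≤ (D + 1) * #(S.biUnion supp) :=
      calc (D + 1) * #S = ∑ r ∈ S, ∑ a ∈ S.biUnion supp, M r a := by
            rw [sum_congr rfl hS, sum_const, smul_eq_mul, mul_comm]
        _ = ∑ a ∈ S.biUnion supp, ∑ r ∈ S, M r a := sum_comm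
        _ ≤ ∑ a ∈ S.biUnion supp, ∑ r, M r a :=
            sum_le_sum fun a _ => sum_le_sum_of_subset (subset_univ _)
        _ = (D + 1) * #(S.biUnion supp) := by
            rw [sum_congr rfl fun a _ => hcol a, sum_const, smul_eq_mul, mul_comm]
    exact Nat.le_of_mul_le_mul_left this D.succ_pos
  obtain ⟨σ, hσ, hmem⟩ := (all_card_le_biUnion_card_iff_exists_injective supp).mp hall
  exact ⟨Equiv.ofBijective σ (Finite.injective_iff_bijective.mp hσ),
    fun r => by simpa [supp] using hmem r⟩

/-- Integral Birkhoff–von Neumann theorem. -/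
theorem exists_perm_decomposition :
    ∀ (D : ℕ) (M : α → α → ℕ), (∀ r, ∑ a, M r a = D) → (∀ a, ∑ r, M r a = D) →
      ∃ f : Fin D → Equiv.Perm α, ∀ r a, #{d | f d r = a} = M r a
  | 0, M, hrow, _ => ⟨finZeroElim, fun r a => by
      simpa using ((sum_eq_zero_iff.mp (hrow r)) a (mem_univ a)).symm⟩
  | D + 1, M, hrow, hcol => by
    obtain ⟨σ, hσ⟩ := exists_perm_forall_pos M hrow hcol
    let P : α → α → ℕ := fun r a => if σ r = a then 1 else 0
    have hPM : ∀ r a, P r a ≤ M r a := by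
      intro r a
      by_cases h : σ r = a
      · subst h
        simpa [P, Nat.one_le_iff_ne_zero, Nat.pos_iff_ne_zero] using hσ r
      · simp [P, h]
    have hProw : ∀ r, ∑ a, P r a = 1 := by simp [P]
    have hPcol : ∀ a, ∑ r, P r a = 1 := by simp [P, ← Equiv.eq_symm_apply]
    obtain ⟨f, hf⟩ := exists_perm_decomposition D (fun r a => M r a - P r a)
      (fun r => by rw [sum_tsub_distrib _ fun a _ => hPM r a, hrow, hProw]; rfl)
      (fun a => by rw [sum_tsub_distrib _ fun r _ => hPM r a, hcol, hPcol]; rfl)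
    refine ⟨Fin.cons σ f, fun r a => ?_⟩
    rw [card_filter, Fin.sum_univ_succ]
    simp only [Fin.cons_zero, Fin.cons_succ, ← card_filter, hf]
    exact add_tsub_cancel_of_le (hPM r a)

/-- The block matrix `[[M, D - row sums], [D - column sums, Mᵀ]]`, the off-diagonal blocks being
diagonal. -/
theorem exists_regular_extension (M : α → α → ℕ) {D : ℕ} (hrow : ∀ r, ∑ a, M r a ≤ D)
    (hcol : ∀ a, ∑ r, M r a ≤ D) :
    ∃ N : α ⊕ α → α ⊕ α → ℕ, (∀ r, ∑ a, N r a = D) ∧ (∀ a, ∑ r, N r a = D) ∧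
      ∀ r a, N (.inl r) (.inl a) = M r a := by
  let N : α ⊕ α → α ⊕ α → ℕ
    | .inl r, .inl a => M r a
    | .inl r, .inr a => if r = a then D - ∑ a, M r a else 0
    | .inr a, .inl r => if a = r then D - ∑ r, M r a else 0
    | .inr a, .inr r => M r a
  refine ⟨N, ?_, ?_, fun _ _ => rfl⟩
  · rintro (r | a) <;> simp only [Fintype.sum_sum_type, N, sum_ite_eq, mem_univ, if_true]
    · exact Nat.add_sub_of_le (hrow r)
    · exact Nat.sub_add_cancel (hcol a)
  · rintro (a | r) <;> simp only [Fintype.sum_sum_type, N, sum_ite_eq', mem_univ, if_true]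
    · exact Nat.add_sub_of_le (hcol a)
    · exact Nat.sub_add_cancel (hrow r)

/-- König's edge-colouring theorem for bipartite multigraphs, the edge `i` joining `R i` to
`A i`. -/
theorem exists_edge_coloring {ι β : Type*} [Fintype ι] [Fintype β] [DecidableEq β]
    (R A : ι → β) {D : ℕ} (hR : ∀ r, #{i | R i = r} ≤ D) (hA : ∀ a, #{i | A i = a} ≤ D) :
    ∃ c : ι → Fin D, (∀ i j, R i = R j → c i = c j → i = j) ∧
      (∀ i j, A i = A j → c i = c j → i = j) := by
  rcases isEmpty_or_nonempty ι with hι | ⟨⟨i₀⟩⟩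
  · exact ⟨isEmptyElim, fun i => isEmptyElim i, fun i => isEmptyElim i⟩
  have : NeZero D := ⟨(card_pos.mpr ⟨i₀, by simp⟩).trans_le (hR (R i₀)) |>.ne'⟩
  let cls : β → β → Finset ι := fun r a => {i | R i = r ∧ A i = a}
  have hrow : ∀ r, ∑ a, #(cls r a) = #{i | R i = r} := fun r => by
    rw [card_eq_sum_card_fiberwise (f := A) (t := univ) fun _ _ => mem_univ _]
    simp only [cls, filter_filter]
  have hcol : ∀ a, ∑ r, #(cls r a) = #{i | A i = a} := fun a => by
    rw [card_eq_sum_card_fiberwise (f := R) (t := univ) fun _ _ => mem_univ _]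
    simp only [cls, filter_filter, and_comm]
  obtain ⟨N, hNrow, hNcol, hNcls⟩ := exists_regular_extension (fun r a => #(cls r a))
    (fun r => (hrow r).trans_le (hR r)) (fun a => (hcol a).trans_le (hA a))
  obtain ⟨f, hf⟩ := exists_perm_decomposition D N hNrow hNcol
  have hinj : ∀ r a, ∃ φ : ι → Fin D, Set.MapsTo φ (cls r a) {d | f d (.inl r) = .inl a} ∧
      Set.InjOn φ (cls r a) := fun r a => by
    refine (cls r a).finite_toSet.exists_injOn_of_encard_le
      (t := {d | f d (.inl r) = .inl a}) ?_
    rw [Set.encard_coe_eq_coe_finsetCard, ← coe_filter_univ, Set.encard_coe_eq_coe_finsetCard,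
      hf, hNcls]
  choose φ hφmaps hφinj using hinj
  have hclass : ∀ i, i ∈ cls (R i) (A i) := fun i => by simp [cls]
  set c : ι → Fin D := fun i => φ (R i) (A i) i
  have hcolor : ∀ i, f (c i) (.inl (R i)) = .inl (A i) := fun i => hφmaps _ _ (hclass i)
  have hsame : ∀ i j, R i = R j → A i = A j → c i = c j → i = j := by
    intro i j hRij hAij h
    simp only [c, ← hRij, ← hAij] at h
    exact hφinj _ _ (hclass i) (by simp [cls, hRij, hAij]) h
  refine ⟨c, fun i j hRij h => hsame i j hRij ?_ h, fun i j hAij h => hsame i j ?_ hAij h⟩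
  · apply Sum.inl_injective
    rw [← hcolor i, ← hcolor j, h, hRij]
  · apply Sum.inl_injective
    apply (f (c i)).injective
    rw [hcolor i, h, hcolor j, hAij]

end EdgeColoring

section Route

variable {m1 m2 : ℕ} {s g s' g' : Fin m1 × Fin m2} {c c' : Fin m2}

def rowBlock (v : Fin m1 × Fin m2) : Fin m1 := ⟨v.1 / 3, (Nat.div_le_self _ _).trans_lt v.1.isLt⟩

theorem card_rowBlock_le {n : ℕ} (h2 : 3 ∣ m2) {s : Fin n → Fin m1 × Fin m2}
    (hs : Injective s) (hmid : ∀ i, ((s i).2 : ℕ) % 3 = 1) (r : Fin m1) :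
    #{i | rowBlock (s i) = r} ≤ m2 := by
  let slot : Fin n → ℕ × ℕ := fun i => (((s i).1 : ℕ) % 3, ((s i).2 : ℕ) / 3)
  have hinj : Set.InjOn slot ({i | rowBlock (s i) = r} : Finset (Fin n)) := by
    intro i hi j hj hij
    simp only [coe_filter, mem_univ, true_and, Set.mem_ofPred_eq, rowBlock, Fin.ext_iff, slot,
      Prod.mk.injEq] at hi hj hij
    have := hmid i
    have := hmid j
    exact hs (Prod.ext (Fin.ext (by omega)) (Fin.ext (by omega)))
  calc #{i | rowBlock (s i) = r} ≤ #(range 3 ×ˢ range (m2 / 3)) :=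
        card_le_card_of_injOn slot (fun i _ => by simp [slot]; omega) hinj
    _ = m2 := by simp; omega

def startBandLeg (s : Fin m1 × Fin m2) (c : Fin m2) : ℕ → ℕ × ℕ :=
  band (s.1 / 3 : ℕ) ∘ laneRoute (s.2 / 3 : ℕ) (s.1 % 3 : ℕ) c

/-- Agents sharing the column-band of `c` and the goal row-band differ in `c % 3`, which makes
their destination rows distinct. -/
def columnBandLeg (s g : Fin m1 × Fin m2) (c : Fin m2) : ℕ → ℕ × ℕ :=
  Prod.swap ∘ band (c / 3 : ℕ) ∘ laneRoute (s.1 / 3 : ℕ) (c % 3 : ℕ) (3 * (g.1 / 3) + c % 3 : ℕ)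

def goalBandLeg (g : Fin m1 × Fin m2) (c : Fin m2) : ℕ → ℕ × ℕ :=
  band (g.1 / 3 : ℕ) ∘ laneRoute (c / 3 : ℕ) (c % 3 : ℕ) (3 * (g.2 / 3) + g.1 % 3 : ℕ)

/-- The first three steps of the goal's own `laneRoute`, run backwards. -/
def arrivalLeg (g : Fin m1 × Fin m2) : ℕ → ℕ × ℕ :=
  band (g.1 / 3 : ℕ) ∘
    fun t => laneRoute (g.2 / 3 : ℕ) (g.1 % 3 : ℕ) (3 * (g.2 / 3) + g.1 % 3 : ℕ) (3 - t)

theorem startBandLeg_end (h2 : 3 ∣ m2) : startBandLeg s c (m2 + 3) = columnBandLeg s g c 0 := by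
  simp only [startBandLeg, columnBandLeg, comp_apply, laneRoute_zero]
  rw [laneRoute_of_le (M := m2) ?_ ?_ ?_ le_rfl]
  · simp only [band, Prod.swap_prod_mk, Nat.div_add_mod]
  all_goals omega

theorem columnBandLeg_end (h1 : 3 ∣ m1) : columnBandLeg s g c (m1 + 3) = goalBandLeg g c 0 := by
  simp only [columnBandLeg, goalBandLeg, comp_apply, laneRoute_zero]
  rw [laneRoute_of_le (M := m1) ?_ ?_ ?_ le_rfl]
  · rfl
  all_goals omega

theorem goalBandLeg_end (h2 : 3 ∣ m2) : goalBandLeg g c (m2 + 3) = arrivalLeg g 0 := by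
  simp only [goalBandLeg, arrivalLeg, comp_apply, Nat.sub_zero, laneRoute_three_self]
  rw [laneRoute_of_le (M := m2) ?_ ?_ ?_ le_rfl] <;> omega

def route (s g : Fin m1 × Fin m2) (c : Fin m2) : ℕ → ℕ × ℕ :=
  splice (startBandLeg s c)
    (splice (columnBandLeg s g c) (splice (goalBandLeg g c) (arrivalLeg g) (m2 + 3)) (m1 + 3))
    (m2 + 3)

theorem route_zero (hs : (s.2 : ℕ) % 3 = 1) : route s g c 0 = toLattice s := by
  simp only [route, splice_zero, startBandLeg, comp_apply, laneRoute_zero, band, toLattice,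
    Prod.mk.injEq]
  omega

theorem route_of_ge (hg : (g.2 : ℕ) % 3 = 1) {t : ℕ} (ht : m1 + 2 * m2 + 12 ≤ t) :
    route s g c t = toLattice g := by
  rw [route, splice_of_lt (by omega), splice_of_lt (by omega), splice_of_lt (by omega)]
  simp only [arrivalLeg, comp_apply, show 3 - (t - (m2 + 3) - (m1 + 3) - (m2 + 3)) = 0 by omega,
    laneRoute_zero, band, toLattice, Prod.mk.injEq]
  omega

theorem route_lt (h1 : 3 ∣ m1) (h2 : 3 ∣ m2) (t : ℕ) :
    (route s g c t).1 < m1 ∧ (route s g c t).2 < m2 := by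
  have hw : ∀ x : ℕ, x % 3 < 3 := fun x => Nat.mod_lt x three_pos
  refine splice_mem (S := {u : ℕ × ℕ | u.1 < m1 ∧ u.2 < m2}) (fun k => ?_)
    (splice_mem (fun k => ?_) (splice_mem (fun k => ?_) fun k => ?_)) t
  · exact band_laneRoute_lt (by omega) (by omega) (hw _) c.isLt
  · exact (band_laneRoute_lt (by omega) (by omega) (hw _) (by omega)).symm
  · exact band_laneRoute_lt (by omega) (by omega) (hw _) (by omega)
  · exact band_laneRoute_lt (by omega) (by omega) (hw _) (by omega)

theorem isLazyWalk_route (h1 : 3 ∣ m1) (h2 : 3 ∣ m2) : IsLazyWalk LatticeAdj (route s g c) := by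
  have hband : ∀ b u v, LatticeAdj u v → LatticeAdj (band b u) (band b v) :=
    fun b _ _ => LatticeAdj.band b
  have hswap : ∀ u v, LatticeAdj u v → LatticeAdj (Prod.swap u) (Prod.swap v) :=
    fun _ _ => LatticeAdj.swap
  have hw : ∀ x : ℕ, x % 3 < 3 := fun x => Nat.mod_lt x three_pos
  exact ((isLazyWalk_laneRoute (hw _)).comp (hband _)).splice
    ((((isLazyWalk_laneRoute (hw _)).comp (hband _)).comp hswap).splice
      (((isLazyWalk_laneRoute (hw _)).comp (hband _)).splice
        (((isLazyWalk_laneRoute (hw _)).reverse (fun _ _ => LatticeAdj.symm) 3).comp (hband _))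
        (goalBandLeg_end h2))
      ((columnBandLeg_end h1).trans splice_zero.symm))
    ((startBandLeg_end h2).trans splice_zero.symm)

theorem avoids_route (h1 : 3 ∣ m1) (h2 : 3 ∣ m2) (hs : s ≠ s') (hg : g ≠ g')
    (hsm : (s.2 : ℕ) % 3 = 1) (hsm' : (s'.2 : ℕ) % 3 = 1) (hgm : (g.2 : ℕ) % 3 = 1)
    (hgm' : (g'.2 : ℕ) % 3 = 1) (hcs : rowBlock s = rowBlock s' → c ≠ c')
    (hcg : rowBlock g = rowBlock g' → c ≠ c') : Avoids (route s g c) (route s' g' c') := by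
  simp only [ne_eq, Prod.ext_iff, Fin.ext_iff, rowBlock] at hs hg hcs hcg
  have hw : ∀ x : ℕ, x % 3 < 3 := fun x => Nat.mod_lt x three_pos
  have hlane : ∀ {a w D k}, (laneRoute a (w % 3) D k).1 < 3 := laneRoute_fst_lt (hw _) _
  have hstart : Avoids (startBandLeg s c) (startBandLeg s' c') :=
    avoids_band (fun _ => hlane) (fun _ => hlane) fun _ =>
      avoids_laneRoute (hw _) (hw _) (by simp only [ne_eq, Prod.mk.injEq]; omega) (by omega)
  have hcolumn : Avoids (columnBandLeg s g c) (columnBandLeg s' g' c') :=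
    (avoids_band (fun _ => hlane) (fun _ => hlane) fun _ =>
      avoids_laneRoute (hw _) (hw _) (by simp only [ne_eq, Prod.mk.injEq]; omega)
        (by omega)).comp Prod.swap_injective
  have hgoal : Avoids (goalBandLeg g c) (goalBandLeg g' c') :=
    avoids_band (fun _ => hlane) (fun _ => hlane) fun _ =>
      avoids_laneRoute (hw _) (hw _) (by simp only [ne_eq, Prod.mk.injEq]; omega) (by omega)
  have harrival : Avoids (arrivalLeg g) (arrivalLeg g') :=
    avoids_band (fun _ => hlane) (fun _ => hlane) fun _ =>
      (avoids_laneRoute (hw _) (hw _) (by simp only [ne_eq, Prod.mk.injEq]; omega)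
        (by omega)).reverse 3
  exact hstart.splice
    (hcolumn.splice (hgoal.splice harrival (goalBandLeg_end h2) (goalBandLeg_end h2))
      ((columnBandLeg_end h1).trans splice_zero.symm)
      ((columnBandLeg_end h1).trans splice_zero.symm))
    ((startBandLeg_end h2).trans splice_zero.symm) ((startBandLeg_end h2).trans splice_zero.symm)

end Route

theorem exists_feasiblePathSet_of_lattice {m1 m2 n T : ℕ} {s g : Fin n → Fin m1 × Fin m2}
    (p : Fin n → ℕ → ℕ × ℕ) (hlt : ∀ i t, (p i t).1 < m1 ∧ (p i t).2 < m2)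
    (hstart : ∀ i, p i 0 = toLattice (s i)) (hgoal : ∀ i t, T ≤ t → p i t = toLattice (g i))
    (hwalk : ∀ i, IsLazyWalk LatticeAdj (p i)) (havoid : Pairwise fun i j => Avoids (p i) (p j)) :
    ∃ P, FeasiblePathSet s g P ∧ MakespanLE g P T := by
  let P : Fin n → ℕ → Fin m1 × Fin m2 :=
    fun i t => (⟨(p i t).1, (hlt i t).1⟩, ⟨(p i t).2, (hlt i t).2⟩)
  have hP : ∀ i t, toLattice (P i t) = p i t := fun _ _ => rfl
  have hgoalP : ∀ i t, T ≤ t → P i t = g i := fun i t ht =>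
    toLattice_injective ((hP i t).trans (hgoal i t ht))
  refine ⟨P, ⟨fun i => toLattice_injective ((hP i 0).trans (hstart i)), ?_,
    fun i => ⟨T, hgoalP i⟩, ?_, ?_⟩, hgoalP⟩
  · rintro i (_ | t) ht
    · exact absurd ht (lt_irrefl 0)
    · exact (hwalk i t).imp (fun h => toLattice_injective h) id
  · exact fun t i j hij h => (havoid hij t).1 (congrArg toLattice h)
  · exact fun t i j hij h => (havoid hij t).2 ⟨congrArg toLattice h.1, congrArg toLattice h.2⟩

end GridRouting

open GridRouting

/-- Deterministic core of GRH: there is a universal constant `C` such that on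
any `m1 × m2` grid with `m1 ≥ m2` positive multiples of `3`, every MAPF
instance whose starts and goals all lie on the middle columns of the `3×3`
cells (column coordinate `≡ 1 (mod 3)`) admits a feasible path set with
makespan at most `m1 + 2 m2 + C`. -/
theorem grh_centered_instances_makespan :
    ∃ C : ℕ, ∀ m1 m2 n : ℕ, m2 ≤ m1 → 0 < m2 → 3 ∣ m1 → 3 ∣ m2 → 1 ≤ n →
      ∀ s g : Fin n → Fin m1 × Fin m2,
        Function.Injective s → Function.Injective g →
        (∀ i, ((s i).2 : ℕ) % 3 = 1) → (∀ i, ((g i).2 : ℕ) % 3 = 1) →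
        ∃ P : Fin n → ℕ → Fin m1 × Fin m2,
          FeasiblePathSet s g P ∧ MakespanLE g P (m1 + 2 * m2 + C) := by
  refine ⟨12, fun m1 m2 n _ _ h1 h2 _ s g hs hg hsm hgm => ?_⟩
  obtain ⟨c, hcs, hcg⟩ := exists_edge_coloring (rowBlock ∘ s) (rowBlock ∘ g)
    (card_rowBlock_le h2 hs hsm) (card_rowBlock_le h2 hg hgm)
  refine exists_feasiblePathSet_of_lattice (fun i => route (s i) (g i) (c i))
    (fun i => route_lt h1 h2) (fun i => route_zero (hsm i)) (fun i t => route_of_ge (hgm i))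
    (fun i => isLazyWalk_route h1 h2) fun i j hij => ?_
  exact avoids_route h1 h2 (hs.ne hij) (hg.ne hij) (hsm i) (hsm j) (hgm i) (hgm j)
    (fun h => mt (hcs i j h) hij) (fun h => mt (hcg i j h) hij)
end

section
/- (Grid Rearrangement Theorem in 3D.) Let m1 ≥ m2 ≥ m3 ≥ 1. Every permutation σ of Fin m1 × Fin m2 × Fin m3 can be written as σ = ζ2 ∘ υ2 ∘ ξ ∘ υ1 ∘ ζ1, where ζ1 and ζ2 are z-shuffle permutations (they fix the first and second coordinates of every point), υ1 and υ2 are y-shuffle permutations (they fix the first and third coordinates), and ξ is an x-shuffle permutation (it fixes the second and third coordinates). This realizes the solution of the labeled 3D Grid Rearrangement problem by m1·m2 z-shuffles, then per-plane 2D rearrangements consisting of y-shuffles and x-shuffles, then another m1·m2 z-shuffles. -/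
/-- An x-shuffle permutation of the `m1 × m2 × m3` table: it changes only the
first coordinate of every point (fixing the second and third coordinates). -/
def IsXShuffle {m1 m2 m3 : ℕ} (ξ : Equiv.Perm (Fin m1 × Fin m2 × Fin m3)) : Prop :=
  ∀ p, (ξ p).2 = p.2

/-- A y-shuffle permutation of the `m1 × m2 × m3` table: it changes only the
second coordinate of every point (fixing the first and third coordinates). -/
def IsYShuffle {m1 m2 m3 : ℕ} (υ : Equiv.Perm (Fin m1 × Fin m2 × Fin m3)) : Prop :=
  ∀ p, (υ p).1 = p.1 ∧ (υ p).2.2 = p.2.2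

/-- A z-shuffle permutation of the `m1 × m2 × m3` table: it changes only the
third coordinate of every point (fixing the first and second coordinates). -/
def IsZShuffle {m1 m2 m3 : ℕ} (ζ : Equiv.Perm (Fin m1 × Fin m2 × Fin m3)) : Prop :=
  ∀ p, (ζ p).1 = p.1 ∧ (ζ p).2.1 = p.2.1

section GRTAux
open Finset
variable {A B : Type*} [Fintype A] [DecidableEq A] [Fintype B] [DecidableEq B]
set_option linter.unusedSectionVars false

lemma grt_exists_matching (σ : Equiv.Perm (A × B)) (S : Finset (A × B)) (k : ℕ) (hk : 0 < k)
    (hcol : ∀ a, (S.filter (fun p => p.1 = a)).card = k)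
    (hrow : ∀ a, (S.filter (fun p => (σ p).1 = a)).card = k) :
    ∃ f : A → A × B, (∀ a, f a ∈ S) ∧ (∀ a, (f a).1 = a) ∧
      Function.Injective (fun a => (σ (f a)).1) := by
  classical
  set t : A → Finset A := fun a => (S.filter (fun p => p.1 = a)).image (fun p => (σ p).1) with ht
  have hall : ∀ s : Finset A, s.card ≤ (s.biUnion t).card := by
    intro s
    have hU : (S.filter (fun p => p.1 ∈ s)) ⊆
        (s.biUnion t).biUnion (fun a' => S.filter (fun p => (σ p).1 = a')) := by
      intro p hp
      simp only [mem_filter] at hp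
      apply mem_biUnion.2
      refine ⟨(σ p).1, ?_, by simp [hp.1]⟩
      apply mem_biUnion.2
      exact ⟨p.1, hp.2, mem_image.2 ⟨p, by simp [hp.1], rfl⟩⟩
    have hcard1 : (S.filter (fun p => p.1 ∈ s)).card = k * s.card := by
      have : (S.filter (fun p => p.1 ∈ s)) = s.biUnion (fun a => S.filter (fun p => p.1 = a)) := by
        ext p; simp only [mem_filter, mem_biUnion]
        constructor
        · rintro ⟨hp, hs⟩; exact ⟨p.1, hs, hp, rfl⟩
        · rintro ⟨a, ha, hp, rfl⟩; exact ⟨hp, ha⟩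
      rw [this, card_biUnion]
      · simp [hcol, mul_comm]
      · intro x hx y hy hxy
        simp only [disjoint_left, mem_filter]
        rintro p ⟨_, rfl⟩ ⟨_, h⟩; exact hxy h
    have hcard2 : ((s.biUnion t).biUnion (fun a' => S.filter (fun p => (σ p).1 = a'))).card
        ≤ k * (s.biUnion t).card := by
      calc ((s.biUnion t).biUnion (fun a' => S.filter (fun p => (σ p).1 = a'))).card
          ≤ ∑ a' ∈ s.biUnion t, (S.filter (fun p => (σ p).1 = a')).card := card_biUnion_le
        _ = k * (s.biUnion t).card := by simp [hrow, mul_comm]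
    have := (card_le_card hU).trans hcard2
    rw [hcard1] at this
    exact Nat.le_of_mul_le_mul_left this hk
  obtain ⟨g, hginj, hg⟩ := (Finset.all_card_le_biUnion_card_iff_exists_injective t).mp hall
  have hrep : ∀ a, ∃ p, (p ∈ S ∧ p.1 = a) ∧ (σ p).1 = g a := by
    intro a
    obtain ⟨p, hp, hp2⟩ := mem_image.mp (hg a)
    exact ⟨p, by simpa using mem_filter.mp hp, hp2⟩
  choose f hf1 hf2 using hrep
  refine ⟨f, fun a => (hf1 a).1, fun a => (hf1 a).2, ?_⟩
  intro a a' h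
  apply hginj
  simpa [hf2] using h


lemma grt_exists_partition (σ : Equiv.Perm (A × B)) (k : ℕ) (S : Finset (A × B))
    (hcol : ∀ a, (S.filter (fun p => p.1 = a)).card = k)
    (hrow : ∀ a, (S.filter (fun p => (σ p).1 = a)).card = k) :
    ∃ c : A × B → ℕ, (∀ p ∈ S, c p < k) ∧
      (∀ i < k, ∀ a, (S.filter (fun p => c p = i ∧ p.1 = a)).card = 1) ∧
      (∀ i < k, ∀ a, (S.filter (fun p => c p = i ∧ (σ p).1 = a)).card = 1) := by
  classical
  induction k generalizing S with
  | zero =>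
    refine ⟨fun _ => 0, ?_, fun i hi => absurd hi (by omega), fun i hi => absurd hi (by omega)⟩
    intro p hp
    exfalso
    have := hcol p.1
    rw [Finset.card_eq_zero] at this
    exact absurd (this ▸ (mem_filter.mpr ⟨hp, rfl⟩)) (notMem_empty p)
  | succ k ih =>
    obtain ⟨f, hfS, hf1, hfinj⟩ := grt_exists_matching σ S (k+1) (Nat.succ_pos k) hcol hrow
    have hbij : Function.Bijective (fun a => (σ (f a)).1) :=
      Finite.injective_iff_bijective.mp hfinj
    set M : Finset (A × B) := Finset.univ.image f with hM
    have hmemM : ∀ p : A × B, p ∈ M ↔ p = f p.1 := by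
      intro p
      simp only [hM, mem_image, mem_univ, true_and]
      constructor
      · rintro ⟨a, rfl⟩; rw [hf1]
      · intro h; exact ⟨p.1, h.symm⟩
    have hfaM : ∀ a, f a ∈ M := fun a => (hmemM (f a)).mpr (by rw [hf1])
    set S' := S \ M with hS'
    have hcol' : ∀ a, (S'.filter (fun p => p.1 = a)).card = k := by
      intro a
      have heq : S.filter (fun p => p.1 = a) = insert (f a) (S'.filter (fun p => p.1 = a)) := by
        ext p
        simp only [mem_filter, mem_insert, hS', mem_sdiff]
        constructor
        · rintro ⟨hp, rfl⟩
          by_cases hm : p ∈ M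
          · left; exact (hmemM p).mp hm
          · right; exact ⟨⟨hp, hm⟩, rfl⟩
        · rintro (rfl | ⟨⟨hp, _⟩, rfl⟩)
          · exact ⟨hfS a, hf1 a⟩
          · exact ⟨hp, rfl⟩
      have hnot : f a ∉ S'.filter (fun p => p.1 = a) := by
        intro h
        exact (mem_sdiff.mp (mem_filter.mp h).1).2 (hfaM a)
      have := hcol a
      rw [heq, card_insert_of_notMem hnot] at this
      omega
    have hrow' : ∀ a, (S'.filter (fun p => (σ p).1 = a)).card = k := by
      intro a
      obtain ⟨a0, ha0⟩ := hbij.surjective a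
      have ha0' : (σ (f a0)).1 = a := ha0
      have heq : S.filter (fun p => (σ p).1 = a)
          = insert (f a0) (S'.filter (fun p => (σ p).1 = a)) := by
        ext p
        simp only [mem_filter, mem_insert, hS', mem_sdiff]
        constructor
        · rintro ⟨hp, hpa⟩
          by_cases hm : p ∈ M
          · left
            have hpf : p = f p.1 := (hmemM p).mp hm
            have h2 : (σ (f p.1)).1 = (σ (f a0)).1 := by rw [← hpf, hpa, ha0']
            rw [hpf, hfinj h2]
          · right; exact ⟨⟨hp, hm⟩, hpa⟩
        · rintro (rfl | ⟨⟨hp, _⟩, hpa⟩)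
          · exact ⟨hfS a0, ha0'⟩
          · exact ⟨hp, hpa⟩
      have hnot : f a0 ∉ S'.filter (fun p => (σ p).1 = a) := by
        intro h
        exact (mem_sdiff.mp (mem_filter.mp h).1).2 (hfaM a0)
      have := hrow a
      rw [heq, card_insert_of_notMem hnot] at this
      omega
    obtain ⟨c, hlt, hc1, hc2⟩ := ih S' hcol' hrow'
    refine ⟨fun p => if p ∈ M then k else c p, ?_, ?_, ?_⟩
    · intro p hp
      show (if p ∈ M then k else c p) < k + 1
      by_cases hm : p ∈ M
      · rw [if_pos hm]; omega
      · rw [if_neg hm]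
        exact Nat.lt_succ_of_lt (hlt p (mem_sdiff.mpr ⟨hp, hm⟩))
    · intro i hi a
      by_cases hik : i = k
      · have : S.filter (fun p => (if p ∈ M then k else c p) = i ∧ p.1 = a) = {f a} := by
          ext p
          simp only [mem_filter, mem_singleton]
          constructor
          · rintro ⟨hp, hck, rfl⟩
            by_cases hm : p ∈ M
            · exact (hmemM p).mp hm
            · rw [if_neg hm] at hck
              have := hlt p (mem_sdiff.mpr ⟨hp, hm⟩)
              omega
          · rintro rfl
            refine ⟨hfS a, ?_, hf1 a⟩
            rw [if_pos (hfaM a)]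
            omega
        rw [this, card_singleton]
      · have hik' : i < k := by omega
        have : S.filter (fun p => (if p ∈ M then k else c p) = i ∧ p.1 = a)
            = S'.filter (fun p => c p = i ∧ p.1 = a) := by
          ext p
          simp only [mem_filter, hS', mem_sdiff]
          constructor
          · rintro ⟨hp, hci, rfl⟩
            by_cases hm : p ∈ M
            · rw [if_pos hm] at hci; omega
            · rw [if_neg hm] at hci; exact ⟨⟨hp, hm⟩, hci, rfl⟩
          · rintro ⟨⟨hp, hm⟩, hci, rfl⟩
            exact ⟨hp, by rw [if_neg hm]; exact hci, rfl⟩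
        rw [this]; exact hc1 i hik' a
    · intro i hi a
      by_cases hik : i = k
      · obtain ⟨a0, ha0⟩ := hbij.surjective a
        have ha0' : (σ (f a0)).1 = a := ha0
        have : S.filter (fun p => (if p ∈ M then k else c p) = i ∧ (σ p).1 = a) = {f a0} := by
          ext p
          simp only [mem_filter, mem_singleton]
          constructor
          · rintro ⟨hp, hck, hpa⟩
            by_cases hm : p ∈ M
            · have hpf : p = f p.1 := (hmemM p).mp hm
              have h2 : (σ (f p.1)).1 = (σ (f a0)).1 := by rw [← hpf, hpa, ha0']
              rw [hpf, hfinj h2]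
            · rw [if_neg hm] at hck
              have := hlt p (mem_sdiff.mpr ⟨hp, hm⟩)
              omega
          · rintro rfl
            refine ⟨hfS a0, ?_, ha0'⟩
            rw [if_pos (hfaM a0)]
            omega
        rw [this, card_singleton]
      · have hik' : i < k := by omega
        have : S.filter (fun p => (if p ∈ M then k else c p) = i ∧ (σ p).1 = a)
            = S'.filter (fun p => c p = i ∧ (σ p).1 = a) := by
          ext p
          simp only [mem_filter, hS', mem_sdiff]
          constructor
          · rintro ⟨hp, hci, hpa⟩
            by_cases hm : p ∈ M
            · rw [if_pos hm] at hci; omega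
            · rw [if_neg hm] at hci; exact ⟨⟨hp, hm⟩, hci, hpa⟩
          · rintro ⟨⟨hp, hm⟩, hci, hpa⟩
            exact ⟨hp, by rw [if_neg hm]; exact hci, hpa⟩
        rw [this]; exact hc2 i hik' a

lemma grt_perm_prod_decomp (σ : Equiv.Perm (A × B)) :
    ∃ b1 b2 ξ : Equiv.Perm (A × B),
      (∀ p, (b1 p).1 = p.1) ∧ (∀ p, (b2 p).1 = p.1) ∧ (∀ p, (ξ p).2 = p.2) ∧
      ∀ p, σ p = b2 (ξ (b1 p)) := by
  classical
  set n := Fintype.card B with hn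
  have hcol : ∀ a : A, ((univ : Finset (A × B)).filter (fun p => p.1 = a)).card = n := by
    intro a
    have heq : (univ.filter fun p : A × B => p.1 = a) = univ.image (fun b => (a, b)) := by
      ext p
      simp only [mem_filter, mem_univ, true_and, mem_image]
      constructor
      · rintro rfl; exact ⟨p.2, rfl⟩
      · rintro ⟨b, rfl⟩; rfl
    rw [heq, card_image_of_injective _ (fun b b' h => congrArg Prod.snd h), card_univ]
  have hrow : ∀ a : A, ((univ : Finset (A × B)).filter (fun p => (σ p).1 = a)).card = n := by
    intro a
    have heq : (univ.filter fun p : A × B => (σ p).1 = a)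
        = (univ.filter fun p : A × B => p.1 = a).image σ.symm := by
      ext p
      simp only [mem_filter, mem_univ, true_and, mem_image]
      constructor
      · intro h; exact ⟨σ p, h, σ.symm_apply_apply p⟩
      · rintro ⟨q, hq, rfl⟩; simpa using hq
    rw [heq, card_image_of_injective _ σ.symm.injective, hcol]
  obtain ⟨c, hlt, hc1, hc2⟩ := grt_exists_partition σ n univ hcol hrow
  set e : B ≃ Fin n := Fintype.equivFin B with he
  set C : A × B → B := fun p => e.symm ⟨c p, hlt p (mem_univ p)⟩ with hC
  have key : ∀ (p : A × B) (b : B), C p = b ↔ c p = (e b).1 := by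
    intro p b
    rw [hC]
    rw [← Equiv.apply_eq_iff_eq e, Equiv.apply_symm_apply, Fin.ext_iff]
  have hC1 : ∀ (a : A) (b : B), ((univ : Finset (A × B)).filter
      (fun p => C p = b ∧ p.1 = a)).card = 1 := by
    intro a b
    have heq : (univ : Finset (A × B)).filter (fun p => C p = b ∧ p.1 = a)
        = (univ : Finset (A × B)).filter (fun p => c p = (e b).1 ∧ p.1 = a) := by
      ext p; simp only [mem_filter, key]
    rw [heq]; exact hc1 (e b).1 (e b).isLt a
  have hC2 : ∀ (a : A) (b : B), ((univ : Finset (A × B)).filter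
      (fun p => C p = b ∧ (σ p).1 = a)).card = 1 := by
    intro a b
    have heq : (univ : Finset (A × B)).filter (fun p => C p = b ∧ (σ p).1 = a)
        = (univ : Finset (A × B)).filter (fun p => c p = (e b).1 ∧ (σ p).1 = a) := by
      ext p; simp only [mem_filter, key]
    rw [heq]; exact hc2 (e b).1 (e b).isLt a
  -- representatives
  have hrep0 : ∀ (a : A) (b : B), ∃ q : A × B, (univ : Finset (A × B)).filter
      (fun p => C p = b ∧ p.1 = a) = {q} := fun a b => Finset.card_eq_one.mp (hC1 a b)
  choose rep hrep using hrep0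
  have hrepmem : ∀ a b, C (rep a b) = b ∧ (rep a b).1 = a := by
    intro a b
    have : rep a b ∈ (univ : Finset (A × B)).filter (fun p => C p = b ∧ p.1 = a) := by
      rw [hrep a b]; exact mem_singleton_self _
    exact (mem_filter.mp this).2
  have huniq : ∀ (a : A) (b : B) (p : A × B), C p = b → p.1 = a → p = rep a b := by
    intro a b p h1 h2
    have : p ∈ (univ : Finset (A × B)).filter (fun p => C p = b ∧ p.1 = a) :=
      mem_filter.mpr ⟨mem_univ p, h1, h2⟩
    rw [hrep a b] at this; exact mem_singleton.mp this
  have hrepp : ∀ p : A × B, rep p.1 (C p) = p := fun p => (huniq p.1 (C p) p rfl rfl).symm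
  have hrowuniq : ∀ p q : A × B, C p = C q → (σ p).1 = (σ q).1 → p = q := by
    intro p q h1 h2
    have hcard := Finset.card_le_one.mp (le_of_eq (hC2 (σ q).1 (C q)))
    exact hcard p (mem_filter.mpr ⟨mem_univ p, h1, h2⟩)
      q (mem_filter.mpr ⟨mem_univ q, rfl, rfl⟩)
  -- the three permutations
  have hb1inj : Function.Injective (fun p : A × B => (p.1, C p)) := by
    intro p q h
    simp only [Prod.mk.injEq] at h
    rw [← hrepp p, ← hrepp q, h.1, h.2]
  set b1e : Equiv.Perm (A × B) :=
    Equiv.ofBijective _ (Finite.injective_iff_bijective.mp hb1inj) with hb1e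
  have hxiinj : Function.Injective (fun q : A × B => ((σ (rep q.1 q.2)).1, q.2)) := by
    intro q q' h
    simp only [Prod.mk.injEq] at h
    obtain ⟨h1, h2⟩ := h
    have hr : rep q.1 q.2 = rep q'.1 q'.2 := by
      apply hrowuniq
      · rw [(hrepmem q.1 q.2).1, (hrepmem q'.1 q'.2).1, h2]
      · rw [h1]
    have := congrArg Prod.fst hr
    rw [(hrepmem q.1 q.2).2, (hrepmem q'.1 q'.2).2] at this
    exact Prod.ext this h2
  set xie : Equiv.Perm (A × B) :=
    Equiv.ofBijective _ (Finite.injective_iff_bijective.mp hxiinj) with hxie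
  set b2e : Equiv.Perm (A × B) := (b1e.trans xie).symm.trans σ with hb2e
  have hb1app : ∀ p, b1e p = (p.1, C p) := fun p => rfl
  have hxiapp : ∀ q, xie q = ((σ (rep q.1 q.2)).1, q.2) := fun q => rfl
  have hcomp : ∀ p, xie (b1e p) = ((σ p).1, C p) := by
    intro p
    rw [hb1app, hxiapp]
    simp only
    rw [hrepp p]
  have hdecomp : ∀ p, σ p = b2e (xie (b1e p)) := by
    intro p
    rw [hb2e]
    simp only [Equiv.trans_apply]
    rw [show xie (b1e p) = (b1e.trans xie) p from rfl, Equiv.symm_apply_apply]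
  refine ⟨b1e, b2e, xie, fun p => by rw [hb1app], ?_, fun q => by rw [hxiapp], hdecomp⟩
  intro q
  have hq : (b1e.trans xie) ((b1e.trans xie).symm q) = q := Equiv.apply_symm_apply _ q
  set p := (b1e.trans xie).symm q with hp
  have hq2 : q = ((σ p).1, C p) := by
    rw [← hq, show (b1e.trans xie) p = xie (b1e p) from rfl, hcomp]
  have hb2q : b2e q = σ p := by rw [hb2e]; rfl
  rw [hb2q, hq2]

end GRTAux

/-- Assemble a family of per-level 2D permutations into a 3D permutation. -/
lemma grt_assemble {m1 m2 m3 : ℕ} (ρ : Fin m3 → Equiv.Perm (Fin m1 × Fin m2)) :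
    ∃ P : Equiv.Perm (Fin m1 × Fin m2 × Fin m3),
      ∀ p, P p = ((ρ p.2.2 (p.1, p.2.1)).1, (ρ p.2.2 (p.1, p.2.1)).2, p.2.2) := by
  have hinj : Function.Injective
      (fun p : Fin m1 × Fin m2 × Fin m3 =>
        ((ρ p.2.2 (p.1, p.2.1)).1, (ρ p.2.2 (p.1, p.2.1)).2, p.2.2)) := by
    intro p q h
    simp only [Prod.mk.injEq] at h
    obtain ⟨h1, h2, h3⟩ := h
    have hq : ρ p.2.2 (p.1, p.2.1) = ρ q.2.2 (q.1, q.2.1) := Prod.ext h1 h2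
    rw [h3] at hq
    have h5 := (ρ q.2.2).injective hq
    simp only [Prod.mk.injEq] at h5
    exact Prod.ext h5.1 (Prod.ext h5.2 h3)
  exact ⟨Equiv.ofBijective _ (Finite.injective_iff_bijective.mp hinj), fun p => rfl⟩


/-- Grid Rearrangement Theorem in 3D: every permutation of the cells of an
`m1 × m2 × m3` table factors as z-shuffles, then y-shuffles, then x-shuffles,
then y-shuffles, then z-shuffles. -/
theorem grid_rearrangement_3d
    (m1 m2 m3 : ℕ) (h32 : m3 ≤ m2) (h21 : m2 ≤ m1) (h3 : 1 ≤ m3)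
    (σ : Equiv.Perm (Fin m1 × Fin m2 × Fin m3)) :
    ∃ ζ1 ζ2 υ1 υ2 ξ : Equiv.Perm (Fin m1 × Fin m2 × Fin m3),
      IsZShuffle ζ1 ∧ IsZShuffle ζ2 ∧ IsYShuffle υ1 ∧ IsYShuffle υ2 ∧ IsXShuffle ξ ∧
      ∀ p, σ p = ζ2 (υ2 (ξ (υ1 (ζ1 p)))) := by
  classical
  set E : (Fin m1 × Fin m2 × Fin m3) ≃ ((Fin m1 × Fin m2) × Fin m3) :=
    (Equiv.prodAssoc (Fin m1) (Fin m2) (Fin m3)).symm with hE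
  have hEapp : ∀ p : Fin m1 × Fin m2 × Fin m3, E p = ((p.1, p.2.1), p.2.2) := fun p => rfl
  have hEsymm : ∀ q : (Fin m1 × Fin m2) × Fin m3, E.symm q = (q.1.1, q.1.2, q.2) := fun q => rfl
  set σ' : Equiv.Perm ((Fin m1 × Fin m2) × Fin m3) := (E.symm.trans σ).trans E with hσ'
  have hσ'app : ∀ q, σ' q = E (σ (E.symm q)) := fun q => rfl
  obtain ⟨b1, b2, ξ', hb1, hb2, hξ', hdec1⟩ := grt_perm_prod_decomp σ'
  set ζ1 : Equiv.Perm (Fin m1 × Fin m2 × Fin m3) := (E.trans b1).trans E.symm with hζ1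
  set ζ2 : Equiv.Perm (Fin m1 × Fin m2 × Fin m3) := (E.trans b2).trans E.symm with hζ2
  set τ : Equiv.Perm (Fin m1 × Fin m2 × Fin m3) := (E.trans ξ').trans E.symm with hτ
  have hζ1app : ∀ p, ζ1 p = E.symm (b1 (E p)) := fun p => rfl
  have hζ2app : ∀ p, ζ2 p = E.symm (b2 (E p)) := fun p => rfl
  have hτapp : ∀ p, τ p = E.symm (ξ' (E p)) := fun p => rfl
  have hζ1z : IsZShuffle ζ1 := by
    intro p
    refine ⟨?_, ?_⟩
    · show (b1 (E p)).1.1 = p.1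
      rw [hb1 (E p), hEapp p]
    · show (b1 (E p)).1.2 = p.2.1
      rw [hb1 (E p), hEapp p]
  have hζ2z : IsZShuffle ζ2 := by
    intro p
    refine ⟨?_, ?_⟩
    · show (b2 (E p)).1.1 = p.1
      rw [hb2 (E p), hEapp p]
    · show (b2 (E p)).1.2 = p.2.1
      rw [hb2 (E p), hEapp p]
  have hτz : ∀ p, (τ p).2.2 = p.2.2 := by
    intro p
    show (ξ' (E p)).2 = p.2.2
    rw [hξ' (E p), hEapp p]
  have hstep1 : ∀ p, σ p = ζ2 (τ (ζ1 p)) := by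
    intro p
    have h := hdec1 (E p)
    rw [hσ'app, Equiv.symm_apply_apply] at h
    rw [hζ2app, hτapp, hζ1app, Equiv.apply_symm_apply, Equiv.apply_symm_apply, ← h,
      Equiv.symm_apply_apply]
  -- per-level permutations of τ
  have hτinj : ∀ z : Fin m3, Function.Injective
      (fun q : Fin m1 × Fin m2 => ((τ (q.1, q.2, z)).1, (τ (q.1, q.2, z)).2.1)) := by
    intro z q q' h
    simp only [Prod.mk.injEq] at h
    have h3 : (τ (q.1, q.2, z)).2.2 = (τ (q'.1, q'.2, z)).2.2 := by
      rw [hτz (q.1, q.2, z), hτz (q'.1, q'.2, z)]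
    have heq : τ (q.1, q.2, z) = τ (q'.1, q'.2, z) :=
      Prod.ext h.1 (Prod.ext h.2 h3)
    have := τ.injective heq
    simp only [Prod.mk.injEq] at this
    exact Prod.ext this.1 this.2.1
  set τz : Fin m3 → Equiv.Perm (Fin m1 × Fin m2) :=
    fun z => Equiv.ofBijective _ (Finite.injective_iff_bijective.mp (hτinj z)) with hτzdef
  have hτzapp : ∀ (z : Fin m3) (q : Fin m1 × Fin m2),
      τz z q = ((τ (q.1, q.2, z)).1, (τ (q.1, q.2, z)).2.1) := fun z q => rfl
  have hτsplit : ∀ p, τ p = ((τz p.2.2 (p.1, p.2.1)).1, (τz p.2.2 (p.1, p.2.1)).2, p.2.2) := by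
    intro p
    rw [hτzapp]
    have hp : (p.1, (p.1, p.2.1).2, p.2.2) = p := rfl
    simp only
    rw [hp]
    exact Prod.ext rfl (Prod.ext rfl (hτz p))
  -- decompose each level
  obtain ⟨u1, u2, x, hu1, hu2, hx, hdec2⟩ :
      ∃ u1 u2 x : Fin m3 → Equiv.Perm (Fin m1 × Fin m2),
        (∀ z q, ((u1 z) q).1 = q.1) ∧ (∀ z q, ((u2 z) q).1 = q.1) ∧
        (∀ z q, ((x z) q).2 = q.2) ∧ ∀ z q, (τz z) q = (u2 z) ((x z) ((u1 z) q)) := by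
    have h := fun z => grt_perm_prod_decomp (τz z)
    choose u1 u2 x h1 h2 h3 h4 using h
    exact ⟨u1, u2, x, h1, h2, h3, h4⟩
  obtain ⟨υ1, hυ1⟩ := grt_assemble u1
  obtain ⟨υ2, hυ2⟩ := grt_assemble u2
  obtain ⟨ξb, hξb⟩ := grt_assemble x
  refine ⟨ζ1, ζ2, υ1, υ2, ξb, hζ1z, hζ2z, ?_, ?_, ?_, ?_⟩
  · intro p
    rw [hυ1]
    exact ⟨hu1 p.2.2 (p.1, p.2.1), rfl⟩
  · intro p
    rw [hυ2]
    exact ⟨hu2 p.2.2 (p.1, p.2.1), rfl⟩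
  · intro p
    rw [hξb]
    exact Prod.ext (hx p.2.2 (p.1, p.2.1)) rfl
  · intro p
    rw [hstep1 p]
    congr 1
    -- show τ (ζ1 p) = υ2 (ξb (υ1 (ζ1 p)))
    generalize ζ1 p = w
    rw [hτsplit w, hυ1 w]
    have e1 : ξb ((u1 w.2.2 (w.1, w.2.1)).1, (u1 w.2.2 (w.1, w.2.1)).2, w.2.2)
        = ((x w.2.2 (u1 w.2.2 (w.1, w.2.1))).1, (x w.2.2 (u1 w.2.2 (w.1, w.2.1))).2, w.2.2) := by
      rw [hξb]
    rw [e1]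
    have e2 : υ2 ((x w.2.2 (u1 w.2.2 (w.1, w.2.1))).1, (x w.2.2 (u1 w.2.2 (w.1, w.2.1))).2, w.2.2)
        = ((u2 w.2.2 (x w.2.2 (u1 w.2.2 (w.1, w.2.1)))).1,
           (u2 w.2.2 (x w.2.2 (u1 w.2.2 (w.1, w.2.1)))).2, w.2.2) := by
      rw [hυ2]
    rw [e2, hdec2]
end

section
/- (Grid Rearrangement in k dimensions.) Let k ≥ 1 and let m : Fin k → ℕ with m i ≥ 1 for all i. Every permutation σ of the product Π_{i < k} Fin (m i) can be written as a composition σ = τ_{2k−1} ∘ ⋯ ∘ τ_2 ∘ τ_1 of 2k − 1 permutations, where τ_j changes only coordinate d_j of every point (it fixes all other coordinates pointwise), and the sequence of axes is palindromic: (d_1, d_2, …, d_{2k−1}) = (k, k−1, …, 2, 1, 2, …, k−1, k) (coordinates indexed 1 through k). -/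
open Finset in
theorem my_coloring {B : Type} [Fintype B] [DecidableEq B] :
    ∀ (n : ℕ) (E : Type) [Fintype E] [DecidableEq E] (f g : E → B),
    (∀ b, (univ.filter (fun e => f e = b)).card = n) →
    (∀ b, (univ.filter (fun e => g e = b)).card = n) →
    ∃ c : E → Fin n, Function.Injective (fun e => (c e, f e)) ∧
      Function.Injective (fun e => (c e, g e)) := by
  intro n
  induction n with
  | zero =>
    intro E _ _ f g hf _
    have hE : IsEmpty E := by
      constructor
      intro e
      have h1 := hf (f e)
      have h2 : e ∈ univ.filter (fun e' => f e' = f e) := by simp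
      rw [Finset.card_eq_zero] at h1
      simp [h1] at h2
    exact ⟨fun e => (hE.false e).elim, fun a => (hE.false a).elim,
      fun a => (hE.false a).elim⟩
  | succ n ih =>
    intro E _ _ f g hf hg
    -- Hall's condition for the sets t b = g-images of the f-fiber of b
    set t : B → Finset B := fun b => (univ.filter (fun e => f e = b)).image g with ht
    have hall : ∀ s : Finset B, s.card ≤ (s.biUnion t).card := by
      intro s
      have key : (univ.filter (fun e => f e ∈ s)).card = (n+1) * s.card := by
        rw [Finset.card_eq_sum_card_fiberwise (f := f) (s := univ.filter (fun e => f e ∈ s)) (t := s) (by intro x hx; simpa using hx)]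
        rw [Finset.sum_congr rfl (fun b hb => ?_), Finset.sum_const, smul_eq_mul, mul_comm]
        · rw [← hf b]
          congr 1
          ext e
          simp only [Finset.mem_filter, Finset.mem_univ, true_and, and_iff_right_iff_imp]
          intro h; rw [h]; exact hb
      have sub : (univ.filter (fun e => f e ∈ s)) ⊆
          (s.biUnion t).biUnion (fun b => univ.filter (fun e => g e = b)) := by
        intro e he
        simp only [Finset.mem_filter, Finset.mem_univ, true_and] at he
        simp only [Finset.mem_biUnion, Finset.mem_filter, Finset.mem_univ, true_and]
        refine ⟨g e, ⟨f e, he, ?_⟩, rfl⟩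
        simp only [ht, Finset.mem_image, Finset.mem_filter, Finset.mem_univ, true_and]
        exact ⟨e, rfl, rfl⟩
      have le1 : (n+1) * s.card ≤ (n+1) * (s.biUnion t).card := by
        rw [← key]
        calc (univ.filter (fun e => f e ∈ s)).card
            ≤ ((s.biUnion t).biUnion (fun b => univ.filter (fun e => g e = b))).card :=
              Finset.card_le_card sub
          _ ≤ ∑ b ∈ s.biUnion t, (univ.filter (fun e => g e = b)).card :=
              Finset.card_biUnion_le
          _ = (n+1) * (s.biUnion t).card := by
              rw [Finset.sum_congr rfl (fun b _ => hg b), Finset.sum_const, smul_eq_mul, mul_comm]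
      exact Nat.le_of_mul_le_mul_left le1 (Nat.succ_pos n)
    obtain ⟨h, hinj, hmem⟩ := (Finset.all_card_le_biUnion_card_iff_exists_injective t).mp hall
    -- for each b pick an edge M b with f (M b) = b and g (M b) = h b
    have hM : ∀ b, ∃ e : E, f e = b ∧ g e = h b := by
      intro b
      have := hmem b
      simp only [ht, Finset.mem_image, Finset.mem_filter, Finset.mem_univ, true_and] at this
      obtain ⟨e, he1, he2⟩ := this
      exact ⟨e, he1, he2⟩
    choose M hMf hMg using hM
    have hMinj : Function.Injective M := by
      intro a b hab
      have := hMf a; rw [hab, hMf b] at this; exact this.symm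
    have hsurj : Function.Surjective h := Finite.surjective_of_injective hinj
    set S : Finset E := univ.image M with hS
    have memS : ∀ e : E, e ∈ S ↔ ∃ b, M b = e := by intro e; simp [hS, eq_comm]
    have hfS : ∀ b e, e ∈ S → f e = b → e = M b := by
      rintro b e he rfl
      rw [memS] at he; obtain ⟨b', rfl⟩ := he
      rw [hMf]
    have hgS : ∀ b e, e ∈ S → g e = h b → e = M b := by
      intro b e he hge
      rw [memS] at he; obtain ⟨b', rfl⟩ := he
      rw [hMg] at hge; rw [hinj hge]
    have cardfib : ∀ (F : E → B) b (eb : E), F eb = b →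
        (∀ e, e ∈ S → F e = b → e = eb) → eb ∈ S →
        (univ.filter (fun e => F e = b)).card = n + 1 →
        (univ.filter (fun e' : {e : E // e ∉ S} => F e'.1 = b)).card = n := by
      intro F b eb hFeb huniq hebS hcard
      have hbij : (univ.filter (fun e' : {e : E // e ∉ S} => F e'.1 = b)).card
          = ((univ.filter (fun e => F e = b)).erase eb).card := by
        have e1 : (univ.filter (fun e' : {e : E // e ∉ S} => F e'.1 = b)).card
            = Fintype.card {e' : {e : E // e ∉ S} // F e'.1 = b} :=
          (Fintype.card_subtype _).symm
        have e2 : Fintype.card {e' : {e : E // e ∉ S} // F e'.1 = b}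
            = Fintype.card {e : E // e ∉ S ∧ F e = b} :=
          Fintype.card_congr (Equiv.subtypeSubtypeEquivSubtypeInter (fun e => e ∉ S) (fun e => F e = b))
        have e3 : Fintype.card {e : E // e ∉ S ∧ F e = b}
            = (univ.filter (fun e => e ∉ S ∧ F e = b)).card := Fintype.card_subtype _
        have e4 : univ.filter (fun e => e ∉ S ∧ F e = b)
            = (univ.filter (fun e => F e = b)).erase eb := by
          ext e
          simp only [Finset.mem_filter, Finset.mem_univ, true_and, Finset.mem_erase]
          constructor
          · rintro ⟨heS, hFe⟩
            exact ⟨fun h' => heS (h' ▸ hebS), hFe⟩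
          · rintro ⟨hne, hFe⟩
            exact ⟨fun heS => hne (huniq e heS hFe), hFe⟩
        rw [e1, e2, e3, e4]
      rw [hbij, Finset.card_erase_of_mem (by simp [hFeb]), hcard]
      omega
    have hf' : ∀ b, (univ.filter (fun e' : {e : E // e ∉ S} => f e'.1 = b)).card = n := by
      intro b
      exact cardfib f b (M b) (hMf b) (hfS b) (by rw [memS]; exact ⟨b, rfl⟩) (hf b)
    have hg' : ∀ b, (univ.filter (fun e' : {e : E // e ∉ S} => g e'.1 = b)).card = n := by
      intro b
      obtain ⟨b₀, rfl⟩ := hsurj b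
      exact cardfib g (h b₀) (M b₀) (hMg b₀) (hgS b₀) (by rw [memS]; exact ⟨b₀, rfl⟩) (hg _)
    obtain ⟨c', hc'f, hc'g⟩ := ih {e : E // e ∉ S} (fun e' => f e'.1) (fun e' => g e'.1) hf' hg'
    refine ⟨fun e => if he : e ∈ S then Fin.last n else (c' ⟨e, he⟩).castSucc, ?_, ?_⟩
    · intro e₁ e₂ heq
      simp only [Prod.mk.injEq] at heq
      obtain ⟨hc, hfe⟩ := heq
      by_cases h1 : e₁ ∈ S <;> by_cases h2 : e₂ ∈ S <;> simp only [h1, h2, dif_pos, dif_neg,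
        not_false_iff] at hc
      · exact (hfS (f e₂) e₁ h1 hfe).trans (hfS (f e₂) e₂ h2 rfl).symm
      · exact absurd hc.symm (Fin.castSucc_lt_last _).ne
      · exact absurd hc (Fin.castSucc_lt_last _).ne
      · have := hc'f (a₁ := ⟨e₁, h1⟩) (a₂ := ⟨e₂, h2⟩)
          (by simp only [Prod.mk.injEq]; exact ⟨Fin.castSucc_injective _ hc, hfe⟩)
        exact congrArg Subtype.val this
    · intro e₁ e₂ heq
      simp only [Prod.mk.injEq] at heq
      obtain ⟨hc, hge⟩ := heq
      by_cases h1 : e₁ ∈ S <;> by_cases h2 : e₂ ∈ S <;> simp only [h1, h2, dif_pos, dif_neg,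
        not_false_iff] at hc
      · obtain ⟨b₁, rfl⟩ := (memS e₁).mp h1
        obtain ⟨b₂, rfl⟩ := (memS e₂).mp h2
        rw [hMg, hMg] at hge
        rw [hinj hge]
      · exact absurd hc.symm (Fin.castSucc_lt_last _).ne
      · exact absurd hc (Fin.castSucc_lt_last _).ne
      · have := hc'g (a₁ := ⟨e₁, h1⟩) (a₂ := ⟨e₂, h2⟩)
          (by simp only [Prod.mk.injEq]; exact ⟨Fin.castSucc_injective _ hc, hge⟩)
        exact congrArg Subtype.val this

open Finset in
theorem my_twoDim {A C : Type} [Fintype A] [DecidableEq A] [Fintype C] [DecidableEq C]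
    (σ : Equiv.Perm (A × C)) :
    ∃ r₁ mid r₂ : Equiv.Perm (A × C),
      (∀ x, (r₁ x).2 = x.2) ∧ (∀ x, (mid x).1 = x.1) ∧ (∀ x, (r₂ x).2 = x.2) ∧
      ∀ x, σ x = r₂ (mid (r₁ x)) := by
  set n := Fintype.card A with hn
  have hf : ∀ b : C, (univ.filter (fun x : A × C => x.2 = b)).card = n := by
    intro b
    rw [← Fintype.card_subtype]
    exact Fintype.card_congr ⟨fun x => x.1.1, fun a => ⟨(a, b), rfl⟩,
      fun x => by ext <;> simp [x.2], fun a => rfl⟩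
  have hg : ∀ b : C, (univ.filter (fun x : A × C => (σ x).2 = b)).card = n := by
    intro b
    rw [← hf b]
    apply Finset.card_bij (fun x _ => σ x)
    · intro x hx
      simp only [Finset.mem_filter, Finset.mem_univ, true_and] at hx ⊢
      exact hx
    · intro x _ y _ hxy
      exact σ.injective hxy
    · intro y hy
      simp only [Finset.mem_filter, Finset.mem_univ, true_and] at hy
      exact ⟨σ.symm y, by simp [hy], by simp⟩
  obtain ⟨c, hcf, hcg⟩ := my_coloring n (A × C) (fun x => x.2) (fun x => (σ x).2) hf hg
  have cardeq : Fintype.card (A × C) = Fintype.card (Fin n × C) := by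
    simp [hn]
  have hφ : Function.Bijective (fun x : A × C => (c x, x.2)) :=
    (Fintype.bijective_iff_injective_and_card _).mpr ⟨hcf, cardeq⟩
  have hψ : Function.Bijective (fun x : A × C => (c x, (σ x).2)) :=
    (Fintype.bijective_iff_injective_and_card _).mpr ⟨hcg, cardeq⟩
  set φ : A × C ≃ Fin n × C := Equiv.ofBijective _ hφ with hφdef
  set ψ : A × C ≃ Fin n × C := Equiv.ofBijective _ hψ with hψdef
  set α : Fin n ≃ A := (Fintype.equivFin A).symm with hα
  set pc : Fin n × C ≃ A × C := α.prodCongr (Equiv.refl C) with hpc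
  refine ⟨φ.trans pc, (pc.symm.trans (φ.symm.trans (ψ.trans pc))),
    pc.symm.trans (ψ.symm.trans σ), ?_, ?_, ?_, ?_⟩
  · intro x
    rfl
  · intro x
    have : x = pc (φ (φ.symm (pc.symm x))) := by simp
    conv_lhs => rw [Equiv.trans_apply, Equiv.trans_apply, Equiv.trans_apply]
    conv_rhs => rw [this]
    rfl
  · intro x
    have : x = pc (ψ (ψ.symm (pc.symm x))) := by simp
    conv_lhs => rw [Equiv.trans_apply, Equiv.trans_apply]
    conv_rhs => rw [this]
    rfl
  · intro x
    simp only [Equiv.trans_apply, Equiv.symm_apply_apply]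

theorem my_slice {A C : Type} [Finite C] (mid : Equiv.Perm (A × C))
    (h : ∀ x, (mid x).1 = x.1) :
    ∃ ν : A → Equiv.Perm C, ∀ a c, mid (a, c) = (a, ν a c) := by
  have hinj : ∀ a : A, Function.Injective (fun c => (mid (a, c)).2) := by
    intro a c c' hcc
    have : mid (a, c) = mid (a, c') := by
      have h1 := h (a, c); have h2 := h (a, c')
      exact Prod.ext (h1.trans h2.symm) hcc
    have := mid.injective this
    exact (Prod.mk.injEq _ _ _ _).mp this |>.2
  refine ⟨fun a => Equiv.ofBijective _ ((Finite.injective_iff_bijective).mp (hinj a)), ?_⟩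
  intro a c
  have h1 := h (a, c)
  exact Prod.ext h1 rfl

theorem my_foldl_shear {A C : Type} :
    ∀ (n : ℕ) (g : A → Fin n → Equiv.Perm C) (a : A) (c : C),
    (List.ofFn (fun j => Equiv.prodShear (Equiv.refl A) (fun a => g a j))).foldl
      (fun q e => e q) (a, c)
    = (a, (List.ofFn (g a)).foldl (fun q e => e q) c) := by
  intro n
  induction n with
  | zero => intro g a c; simp
  | succ n ih =>
    intro g a c
    rw [List.ofFn_succ, List.ofFn_succ (f := g a), List.foldl_cons, List.foldl_cons]
    have hstep : (Equiv.prodShear (Equiv.refl A) (fun a => g a 0)) (a, c) = (a, g a 0 c) := rfl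
    rw [hstep]
    exact ih (fun a j => g a j.succ) a (g a 0 c)

theorem my_foldl_conj {α β : Type} (φ : α ≃ β) :
    ∀ (L : List (Equiv.Perm β)) (y : α),
    (L.map (fun e => ((φ.trans e).trans φ.symm : α ≃ α))).foldl (fun q e => e q) y
    = φ.symm (L.foldl (fun q e => e q) (φ y)) := by
  intro L
  induction L with
  | nil => intro y; simp
  | cons e L ih =>
    intro y
    rw [List.map_cons, List.foldl_cons, List.foldl_cons, ih]
    simp

theorem my_main : ∀ (k : ℕ), 1 ≤ k → ∀ (B : Fin k → Type) [∀ i, Fintype (B i)]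
    [∀ i, DecidableEq (B i)] (σ : Equiv.Perm (∀ i, B i)),
    ∃ l : List (Equiv.Perm (∀ i, B i)), l.length = 2 * k - 1 ∧
      (∀ (j : ℕ) (hj : j < l.length) (p : ∀ i, B i) (i : Fin k),
        ((i : ℕ) : ℤ) ≠ |(k : ℤ) - 1 - (j : ℕ)| → l.get ⟨j, hj⟩ p i = p i) ∧
      (∀ p, σ p = l.foldl (fun q e => e q) p) := by
  intro k
  induction k with
  | zero => intro h; exact absurd h (by omega)
  | succ k ih =>
    intro _ B _ _ σ
    rcases Nat.eq_zero_or_pos k with rfl | hk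
    · -- base case: one coordinate
      refine ⟨[σ], rfl, ?_, ?_⟩
      · intro j hj p i hi
        exfalso
        simp only [List.length_singleton] at hj
        interval_cases j
        apply hi
        have h0 : (i : ℕ) = 0 := by omega
        rw [h0]
        norm_num
      · intro p; simp
    · -- inductive step
      classical
      set lst : Fin (k + 1) := Fin.last k with hlst
      set φ : (∀ i, B i) ≃ B lst × (∀ j : Fin k, B (lst.succAbove j)) :=
        (Fin.insertNthEquiv B lst).symm with hφdef
      set σ' : Equiv.Perm (B lst × ∀ j : Fin k, B (lst.succAbove j)) := φ.permCongr σ with hσ'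
      obtain ⟨r₁, mid, r₂, hr₁, hmid, hr₂, hdecomp⟩ := my_twoDim σ'
      obtain ⟨ν, hν⟩ := my_slice mid hmid
      have ihs := fun a : B lst => ih hk (fun j => B (lst.succAbove j)) (ν a)
      choose L hLlen hLcoord hLfold using ihs
      set T : Equiv.Perm (B lst × ∀ j : Fin k, B (lst.succAbove j)) → Equiv.Perm (∀ i, B i) :=
        fun e => ((φ.trans e).trans φ.symm) with hT
      set τfam : B lst → Fin (2 * k - 1) → Equiv.Perm (∀ j : Fin k, B (lst.succAbove j)) :=
        fun a j => (L a).get ⟨j, by rw [hLlen]; exact j.isLt⟩ with hτfam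
      set shearFns : Fin (2 * k - 1) → Equiv.Perm (B lst × ∀ j : Fin k, B (lst.succAbove j)) :=
        fun j => Equiv.prodShear (Equiv.refl (B lst)) (fun a => τfam a j) with hshear
      set middle : List (Equiv.Perm (∀ i, B i)) := List.ofFn (fun j => T (shearFns j)) with hmiddle
      set full : List (Equiv.Perm (∀ i, B i)) := T r₁ :: (middle ++ [T r₂]) with hfull
      have hmidlen : middle.length = 2 * k - 1 := by simp [hmiddle]
      have hfulllen : full.length = 2 * (k + 1) - 1 := by
        simp only [hfull, List.length_cons, List.length_append, List.length_singleton, List.length_nil, hmidlen]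
        omega
      -- coordinate helpers
      have hφ1 : ∀ x : ∀ i, B i, (φ x).1 = x lst := fun x => rfl
      have hφ2 : ∀ (x : ∀ i, B i) (j : Fin k), (φ x).2 j = x (lst.succAbove j) := fun x j => rfl
      have hTapp : ∀ e p, T e p = φ.symm (e (φ p)) := fun e p => rfl
      have hφT : ∀ e p, φ (T e p) = e (φ p) := by
        intro e p
        rw [hTapp]
        exact φ.apply_symm_apply _
      have hfst : ∀ (e : Equiv.Perm (B lst × ∀ j : Fin k, B (lst.succAbove j))),
          (∀ x, (e x).1 = x.1) → ∀ p, T e p lst = p lst := by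
        intro e he p
        have h1 : (φ (T e p)).1 = (φ p).1 := by rw [hφT]; exact he _
        rw [hφ1, hφ1] at h1
        exact h1
      have hsnd : ∀ (e : Equiv.Perm (B lst × ∀ j : Fin k, B (lst.succAbove j))),
          (∀ x, (e x).2 = x.2) → ∀ p (i' : Fin k),
          T e p (lst.succAbove i') = p (lst.succAbove i') := by
        intro e he p i'
        have h1 : (φ (T e p)).2 = (φ p).2 := by rw [hφT]; exact he _
        have h2 := congrFun h1 i'
        rw [hφ2, hφ2] at h2
        exact h2
      have hne : ∀ i : Fin (k + 1), (i : ℕ) ≠ k →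
          ∃ i' : Fin k, i = lst.succAbove i' ∧ ((i' : ℕ) = (i : ℕ)) := by
        intro i hik
        have hlt : (i : ℕ) < k := by have := i.isLt; omega
        refine ⟨⟨(i : ℕ), hlt⟩, ?_, rfl⟩
        ext
        simp [hlst, Fin.succAbove_last]
      have hshearfst : ∀ (j : Fin (2 * k - 1)) (x : B lst × ∀ j : Fin k, B (lst.succAbove j)),
          (shearFns j x).1 = x.1 := fun _ _ => rfl
      refine ⟨full, hfulllen, ?_, ?_⟩
      · -- coordinate condition
        intro j hj p i hi
        rw [Int.abs_eq_natAbs] at hi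
        have hjlt : j < 2 * (k + 1) - 1 := by rw [← hfulllen]; exact hj
        rw [List.get_eq_getElem]
        rcases Nat.eq_zero_or_pos j with rfl | hj1
        · -- j = 0 : r₁
          have hik : (i : ℕ) ≠ k := by
            have hilt := i.isLt
            simp only [Nat.cast_zero] at hi
            omega
          obtain ⟨i', rfl, _⟩ := hne i hik
          have hget : full[0]'hj = T r₁ := rfl
          rw [hget]
          exact hsnd r₁ hr₁ p i'
        · obtain ⟨j', rfl⟩ : ∃ j', j = j' + 1 := ⟨j - 1, by omega⟩
          have hjm : j' < (middle ++ [T r₂]).length := by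
            simp only [List.length_append, hmidlen, List.length_singleton]
            omega
          have hget1 : full[j' + 1]'hj = (middle ++ [T r₂])[j']'hjm :=
            List.getElem_cons_succ _ _ _ _
          rcases Nat.lt_or_ge j' (2 * k - 1) with hj2 | hj2
          · -- middle element
            have hj'm : j' < middle.length := by rw [hmidlen]; exact hj2
            have hget2 : (middle ++ [T r₂])[j']'hjm = middle[j']'hj'm :=
              List.getElem_append_left hj'm
            have hget3 : middle[j']'hj'm = T (shearFns ⟨j', hj2⟩) := by
              simp only [hmiddle]
              rw [List.getElem_ofFn]
            rw [hget1, hget2, hget3]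
            by_cases hik : (i : ℕ) = k
            · have hilst : i = lst := by
                ext
                simpa [hlst] using hik
              rw [hilst]
              exact hfst _ (hshearfst ⟨j', hj2⟩) p
            · obtain ⟨i', rfl, hival⟩ := hne i hik
              have key : T (shearFns ⟨j', hj2⟩) p (lst.succAbove i')
                  = (τfam (p lst) ⟨j', hj2⟩) ((φ p).2) i' := by
                have h1 := congrFun (congrArg Prod.snd (hφT (shearFns ⟨j', hj2⟩) p)) i'
                exact h1
              rw [key]
              have hj'L : (j' : ℕ) < (L (p lst)).length := by rw [hLlen]; exact hj2
              have hcond : ((i' : ℕ) : ℤ) ≠ |(k : ℤ) - 1 - (j' : ℕ)| := by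
                rw [Int.abs_eq_natAbs]
                omega
              have := hLcoord (p lst) j' hj'L ((φ p).2) i' hcond
              exact this
          · -- last element : r₂
            have hik : (i : ℕ) ≠ k := by
              have hilt := i.isLt
              have : j' = 2 * k - 1 := by omega
              subst this
              have h2k : ((2 * k - 1 + 1 : ℕ) : ℤ) = 2 * k := by push_cast [hk]; omega
              rw [h2k] at hi
              omega
            obtain ⟨i', rfl, _⟩ := hne i hik
            have hget2 : (middle ++ [T r₂])[j']'hjm = T r₂ := by
              rw [List.getElem_append_right (by rw [hmidlen]; exact hj2)]
              simp
            rw [hget1, hget2]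
            exact hsnd r₂ hr₂ p i'
      · -- foldl
        intro p
        have hofL : ∀ a, List.ofFn (τfam a) = L a := by
          intro a
          apply List.ext_getElem
          · simp [hLlen]
          · intro j h1 h2
            rw [List.getElem_ofFn]
            rfl
        have h0 : full.foldl (fun q e => e q) p
            = T r₂ ((middle.foldl (fun q e => e q) (T r₁ p))) := by
          rw [hfull, List.foldl_cons, List.foldl_append]
          rfl
        have hmap : middle = (List.ofFn shearFns).map
            (fun e => ((φ.trans e).trans φ.symm : Equiv.Perm (∀ i, B i))) := by
          rw [hmiddle, List.map_ofFn]
          rfl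
        have h1 : middle.foldl (fun q e => e q) (T r₁ p)
            = φ.symm ((List.ofFn shearFns).foldl (fun q e => e q) (φ (T r₁ p))) := by
          rw [hmap]
          exact my_foldl_conj φ (List.ofFn shearFns) (T r₁ p)
        have h2 : φ (T r₁ p) = r₁ (φ p) := hφT r₁ p
        set z := r₁ (φ p) with hz
        have h3 : (List.ofFn shearFns).foldl (fun q e => e q) z
            = (z.1, (List.ofFn (τfam z.1)).foldl (fun q e => e q) z.2) := by
          have := my_foldl_shear (2 * k - 1) τfam z.1 z.2
          simpa [hshear] using this
        have h4 : (List.ofFn (τfam z.1)).foldl (fun q e => e q) z.2 = ν z.1 z.2 := by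
          rw [hofL, ← hLfold z.1 z.2]
        have h5 : (z.1, ν z.1 z.2) = mid z := (hν z.1 z.2).symm
        have h6 : T r₂ (φ.symm (mid z)) = φ.symm (r₂ (mid z)) := by
          rw [hTapp]
          rw [φ.apply_symm_apply]
        rw [h0, h1, h2, h3, h4, h5, h6, ← hdecomp]
        simp only [hσ', Equiv.permCongr_apply, Equiv.symm_apply_apply]

/-- Grid Rearrangement in `k` dimensions: every permutation `σ` of a
`k`-dimensional table `Π i, Fin (m i)` is a composition
`τ_{2k-1} ∘ ⋯ ∘ τ_1` of `2k - 1` permutations, where `τ_j` changes only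
coordinate `d j` of every point, and the sequence of axes is palindromic:
`(d 1, …, d (2k-1)) = (k, k-1, …, 2, 1, 2, …, k-1, k)` (here written
0-indexed: `(d j : ℕ) = |k - 1 - j|`).  `List.foldl` applies `τ` for
`j = 0, 1, …, 2k-2` in order, so `τ 0` acts first. -/
theorem grid_rearrangement_kd
    (k : ℕ) (hk : 1 ≤ k) (m : Fin k → ℕ) (hm : ∀ i, 1 ≤ m i)
    (σ : Equiv.Perm ((i : Fin k) → Fin (m i))) :
    ∃ (d : Fin (2 * k - 1) → Fin k)
      (τ : Fin (2 * k - 1) → Equiv.Perm ((i : Fin k) → Fin (m i))),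
      (∀ j, ((d j : ℕ) : ℤ) = |(k : ℤ) - 1 - (j : ℕ)|) ∧
      (∀ j, ∀ p, ∀ i : Fin k, i ≠ d j → τ j p i = p i) ∧
      (∀ p, σ p = (List.ofFn τ).foldl (fun q e => e q) p) := by
  obtain ⟨l, hlen, hcoord, hfold⟩ := my_main k hk (fun i => Fin (m i)) σ
  have hd : ∀ j : Fin (2 * k - 1), ((k : ℤ) - 1 - (j : ℕ)).natAbs < k := by
    intro j
    have := j.isLt
    omega
  refine ⟨fun j => ⟨((k : ℤ) - 1 - (j : ℕ)).natAbs, hd j⟩,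
    fun j => l.get ⟨(j : ℕ), by rw [hlen]; exact j.isLt⟩, ?_, ?_, ?_⟩
  · intro j
    simp [Int.natCast_natAbs]
  · intro j p i hij
    apply hcoord
    rw [Int.abs_eq_natAbs]
    intro hcontra
    apply hij
    ext
    have : (i : ℕ) = ((k : ℤ) - 1 - (j : ℕ)).natAbs := by exact_mod_cast hcontra
    simpa using this
  · intro p
    rw [hfold p]
    congr 1
    apply List.ext_getElem
    · simp [hlen]
    · intro j h1 h2
      rw [List.getElem_ofFn]
      rfl
end
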